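/- arXiv:1610.07032 — 9 statements merged into one kernel-verified Lean document; each statement's English description precedes it below -/
import Mathlib

section
/- Let n ≥ 3, let w be a homogeneous quasi-norm on ℝⁿ, and let f ∈ C_0^∞(ℝⁿ\{0}) be complex-valued. Then for every α ∈ ℝ, with R_w f the radial derivative with respect to w, the exact identity holds: ∫_{ℝⁿ} w(x)^{-2α} |R_w f(x)|² dx − ((n−2)/2 − α)² ∫_{ℝⁿ} w(x)^{-2(α+1)} |f(x)|² dx = ∫_{ℝⁿ} | w(x)^{-α} R_w f(x) + ((n−2−2α)/2) w(x)^{-(α+1)} f(x) |² dx. -/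
open MeasureTheory Real Set

lemma contMulAux (w : EuclideanSpace ℝ (Fin n) → ℝ) (hw_cont : Continuous w)
    (hw_pos : ∀ x : EuclideanSpace ℝ (Fin n), x ≠ 0 → 0 < w x) (β : ℝ)
    (φ : EuclideanSpace ℝ (Fin n) → ℝ) (C : Set (EuclideanSpace ℝ (Fin n)))
    (hC : IsClosed C) (h0C : (0 : EuclideanSpace ℝ (Fin n)) ∉ C)
    (hφc : ∀ x : EuclideanSpace ℝ (Fin n), x ≠ 0 → ContinuousAt φ x)
    (hφ0 : ∀ x, x ∉ C → φ x = 0) :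
    Continuous fun x => w x ^ β * φ x := by
  rw [continuous_iff_continuousAt]
  intro x
  by_cases hx : x = 0
  · subst hx
    have hmem : Cᶜ ∈ nhds (0 : EuclideanSpace ℝ (Fin n)) :=
      hC.isOpen_compl.mem_nhds h0C
    have heq : (fun x => w x ^ β * φ x) =ᶠ[nhds (0 : EuclideanSpace ℝ (Fin n))]
        fun _ => (0 : ℝ) := by
      filter_upwards [hmem] with y hy
      simp [hφ0 y hy]
    exact ContinuousAt.congr (continuousAt_const) heq.symm
  · exact (hw_cont.continuousAt.rpow_const (Or.inl (hw_pos x hx).ne')).mul (hφc x hx)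

lemma intMulAux (w : EuclideanSpace ℝ (Fin n) → ℝ) (hw_cont : Continuous w)
    (hw_pos : ∀ x : EuclideanSpace ℝ (Fin n), x ≠ 0 → 0 < w x) (β : ℝ)
    (φ : EuclideanSpace ℝ (Fin n) → ℝ) (C : Set (EuclideanSpace ℝ (Fin n)))
    (hCc : IsCompact C) (hC : IsClosed C) (h0C : (0 : EuclideanSpace ℝ (Fin n)) ∉ C)
    (hφc : ∀ x : EuclideanSpace ℝ (Fin n), x ≠ 0 → ContinuousAt φ x)
    (hφ0 : ∀ x, x ∉ C → φ x = 0) :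
    Integrable (fun x => w x ^ β * φ x) := by
  refine (contMulAux w hw_cont hw_pos β φ C hC h0C hφc hφ0).integrable_of_hasCompactSupport ?_
  exact HasCompactSupport.intro hCc fun x hx => by simp [hφ0 x hx]

lemma keyScaling (w : EuclideanSpace ℝ (Fin n) → ℝ) (hw_cont : Continuous w)
    (hw_nonneg : ∀ x, 0 ≤ w x)
    (hw_hom : ∀ (lam : ℝ), 0 < lam → ∀ x, w (lam • x) = lam * w x)
    (hw_pos : ∀ x : EuclideanSpace ℝ (Fin n), x ≠ 0 → 0 < w x)
    (g : EuclideanSpace ℝ (Fin n) → ℝ) (hg : ContDiff ℝ (⊤ : ℕ∞) g)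
    (hgsupp : HasCompactSupport g)
    (hg0 : (0 : EuclideanSpace ℝ (Fin n)) ∉ tsupport g) (β : ℝ) :
    ∫ x, w x ^ β * fderiv ℝ g x x
      = (-β - n) * ∫ x, w x ^ β * g x := by
  set K : Set (EuclideanSpace ℝ (Fin n)) := tsupport g with hK
  have hKc : IsCompact K := hgsupp
  have hKcl : IsClosed K := isClosed_tsupport g
  set J : ℝ := ∫ x, w x ^ β * g x with hJ
  -- the parametrized family
  set F : ℝ → EuclideanSpace ℝ (Fin n) → ℝ := fun t x => w x ^ β * g (t • x) with hF
  set F' : ℝ → EuclideanSpace ℝ (Fin n) → ℝ :=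
    fun t x => w x ^ β * fderiv ℝ g (t • x) x with hF'
  -- ball facts
  have hball : ∀ t : ℝ, t ∈ Metric.ball (1 : ℝ) (1/2) → (1/2 : ℝ) < t := by
    intro t ht
    rw [Metric.mem_ball, Real.dist_eq, abs_lt] at ht
    linarith [ht.1]
  -- preimage helper
  have hpre : ∀ t : ℝ, 0 < t → ∀ x, x ∉ (fun y : EuclideanSpace ℝ (Fin n) => t • y) ⁻¹' K →
      g (t • x) = 0 := fun t _ x hx => image_eq_zero_of_notMem_tsupport hx
  have hpre0 : ∀ t : ℝ, (0 : EuclideanSpace ℝ (Fin n)) ∉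
      (fun y : EuclideanSpace ℝ (Fin n) => t • y) ⁻¹' K := by
    intro t hx
    simp only [Set.mem_preimage, smul_zero] at hx
    exact hg0 hx
  have hprecl : ∀ t : ℝ, IsClosed ((fun y : EuclideanSpace ℝ (Fin n) => t • y) ⁻¹' K) :=
    fun t => hKcl.preimage (continuous_const_smul t)
  -- measurability of F t
  have hF_meas : ∀ᶠ t in nhds (1 : ℝ), AEStronglyMeasurable (F t) volume := by
    filter_upwards [Metric.ball_mem_nhds (1:ℝ) (by norm_num : (0:ℝ) < 1/2)] with t ht
    have hcont : Continuous (F t) :=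
      contMulAux w hw_cont hw_pos β (fun x => g (t • x)) _ (hprecl t) (hpre0 t)
        (fun x _ => (hg.continuous.comp (continuous_const_smul t)).continuousAt)
        (hpre t (by linarith [hball t ht]))
    exact hcont.aestronglyMeasurable
  -- integrability of F 1
  have hF1 : F 1 = fun x => w x ^ β * g x := by
    funext x; simp [hF]
  have hFt_supp : ∀ t : ℝ, IsCompact ((fun y : EuclideanSpace ℝ (Fin n) => t • y) ⁻¹' K) → True := fun _ _ => trivial
  have hF_int : Integrable (F 1) volume := by
    rw [hF1]
    exact intMulAux w hw_cont hw_pos β g K hKc hKcl hg0 (fun x _ => hg.continuous.continuousAt)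
      (fun x hx => image_eq_zero_of_notMem_tsupport hx)
  -- continuity of fderiv g
  have hgd_cont : Continuous (fderiv ℝ g) := hg.continuous_fderiv (by simp)
  have hgd_zero : ∀ y, y ∉ K → fderiv ℝ g y = 0 := by
    intro y hy
    by_contra h
    exact hy (support_fderiv_subset (𝕜 := ℝ) (Function.mem_support.2 h))
  -- measurability of F' 1
  have hF'1 : F' 1 = fun x => w x ^ β * fderiv ℝ g x x := by
    funext x; simp [hF']
  have hF'_meas : AEStronglyMeasurable (F' 1) volume := by
    rw [hF'1]
    exact (contMulAux w hw_cont hw_pos β (fun x => fderiv ℝ g x x) K hKcl hg0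
      (fun x _ => (hgd_cont.clm_apply continuous_id).continuousAt)
      (fun x hx => by show fderiv ℝ g x x = 0; rw [hgd_zero x hx]; simp)).aestronglyMeasurable
  -- the compact set K' containing supports uniformly
  set K' : Set (EuclideanSpace ℝ (Fin n)) :=
    (fun p : ℝ × EuclideanSpace ℝ (Fin n) => p.1 • p.2) '' (Icc (1/2 : ℝ) 2 ×ˢ K) with hK'
  have hK'c : IsCompact K' :=
    ((isCompact_Icc).prod hKc).image (continuous_fst.smul continuous_snd)
  have hK'mem : ∀ t : ℝ, t ∈ Metric.ball (1:ℝ) (1/2) → ∀ x, t • x ∈ K → x ∈ K' := by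
    intro t ht x hx
    have ht2 : (1/2:ℝ) < t := hball t ht
    have htpos : 0 < t := by linarith
    refine ⟨(t⁻¹, t • x), ⟨?_, hx⟩, ?_⟩
    · constructor
      · rw [Metric.mem_ball, Real.dist_eq, abs_lt] at ht
        rw [le_inv_comm₀ (by norm_num) htpos]
        linarith [ht.2]
      · rw [inv_le_comm₀ htpos (by norm_num)]
        linarith
    · simp [smul_smul, inv_mul_cancel₀ htpos.ne']
  have hK'0 : (0 : EuclideanSpace ℝ (Fin n)) ∉ K' := by
    rintro ⟨⟨t, y⟩, ⟨⟨ht1, _⟩, hy⟩, hxy⟩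
    have hy0 : y ≠ 0 := fun h => hg0 (h ▸ hy)
    have ht0 : t ≠ 0 := by intro h; rw [h] at ht1; norm_num at ht1
    have hxy' : t • y = 0 := hxy
    rcases smul_eq_zero.1 hxy' with h | h
    · exact ht0 h
    · exact hy0 h
  -- bounds
  have hcontOn : ContinuousOn (fun x : EuclideanSpace ℝ (Fin n) => w x ^ β) K' := by
    intro x hx
    have hx0 : x ≠ 0 := fun h => hK'0 (h ▸ hx)
    exact (hw_cont.continuousAt.rpow_const (Or.inl (hw_pos x hx0).ne')).continuousWithinAt
  obtain ⟨M1, hM1⟩ := hK'c.exists_bound_of_continuousOn hcontOn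
  obtain ⟨M2, hM2⟩ : ∃ M2, ∀ y, ‖fderiv ℝ g y‖ ≤ M2 :=
    hgd_cont.bounded_above_of_compact_support (hgsupp.fderiv (𝕜 := ℝ))
  obtain ⟨M3, hM3⟩ : ∃ M3, ∀ x ∈ K', ‖x‖ ≤ M3 :=
    hK'c.exists_bound_of_continuousOn continuousOn_id
  set M : ℝ := M1 * (M2 * M3) with hM
  set bound : EuclideanSpace ℝ (Fin n) → ℝ := K'.indicator (fun _ => M) with hbound
  have h_bound : ∀ᵐ x ∂(volume : Measure (EuclideanSpace ℝ (Fin n))),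
      ∀ t ∈ Metric.ball (1:ℝ) (1/2), ‖F' t x‖ ≤ bound x := by
    refine Filter.Eventually.of_forall fun x => fun t ht => ?_
    by_cases hx : x ∈ K'
    · have hb : bound x = M := by simp [hbound, hx]
      rw [hb, hM]
      have h2 : ‖fderiv ℝ g (t • x) x‖ ≤ M2 * M3 := by
        calc ‖fderiv ℝ g (t • x) x‖ ≤ ‖fderiv ℝ g (t • x)‖ * ‖x‖ :=
              (fderiv ℝ g (t • x)).le_opNorm x
          _ ≤ M2 * M3 := by
              apply mul_le_mul (hM2 _) (hM3 x hx) (norm_nonneg _)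
              exact le_trans (norm_nonneg _) (hM2 0)
      calc ‖F' t x‖ = ‖w x ^ β‖ * ‖fderiv ℝ g (t • x) x‖ := by
            simp [hF', norm_mul]
        _ ≤ M1 * (M2 * M3) := by
            apply mul_le_mul (hM1 x hx) h2 (norm_nonneg _)
            exact le_trans (norm_nonneg _) (hM1 x hx)
    · have hzero : F' t x = 0 := by
        have : t • x ∉ K := fun h => hx (hK'mem t ht x h)
        simp [hF', hgd_zero _ this]
      have : bound x = 0 := by simp [hbound, hx]
      simp [hzero, this]
  have bound_int : Integrable bound volume := by
    rw [hbound]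
    rw [integrable_indicator_iff hK'c.measurableSet]
    exact integrableOn_const hK'c.measure_lt_top.ne
  have h_diff : ∀ᵐ x ∂(volume : Measure (EuclideanSpace ℝ (Fin n))),
      ∀ t ∈ Metric.ball (1:ℝ) (1/2), HasDerivAt (fun s => F s x) (F' t x) t := by
    refine Filter.Eventually.of_forall fun x t _ => ?_
    have h1 : HasDerivAt (fun s : ℝ => s • x) x t := by
      simpa using (hasDerivAt_id t).smul_const x
    have h2 : HasDerivAt (fun s : ℝ => g (s • x)) (fderiv ℝ g (t • x) x) t :=
      ((hg.differentiable (by simp) (t • x)).hasFDerivAt).comp_hasDerivAt t h1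
    simpa [hF'] using h2.const_mul (w x ^ β)
  obtain ⟨hF'_int, hderiv⟩ := hasDerivAt_integral_of_dominated_loc_of_deriv_le
    (Metric.ball_mem_nhds (1:ℝ) (by norm_num : (0:ℝ) < 1/2)) hF_meas hF_int hF'_meas h_bound bound_int h_diff
  -- scaling identity
  have hscale : ∀ t : ℝ, 0 < t → (∫ x, F t x) = t ^ (-β - (n:ℝ)) * J := by
    intro t ht
    have key : ∀ x : EuclideanSpace ℝ (Fin n),
        F t x = t ^ (-β) * ((fun y => w y ^ β * g y) (t • x)) := by
      intro x
      show w x ^ β * g (t • x) = t ^ (-β) * (w (t • x) ^ β * g (t • x))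
      rw [hw_hom t ht x, Real.mul_rpow ht.le (hw_nonneg x)]
      have h1 : t ^ (-β) * t ^ β = 1 := by
        rw [← Real.rpow_add ht]; simp
      linear_combination (-(w x ^ β * g (t • x))) * h1
    calc (∫ x, F t x) = ∫ x, t ^ (-β) * ((fun y => w y ^ β * g y) (t • x)) := by
          exact integral_congr_ae (Filter.Eventually.of_forall key)
      _ = t ^ (-β) * ∫ x, (fun y => w y ^ β * g y) (t • x) := by
          rw [integral_const_mul]
      _ = t ^ (-β) * ((t ^ Module.finrank ℝ (EuclideanSpace ℝ (Fin n)))⁻¹ • J) := by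
          rw [MeasureTheory.Measure.integral_comp_smul_of_nonneg volume (fun y => w y ^ β * g y) t (hR := ht.le)]
      _ = t ^ (-β - (n:ℝ)) * J := by
          rw [finrank_euclideanSpace_fin, smul_eq_mul, ← Real.rpow_natCast t n,
            ← Real.rpow_neg ht.le, ← mul_assoc, ← Real.rpow_add ht]
          ring_nf
  have hG : HasDerivAt (fun t : ℝ => t ^ (-β - (n:ℝ)) * J) ((-β - (n:ℝ)) * J) 1 := by
    have := (Real.hasDerivAt_rpow_const (x := (1:ℝ)) (p := -β - n) (Or.inl one_ne_zero)).mul_const J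
    simpa using this
  have heq : (fun t => ∫ x, F t x) =ᶠ[nhds (1:ℝ)] fun t => t ^ (-β - (n:ℝ)) * J := by
    filter_upwards [eventually_gt_nhds (by norm_num : (0:ℝ) < 1)] with t ht
    exact hscale t ht
  have hderiv2 : HasDerivAt (fun t => ∫ x, F t x) ((-β - (n:ℝ)) * J) 1 :=
    hG.congr_of_eventuallyEq heq
  have huniq : (∫ x, F' 1 x) = (-β - (n:ℝ)) * J := hderiv.unique hderiv2
  rw [← huniq, hF'1]

/-- The radial derivative with respect to a homogeneous quasi-norm `w`:
`R_w f(x) = (Df(x))(x) / w(x)`. -/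
noncomputable def radDerivW {n : ℕ} (w : EuclideanSpace ℝ (Fin n) → ℝ)
    (f : EuclideanSpace ℝ (Fin n) → ℂ) (x : EuclideanSpace ℝ (Fin n)) : ℂ :=
  fderiv ℝ f x x / (w x : ℂ)

theorem stmt1 {n : ℕ} (hn : 3 ≤ n)
    (w : EuclideanSpace ℝ (Fin n) → ℝ)
    (hw_cont : Continuous w) (hw_nonneg : ∀ x, 0 ≤ w x)
    (hw_symm : ∀ x, w (-x) = w x)
    (hw_hom : ∀ (lam : ℝ), 0 < lam → ∀ x, w (lam • x) = lam * w x)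
    (hw_zero : ∀ x, w x = 0 ↔ x = 0)
    (f : EuclideanSpace ℝ (Fin n) → ℂ)
    (hf : ContDiff ℝ (⊤ : ℕ∞) f) (hsupp : HasCompactSupport f)
    (h0 : (0 : EuclideanSpace ℝ (Fin n)) ∉ tsupport f) (α : ℝ) :
    (∫ x : EuclideanSpace ℝ (Fin n), w x ^ (-(2 * α)) * ‖radDerivW w f x‖ ^ 2)
      - (((n : ℝ) - 2) / 2 - α) ^ 2 *
        (∫ x : EuclideanSpace ℝ (Fin n), w x ^ (-(2 * (α + 1))) * ‖f x‖ ^ 2)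
    = ∫ x : EuclideanSpace ℝ (Fin n),
        ‖(w x ^ (-α)) • radDerivW w f x
          + ((((n : ℝ) - 2 - 2 * α) / 2) * w x ^ (-(α + 1))) • f x‖ ^ 2 := by
  classical
  have hwpos : ∀ x : EuclideanSpace ℝ (Fin n), x ≠ 0 → 0 < w x := fun x hx =>
    lt_of_le_of_ne (hw_nonneg x) (fun h => hx ((hw_zero x).1 h.symm))
  set c : ℝ := ((n : ℝ) - 2 - 2 * α) / 2 with hc
  set β : ℝ := -(2 * (α + 1)) with hβ
  set g : EuclideanSpace ℝ (Fin n) → ℝ := fun y => Complex.normSq (f y) with hgdef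
  have hgeq : g = fun y => (f y).re * (f y).re + (f y).im * (f y).im :=
    funext fun y => Complex.normSq_apply _
  have hg : ContDiff ℝ (⊤ : ℕ∞) g := by
    rw [hgeq]
    exact ((Complex.reCLM.contDiff.comp hf).mul (Complex.reCLM.contDiff.comp hf)).add
      ((Complex.imCLM.contDiff.comp hf).mul (Complex.imCLM.contDiff.comp hf))
  have hgsupp : HasCompactSupport g := hsupp.comp_left (by simp)
  have hsub : tsupport g ⊆ tsupport f := by
    apply closure_mono
    intro x hx
    simp only [Function.mem_support, hgdef] at hx ⊢
    intro h
    exact hx (by simp [h])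
  have hg0 : (0 : EuclideanSpace ℝ (Fin n)) ∉ tsupport g := fun h => h0 (hsub h)
  have hfd0 : ∀ x, x ∉ tsupport f → fderiv ℝ f x = 0 := fun x hx => by
    by_contra h
    exact hx (support_fderiv_subset (𝕜 := ℝ) (Function.mem_support.2 h))
  have hgd0 : ∀ x, x ∉ tsupport f → fderiv ℝ g x = 0 := fun x hx => by
    by_contra h
    exact hx (hsub (support_fderiv_subset (𝕜 := ℝ) (Function.mem_support.2 h)))
  have hgd : ∀ x, fderiv ℝ g x x = 2 * ((f x).re * (fderiv ℝ f x x).re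
      + (f x).im * (fderiv ℝ f x x).im) := by
    intro x
    have hfx : HasFDerivAt f (fderiv ℝ f x) x := (hf.differentiable (by simp) x).hasFDerivAt
    have hre : HasFDerivAt (fun y => (f y).re) (Complex.reCLM.comp (fderiv ℝ f x)) x :=
      (Complex.reCLM.hasFDerivAt).comp x hfx
    have him : HasFDerivAt (fun y => (f y).im) (Complex.imCLM.comp (fderiv ℝ f x)) x :=
      (Complex.imCLM.hasFDerivAt).comp x hfx
    have h1 : HasFDerivAt (fun y => (f y).re * (f y).re + (f y).im * (f y).im) _ x :=
      (hre.mul hre).add (him.mul him)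
    rw [hgeq, h1.fderiv]
    simp
    ring
  have hRd0 : ∀ x, x ∉ tsupport f → radDerivW w f x = 0 := fun x hx => by
    simp [radDerivW, hfd0 x hx]
  have hnorm : ∀ u : ℂ, ‖u‖ ^ 2 = u.re ^ 2 + u.im ^ 2 := fun u => by
    rw [Complex.sq_norm, Complex.normSq_apply]
    ring
  have P : ∀ x : EuclideanSpace ℝ (Fin n),
      ‖(w x ^ (-α)) • radDerivW w f x
          + ((((n : ℝ) - 2 - 2 * α) / 2) * w x ^ (-(α + 1))) • f x‖ ^ 2
        = w x ^ (-(2 * α)) * ‖radDerivW w f x‖ ^ 2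
          + (c ^ 2 * (w x ^ (-(2 * (α + 1))) * ‖f x‖ ^ 2)
            + c * (w x ^ β * fderiv ℝ g x x)) := by
    intro x
    by_cases hx : x ∈ tsupport f
    · have hx0 : x ≠ 0 := fun h => h0 (h ▸ hx)
      have hr : 0 < w x := hwpos x hx0
      have hr0 : w x ≠ 0 := hr.ne'
      rw [hgd x]
      have hrd : radDerivW w f x = fderiv ℝ f x x * ((w x)⁻¹ : ℝ) := by
        rw [radDerivW, div_eq_mul_inv, ← Complex.ofReal_inv]
      rw [hrd]
      have e1 : w x ^ (-(2 * α)) = w x ^ (-α) * w x ^ (-α) := by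
        rw [← Real.rpow_add hr]; congr 1; ring
      have e2 : w x ^ (-(2 * (α + 1))) = w x ^ (-(α + 1)) * w x ^ (-(α + 1)) := by
        rw [← Real.rpow_add hr]; congr 1; ring
      have e3 : w x ^ (-α) * w x ^ (-(α + 1)) = w x ^ β * w x := by
        rw [← Real.rpow_add hr]
        have h4 : w x ^ β * w x = w x ^ (β + 1) := by
          rw [Real.rpow_add hr, Real.rpow_one]
        rw [h4]
        congr 1
        rw [hβ]; ring
      rw [hnorm, hnorm, hnorm]
      simp only [Complex.add_re, Complex.add_im, Complex.real_smul, Complex.mul_re,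
        Complex.mul_im, Complex.ofReal_re, Complex.ofReal_im, ← hc]
      set r := w x with hrdef
      set dre := (fderiv ℝ f x x).re with hdre
      set dim := (fderiv ℝ f x x).im with hdim
      set zre := (f x).re with hzre
      set zim := (f x).im with hzim
      set a := r ^ (-α) with ha
      set b := r ^ (-(α + 1)) with hb
      set B := r ^ β with hB
      rw [e1, e2]
      rw [e2] at e3
      field_simp
      linear_combination (2 * c * (zre * dre + zim * dim) * r) * e3
    · have h1 : f x = 0 := image_eq_zero_of_notMem_tsupport hx
      have h2 := hRd0 x hx
      have h3 := hgd0 x hx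
      simp [h1, h2, h3]
  have hT1int : Integrable
      (fun x : EuclideanSpace ℝ (Fin n) => w x ^ (-(2 * α)) * ‖radDerivW w f x‖ ^ 2) :=
    intMulAux w hw_cont hwpos _ _ (tsupport f) hsupp (isClosed_tsupport f) h0
      (fun x hx => by
        have hnum : ContinuousAt (fun y : EuclideanSpace ℝ (Fin n) => fderiv ℝ f y y) x :=
          ((hf.continuous_fderiv (by simp)).clm_apply continuous_id).continuousAt
        have hden : ContinuousAt (fun y : EuclideanSpace ℝ (Fin n) => ((w y : ℝ) : ℂ)) x :=
          (Complex.continuous_ofReal.comp hw_cont).continuousAt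
        have hc1 : ContinuousAt (fun y => radDerivW w f y) x := by
          simp only [radDerivW]
          exact hnum.div hden (Complex.ofReal_ne_zero.2 (hwpos x hx).ne')
        exact hc1.norm.pow 2)
      (fun x hx => by rw [hRd0 x hx]; simp)
  have hSint : Integrable
      (fun x : EuclideanSpace ℝ (Fin n) => w x ^ β * ‖f x‖ ^ 2) :=
    intMulAux w hw_cont hwpos _ _ (tsupport f) hsupp (isClosed_tsupport f) h0
      (fun x _ => (hf.continuous.norm.pow 2).continuousAt)
      (fun x hx => by rw [image_eq_zero_of_notMem_tsupport hx]; simp)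
  have hT3int : Integrable
      (fun x : EuclideanSpace ℝ (Fin n) => w x ^ β * fderiv ℝ g x x) :=
    intMulAux w hw_cont hwpos _ _ (tsupport f) hsupp (isClosed_tsupport f) h0
      (fun x _ => ((hg.continuous_fderiv (by simp)).clm_apply continuous_id).continuousAt)
      (fun x hx => by rw [hgd0 x hx]; simp)
  have hkey := keyScaling w hw_cont hw_nonneg hw_hom hwpos g hg hgsupp hg0 β
  have hJeq : (∫ x, w x ^ β * g x) = ∫ x : EuclideanSpace ℝ (Fin n), w x ^ β * ‖f x‖ ^ 2 := by
    apply integral_congr_ae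
    apply Filter.Eventually.of_forall
    intro x
    have hx2 : g x = ‖f x‖ ^ 2 := by rw [hnorm (f x), hgeq]; ring
    show w x ^ β * g x = w x ^ β * ‖f x‖ ^ 2
    rw [hx2]
  have hInt : (∫ x : EuclideanSpace ℝ (Fin n),
        ‖(w x ^ (-α)) • radDerivW w f x + (c * w x ^ (-(α + 1))) • f x‖ ^ 2)
      = ∫ x : EuclideanSpace ℝ (Fin n),
          (w x ^ (-(2 * α)) * ‖radDerivW w f x‖ ^ 2
            + (c ^ 2 * (w x ^ β * ‖f x‖ ^ 2) + c * (w x ^ β * fderiv ℝ g x x))) := by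
    apply integral_congr_ae
    apply Filter.Eventually.of_forall
    intro x
    exact P x
  have hB : Integrable (fun x : EuclideanSpace ℝ (Fin n) =>
      c ^ 2 * (w x ^ β * ‖f x‖ ^ 2)) := hSint.const_mul _
  have hC : Integrable (fun x : EuclideanSpace ℝ (Fin n) =>
      c * (w x ^ β * fderiv ℝ g x x)) := hT3int.const_mul _
  have hBC : Integrable (fun x : EuclideanSpace ℝ (Fin n) =>
      c ^ 2 * (w x ^ β * ‖f x‖ ^ 2) + c * (w x ^ β * fderiv ℝ g x x)) := hB.add hC
  rw [hInt, integral_add hT1int hBC, integral_add hB hC,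
    integral_const_mul, integral_const_mul, hkey, hJeq]
  rw [hc, hβ]
  ring
end

section
/- Let n ≥ 3, let w be a homogeneous quasi-norm on ℝⁿ, and let f ∈ C_0^∞(ℝⁿ\{0}) be complex-valued. Then for every α ∈ ℝ, (|n−2−2α|/2) · (∫_{ℝⁿ} w(x)^{-2(α+1)} |f(x)|² dx)^{1/2} ≤ (∫_{ℝⁿ} w(x)^{-2α} |R_w f(x)|² dx)^{1/2}. -/
open MeasureTheory Real Set

private lemma rpow_le_max_aux {a b x c : ℝ} (ha : 0 < a) (hax : a ≤ x) (hxb : x ≤ b) :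
    x ^ c ≤ max (a ^ c) (b ^ c) := by
  rcases le_or_gt 0 c with h | h
  · exact le_max_of_le_right (Real.rpow_le_rpow (ha.le.trans hax) hxb h)
  · exact le_max_of_le_left (Real.rpow_le_rpow_of_nonpos ha hax h.le)

private lemma contAux {n : ℕ} {w : EuclideanSpace ℝ (Fin n) → ℝ}
    (hw_cont : Continuous w) (hw_zero : ∀ x, w x = 0 ↔ x = 0)
    {K : Set (EuclideanSpace ℝ (Fin n))} (hK : IsClosed K)
    (h0K : (0 : EuclideanSpace ℝ (Fin n)) ∉ K)
    (γ : ℝ) {h : EuclideanSpace ℝ (Fin n) → ℝ}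
    (hh : ContinuousOn h {(0 : EuclideanSpace ℝ (Fin n))}ᶜ)
    (hh0 : ∀ x ∉ K, h x = 0) :
    Continuous (fun x => w x ^ γ * h x) := by
  rw [continuous_iff_continuousAt]
  intro x
  by_cases hx : x ∈ K
  · have hx0 : x ≠ 0 := fun hh => h0K (hh ▸ hx)
    have hw0 : w x ≠ 0 := fun hh => hx0 ((hw_zero x).1 hh)
    have h1 : ContinuousAt (fun y => w y ^ γ) x :=
      hw_cont.continuousAt.rpow_const (Or.inl hw0)
    exact h1.mul (hh.continuousAt (compl_singleton_mem_nhds hx0))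
  · have hev : (fun y => w y ^ γ * h y) =ᶠ[nhds x] (fun _ => (0:ℝ)) := by
      filter_upwards [hK.isOpen_compl.mem_nhds hx] with y hy
      simp [hh0 y hy]
    exact ContinuousAt.congr continuousAt_const hev.symm

theorem stmt2 {n : ℕ} (hn : 3 ≤ n)
    (w : EuclideanSpace ℝ (Fin n) → ℝ)
    (hw_cont : Continuous w) (hw_nonneg : ∀ x, 0 ≤ w x)
    (hw_symm : ∀ x, w (-x) = w x)
    (hw_hom : ∀ (lam : ℝ), 0 < lam → ∀ x, w (lam • x) = lam * w x)
    (hw_zero : ∀ x, w x = 0 ↔ x = 0)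
    (f : EuclideanSpace ℝ (Fin n) → ℂ)
    (hf : ContDiff ℝ (⊤ : ℕ∞) f) (hsupp : HasCompactSupport f)
    (h0 : (0 : EuclideanSpace ℝ (Fin n)) ∉ tsupport f) (α : ℝ) :
    (|(n : ℝ) - 2 - 2 * α| / 2) *
        Real.sqrt (∫ x : EuclideanSpace ℝ (Fin n), w x ^ (-(2 * (α + 1))) * ‖f x‖ ^ 2)
      ≤ Real.sqrt (∫ x : EuclideanSpace ℝ (Fin n), w x ^ (-(2 * α)) * ‖radDerivW w f x‖ ^ 2) := by
  classical
  by_cases hf0 : f = 0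
  · subst hf0
    have hz : ∀ x : EuclideanSpace ℝ (Fin n),
        w x ^ (-(2 * (α + 1))) * ‖(0 : EuclideanSpace ℝ (Fin n) → ℂ) x‖ ^ 2 = 0 := by
      intro x; simp
    rw [integral_congr_ae (Filter.Eventually.of_forall hz), integral_zero, Real.sqrt_zero,
      mul_zero]
    exact Real.sqrt_nonneg _
  -- basic setup
  set K : Set (EuclideanSpace ℝ (Fin n)) := tsupport f with hKdef
  have hKc : IsCompact K := hsupp
  have hKcl : IsClosed K := isClosed_tsupport f
  have hKne : K.Nonempty := by
    rcases Function.ne_iff.1 hf0 with ⟨x, hx⟩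
    exact ⟨x, subset_tsupport f (by simpa using hx)⟩
  obtain ⟨xm, hxmK, hxm⟩ := hKc.exists_isMinOn hKne hw_cont.continuousOn
  obtain ⟨xM, hxMK, hxM⟩ := hKc.exists_isMaxOn hKne hw_cont.continuousOn
  set m : ℝ := w xm with hmdef
  set M : ℝ := w xM with hMdef
  have hm : 0 < m := by
    rcases (hw_nonneg xm).lt_or_eq with h | h
    · exact h
    · exact absurd (by rwa [(hw_zero xm).1 h.symm] at hxmK) h0
  have hM : 0 < M := lt_of_lt_of_le hm (hxm hxMK)
  obtain ⟨R₀, hR₀⟩ := hKc.isBounded.subset_closedBall (0 : EuclideanSpace ℝ (Fin n))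
  set R : ℝ := max R₀ 0 with hRdef
  have hR0 : 0 ≤ R := le_max_right _ _
  have hR : K ⊆ Metric.closedBall 0 R :=
    hR₀.trans (Metric.closedBall_subset_closedBall (le_max_left _ _))
  have hfK : ∀ x, x ∉ K → f x = 0 := fun x hx => image_eq_zero_of_notMem_tsupport hx
  have hDfK : ∀ x, x ∉ K → fderiv ℝ f x = 0 := by
    intro x hx
    by_contra h
    exact hx (support_fderiv_subset ℝ (f := f) h)
  obtain ⟨Cf, hCf⟩ := hsupp.exists_bound_of_continuous hf.continuous
  have hCf0 : 0 ≤ Cf := (norm_nonneg _).trans (hCf 0)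
  obtain ⟨Cd, hCd⟩ := (hsupp.fderiv ℝ).exists_bound_of_continuous (hf.continuous_fderiv (by simp))
  have hCd0 : 0 ≤ Cd := (norm_nonneg _).trans (hCd 0)
  have hDapp : Continuous fun x => (fderiv ℝ f x) x :=
    (hf.continuous_fderiv (by simp)).clm_apply continuous_id
  have hwpos : ∀ x : EuclideanSpace ℝ (Fin n), x ≠ 0 → 0 < w x := by
    intro x hx
    exact (hw_nonneg x).lt_of_ne fun h => hx ((hw_zero x).1 h.symm)
  -- abbreviations
  set β : ℝ := 2 * (α + 1) with hβ
  set A : ℝ := ∫ x : EuclideanSpace ℝ (Fin n), w x ^ (-β) * ‖f x‖ ^ 2 with hA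
  set Cq : ℝ := ∫ x : EuclideanSpace ℝ (Fin n), w x ^ (-(2 * α)) * ‖radDerivW w f x‖ ^ 2
    with hCq
  -- continuity of the radial derivative away from 0
  have hRcont : ContinuousOn (radDerivW w f) {(0 : EuclideanSpace ℝ (Fin n))}ᶜ := by
    apply ContinuousOn.div (Continuous.continuousOn hDapp)
      (Continuous.continuousOn (Complex.continuous_ofReal.comp hw_cont))
    intro x hx
    simp only [mem_compl_iff, mem_singleton_iff] at hx
    simp only [Function.comp_apply, ne_eq, Complex.ofReal_eq_zero]
    exact (hwpos x hx).ne'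
  have hRK : ∀ x, x ∉ K → radDerivW w f x = 0 := by
    intro x hx
    simp [radDerivW, hDfK x hx]
  -- the A-integrand
  have hGcont : Continuous (fun x => w x ^ (-β) * ‖f x‖ ^ 2) :=
    contAux hw_cont hw_zero hKcl h0 _ ((hf.continuous.norm.pow 2).continuousOn)
      (fun x hx => by simp [hfK x hx])
  have hGsupp : HasCompactSupport (fun x => w x ^ (-β) * ‖f x‖ ^ 2) := by
    apply HasCompactSupport.intro hKc
    intro x hx; simp [hfK x hx]
  have hGint : Integrable (fun x => w x ^ (-β) * ‖f x‖ ^ 2) :=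
    hGcont.integrable_of_hasCompactSupport hGsupp
  -- the two Cauchy–Schwarz factors
  set u : EuclideanSpace ℝ (Fin n) → ℝ := fun x => w x ^ (-(α + 1)) * ‖f x‖ with hu
  set v : EuclideanSpace ℝ (Fin n) → ℝ := fun x => w x ^ (-α) * ‖radDerivW w f x‖ with hv
  have hu_cont : Continuous u :=
    contAux hw_cont hw_zero hKcl h0 _ (hf.continuous.norm.continuousOn)
      (fun x hx => by simp [hfK x hx])
  have hv_cont : Continuous v :=
    contAux hw_cont hw_zero hKcl h0 _ (hRcont.norm)
      (fun x hx => by simp [hRK x hx])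
  have hu_supp : HasCompactSupport u := by
    apply HasCompactSupport.intro hKc
    intro x hx; simp [hu, hfK x hx]
  have hv_supp : HasCompactSupport v := by
    apply HasCompactSupport.intro hKc
    intro x hx; simp [hv, hRK x hx]
  have hu_nonneg : ∀ x, 0 ≤ u x := fun x =>
    mul_nonneg (Real.rpow_nonneg (hw_nonneg x) _) (norm_nonneg _)
  have hv_nonneg : ∀ x, 0 ≤ v x := fun x =>
    mul_nonneg (Real.rpow_nonneg (hw_nonneg x) _) (norm_nonneg _)
  -- the parametric family
  set F : ℝ → EuclideanSpace ℝ (Fin n) → ℝ :=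
    fun t x => w x ^ (-β) * ‖f (Real.exp t • x)‖ ^ 2 with hF
  set F' : ℝ → EuclideanSpace ℝ (Fin n) → ℝ := fun t x =>
    w x ^ (-β) *
      (2 * ((starRingEnd ℂ) (f (Real.exp t • x)) *
        (fderiv ℝ f (Real.exp t • x)) (Real.exp t • x)).re) with hF'
  have hwx : ∀ (t : ℝ) (x : EuclideanSpace ℝ (Fin n)),
      w x = Real.exp (-t) * w (Real.exp t • x) := by
    intro t x
    rw [← hw_hom (Real.exp (-t)) (Real.exp_pos _) (Real.exp t • x), smul_smul, ← Real.exp_add]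
    norm_num
  -- scaling identity
  have hscale : ∀ t : ℝ, (∫ x, F t x) = Real.exp ((β - n) * t) * A := by
    intro t
    have h1 : ∀ x : EuclideanSpace ℝ (Fin n), F t x =
        Real.exp (β * t) * ((fun y => w y ^ (-β) * ‖f y‖ ^ 2) (Real.exp t • x)) := by
      intro x
      have h2 : w x ^ (-β) = Real.exp (β * t) * w (Real.exp t • x) ^ (-β) := by
        rw [hwx t x, Real.mul_rpow (Real.exp_pos _).le (hw_nonneg _), ← Real.exp_mul]
        congr 2
        ring
      show w x ^ (-β) * ‖f (Real.exp t • x)‖ ^ 2 = _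
      rw [h2, mul_assoc]
    rw [integral_congr_ae (Filter.Eventually.of_forall h1), integral_const_mul,
      MeasureTheory.Measure.integral_comp_smul volume
        (fun y => w y ^ (-β) * ‖f y‖ ^ 2) (Real.exp t)]
    have hfr : Module.finrank ℝ (EuclideanSpace ℝ (Fin n)) = n := finrank_euclideanSpace_fin
    rw [hfr]
    have habs : |((Real.exp t) ^ n)⁻¹| = Real.exp (-((n : ℝ) * t)) := by
      rw [abs_inv, abs_of_pos (pow_pos (Real.exp_pos t) n), ← Real.exp_nat_mul, ← Real.exp_neg]
    rw [smul_eq_mul, habs, ← mul_assoc, ← Real.exp_add]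
    congr 2
    ring
  have hderiv1 : HasDerivAt (fun t => ∫ x, F t x) ((β - n) * A) 0 := by
    have hfun : (fun t => ∫ x, F t x) = fun t => Real.exp ((β - n) * t) * A :=
      funext hscale
    rw [hfun]
    have h1 : HasDerivAt (fun t : ℝ => (β - n) * t) ((β - n)) 0 := by
      simpa using (hasDerivAt_id (0 : ℝ)).const_mul (β - n)
    have h2 := (h1.exp).mul_const A
    simpa using h2
  -- dominated differentiation under the integral sign
  have main : Integrable (F' 0) ∧
      HasDerivAt (fun t => ∫ x, F t x) (∫ x, F' 0 x) 0 := by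
    set C1 : ℝ := max ((Real.exp (-1) * m) ^ (-β)) ((Real.exp 1 * M) ^ (-β)) with hC1
    have hC10 : 0 ≤ C1 := le_max_iff.2 (Or.inl (Real.rpow_nonneg (by positivity) _))
    set Cb : ℝ := C1 * (2 * Cf * (Cd * R)) with hCb
    have hCb0 : 0 ≤ Cb := by positivity
    set ρ : ℝ := Real.exp 1 * R with hρ
    set bound : EuclideanSpace ℝ (Fin n) → ℝ :=
      (Metric.closedBall (0 : EuclideanSpace ℝ (Fin n)) ρ).indicator (fun _ => Cb) with hbound
    have hbound_int : Integrable bound := by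
      rw [hbound, integrable_indicator_iff measurableSet_closedBall]
      exact integrableOn_const measure_closedBall_lt_top.ne
    have hF_meas : ∀ᶠ t in nhds (0 : ℝ), AEStronglyMeasurable (F t) volume := by
      apply Filter.Eventually.of_forall
      intro t
      have h1 : Measurable fun x : EuclideanSpace ℝ (Fin n) => w x ^ (-β) := by fun_prop
      have h2 : Continuous fun x : EuclideanSpace ℝ (Fin n) => ‖f (Real.exp t • x)‖ ^ 2 :=
        (hf.continuous.comp (continuous_const_smul _)).norm.pow 2
      exact (h1.mul h2.measurable).aestronglyMeasurable
    have hF_int : Integrable (F 0) := by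
      have hEq : F 0 = fun x => w x ^ (-β) * ‖f x‖ ^ 2 := by
        funext x
        show w x ^ (-β) * ‖f (Real.exp 0 • x)‖ ^ 2 = _
        rw [Real.exp_zero, one_smul]
      rw [hEq]
      exact hGint
    have hF'_meas : AEStronglyMeasurable (F' 0) volume := by
      have h1 : Measurable fun x : EuclideanSpace ℝ (Fin n) => w x ^ (-β) := by fun_prop
      have h2 : Continuous fun x : EuclideanSpace ℝ (Fin n) =>
          (2 : ℝ) * ((starRingEnd ℂ) (f (Real.exp 0 • x)) *
            (fderiv ℝ f (Real.exp 0 • x)) (Real.exp 0 • x)).re := by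
        apply continuous_const.mul
        apply Complex.continuous_re.comp
        apply Continuous.mul
        · exact Complex.continuous_conj.comp (hf.continuous.comp (continuous_const_smul _))
        · exact (((hf.continuous_fderiv (by simp)).comp (continuous_const_smul _)).clm_apply
            (continuous_const_smul _))
      exact (h1.mul h2.measurable).aestronglyMeasurable
    have h_bound : ∀ᵐ x ∂(volume : Measure (EuclideanSpace ℝ (Fin n))),
        ∀ t ∈ Metric.ball (0 : ℝ) 1, ‖F' t x‖ ≤ bound x := by
      apply Filter.Eventually.of_forall
      intro x t ht
      rw [Metric.mem_ball, dist_zero_right, Real.norm_eq_abs, abs_lt] at ht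
      by_cases hmem : Real.exp t • x ∈ K
      · have hyR : ‖Real.exp t • x‖ ≤ R := by
          have h := hR hmem
          rwa [Metric.mem_closedBall, dist_zero_right] at h
        have hxball : x ∈ Metric.closedBall (0 : EuclideanSpace ℝ (Fin n)) ρ := by
          rw [Metric.mem_closedBall, dist_zero_right]
          have h1 : ‖x‖ = Real.exp (-t) * ‖Real.exp t • x‖ := by
            rw [norm_smul, Real.norm_eq_abs, abs_of_pos (Real.exp_pos t), ← mul_assoc,
              ← Real.exp_add]
            norm_num
          rw [h1, hρ]
          apply mul_le_mul _ hyR (norm_nonneg _) (Real.exp_pos 1).le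
          exact Real.exp_le_exp.2 (by linarith [ht.1])
        rw [hbound, indicator_of_mem hxball]
        have hw1 : Real.exp (-1) * m ≤ w x := by
          rw [hwx t x]
          exact mul_le_mul (Real.exp_le_exp.2 (by linarith [ht.2])) (hxm hmem) hm.le
            (Real.exp_pos _).le
        have hw2 : w x ≤ Real.exp 1 * M := by
          rw [hwx t x]
          exact mul_le_mul (Real.exp_le_exp.2 (by linarith [ht.1])) (hxM hmem) (hw_nonneg _)
            (Real.exp_pos _).le
        have hwB : w x ^ (-β) ≤ C1 := rpow_le_max_aux (by positivity) hw1 hw2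
        have hzB : |2 * ((starRingEnd ℂ) (f (Real.exp t • x)) *
            (fderiv ℝ f (Real.exp t • x)) (Real.exp t • x)).re| ≤ 2 * Cf * (Cd * R) := by
          rw [abs_mul, abs_two, mul_assoc]
          apply mul_le_mul_of_nonneg_left _ (by norm_num : (0:ℝ) ≤ 2)
          calc |((starRingEnd ℂ) (f (Real.exp t • x)) *
                (fderiv ℝ f (Real.exp t • x)) (Real.exp t • x)).re|
              ≤ ‖((starRingEnd ℂ) (f (Real.exp t • x)) *
                (fderiv ℝ f (Real.exp t • x)) (Real.exp t • x))‖ := Complex.abs_re_le_norm _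
            _ = ‖f (Real.exp t • x)‖ * ‖(fderiv ℝ f (Real.exp t • x)) (Real.exp t • x)‖ := by
                rw [norm_mul, Complex.norm_conj]
            _ ≤ Cf * (Cd * R) := by
                apply mul_le_mul (hCf _) _ (norm_nonneg _) hCf0
                calc ‖(fderiv ℝ f (Real.exp t • x)) (Real.exp t • x)‖
                    ≤ ‖fderiv ℝ f (Real.exp t • x)‖ * ‖Real.exp t • x‖ :=
                      (fderiv ℝ f (Real.exp t • x)).le_opNorm _
                  _ ≤ Cd * R := mul_le_mul (hCd _) hyR (norm_nonneg _) hCd0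
        calc ‖F' t x‖ = w x ^ (-β) * |2 * ((starRingEnd ℂ) (f (Real.exp t • x)) *
              (fderiv ℝ f (Real.exp t • x)) (Real.exp t • x)).re| := by
              rw [hF', Real.norm_eq_abs, abs_mul,
                abs_of_nonneg (Real.rpow_nonneg (hw_nonneg x) _)]
          _ ≤ C1 * (2 * Cf * (Cd * R)) := mul_le_mul hwB hzB (abs_nonneg _) hC10
          _ = Cb := hCb.symm
      · have hz : F' t x = 0 := by
          have := hfK _ hmem
          simp [hF', this]
        rw [hz, norm_zero]
        exact indicator_nonneg (fun _ _ => hCb0) x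
    have h_diff : ∀ᵐ x ∂(volume : Measure (EuclideanSpace ℝ (Fin n))),
        ∀ t ∈ Metric.ball (0 : ℝ) 1, HasDerivAt (fun s => F s x) (F' t x) t := by
      apply Filter.Eventually.of_forall
      intro x t _
      have hdil : HasDerivAt (fun s : ℝ => Real.exp s • x) (Real.exp t • x) t :=
        (Real.hasDerivAt_exp t).smul_const x
      have hg : HasDerivAt (fun s => f (Real.exp s • x))
          ((fderiv ℝ f (Real.exp t • x)) (Real.exp t • x)) t :=
        ((hf.differentiable (by simp)) (Real.exp t • x)).hasFDerivAt.comp_hasDerivAt t hdil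
      have hre : HasDerivAt (fun s => (f (Real.exp s • x)).re)
          (((fderiv ℝ f (Real.exp t • x)) (Real.exp t • x)).re) t :=
        Complex.reCLM.hasFDerivAt.comp_hasDerivAt t hg
      have him : HasDerivAt (fun s => (f (Real.exp s • x)).im)
          (((fderiv ℝ f (Real.exp t • x)) (Real.exp t • x)).im) t :=
        Complex.imCLM.hasFDerivAt.comp_hasDerivAt t hg
      have hkeynorm : ∀ z : ℂ, ‖z‖ ^ 2 = z.re * z.re + z.im * z.im := fun z => by
        rw [Complex.sq_norm, Complex.normSq_apply]
      have heq : (fun s => F s x) = fun s => w x ^ (-β) *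
          ((f (Real.exp s • x)).re * (f (Real.exp s • x)).re +
           (f (Real.exp s • x)).im * (f (Real.exp s • x)).im) := by
        funext s
        show w x ^ (-β) * ‖f (Real.exp s • x)‖ ^ 2 = _
        rw [hkeynorm]
      rw [heq]
      have h5 := ((hre.mul hre).add (him.mul him)).const_mul (w x ^ (-β))
      refine h5.congr_deriv ?_
      show _ = w x ^ (-β) * _
      simp only [Complex.mul_re, Complex.conj_re, Complex.conj_im]
      ring
    exact hasDerivAt_integral_of_dominated_loc_of_deriv_le (Metric.ball_mem_nhds 0 one_pos) hF_meas hF_int hF'_meas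
      h_bound hbound_int h_diff
  have hkey : (∫ x, F' 0 x) = (β - n) * A := main.2.unique hderiv1
  -- pointwise bound |F' 0 x| ≤ 2 u x v x
  have hpt : ∀ x, ‖F' 0 x‖ ≤ 2 * (u x * v x) := by
    intro x
    by_cases hx : x = 0
    · subst hx
      have hf00 : f (Real.exp 0 • (0 : EuclideanSpace ℝ (Fin n))) = 0 := by
        rw [smul_zero]
        exact hfK 0 h0
      have hz : F' 0 (0 : EuclideanSpace ℝ (Fin n)) = 0 := by
        simp [hF', hf00]
      rw [hz, norm_zero]
      exact mul_nonneg (by norm_num) (mul_nonneg (hu_nonneg 0) (hv_nonneg 0))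
    · have hw0 : 0 < w x := hwpos x hx
      have hsmul : Real.exp 0 • x = x := by rw [Real.exp_zero, one_smul]
      have hnormR : ‖radDerivW w f x‖ = ‖(fderiv ℝ f x) x‖ / w x := by
        rw [radDerivW, norm_div, Complex.norm_real, Real.norm_eq_abs, abs_of_pos hw0]
      have hL : ‖F' 0 x‖ ≤ w x ^ (-β) * (2 * (‖f x‖ * ‖(fderiv ℝ f x) x‖)) := by
        have h1 : ‖F' 0 x‖ = w x ^ (-β) *
            |2 * ((starRingEnd ℂ) (f x) * (fderiv ℝ f x) x).re| := by
          simp only [hF', hsmul]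
          rw [Real.norm_eq_abs, abs_mul, abs_of_nonneg (Real.rpow_nonneg (hw_nonneg x) _)]
        rw [h1]
        apply mul_le_mul_of_nonneg_left _ (Real.rpow_nonneg (hw_nonneg x) _)
        rw [abs_mul, abs_two]
        apply mul_le_mul_of_nonneg_left _ (by norm_num : (0:ℝ) ≤ 2)
        calc |((starRingEnd ℂ) (f x) * (fderiv ℝ f x) x).re|
            ≤ ‖((starRingEnd ℂ) (f x) * (fderiv ℝ f x) x)‖ := Complex.abs_re_le_norm _
          _ = ‖f x‖ * ‖(fderiv ℝ f x) x‖ := by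
              rw [norm_mul, Complex.norm_conj]
      have hReq : w x ^ (-β) * (2 * (‖f x‖ * ‖(fderiv ℝ f x) x‖)) = 2 * (u x * v x) := by
        simp only [hu, hv, hnormR]
        have hsplit : w x ^ (-β) = w x ^ (-(α + 1)) * w x ^ (-α) * (w x)⁻¹ := by
          rw [← Real.rpow_neg_one (w x), ← Real.rpow_add hw0, ← Real.rpow_add hw0]
          congr 1
          rw [hβ]
          ring
        rw [hsplit]
        field_simp
      rw [← hReq]
      exact hL
  have huv_int : Integrable (fun x => 2 * (u x * v x)) := by
    apply Continuous.integrable_of_hasCompactSupport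
    · exact continuous_const.mul (hu_cont.mul hv_cont)
    · apply HasCompactSupport.intro hKc
      intro x hx; simp [hu, hv, hfK x hx]
  have habs : |(β - n) * A| ≤ 2 * ∫ x, u x * v x := by
    rw [← hkey]
    calc |∫ x, F' 0 x| ≤ ∫ x, 2 * (u x * v x) :=
          norm_integral_le_of_norm_le huv_int (Filter.Eventually.of_forall hpt)
      _ = 2 * ∫ x, u x * v x := integral_const_mul 2 _
  -- Cauchy–Schwarz
  have hCS : (∫ x, u x * v x) ≤ Real.sqrt A * Real.sqrt Cq := by
    have h2 : Real.HolderConjugate 2 2 := Real.HolderConjugate.two_two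
    have hp2 : ENNReal.ofReal (2 : ℝ) = 2 := by
      rw [ENNReal.ofReal_ofNat]
    have hu2 : MemLp u (ENNReal.ofReal 2) volume := by
      rw [hp2]
      exact hu_cont.memLp_of_hasCompactSupport hu_supp
    have hv2 : MemLp v (ENNReal.ofReal 2) volume := by
      rw [hp2]
      exact hv_cont.memLp_of_hasCompactSupport hv_supp
    have hHolder := integral_mul_le_Lp_mul_Lq_of_nonneg h2
      (Filter.Eventually.of_forall hu_nonneg) (Filter.Eventually.of_forall hv_nonneg) hu2 hv2
    have hA2 : (∫ x, u x ^ (2 : ℝ)) = A := by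
      rw [hA]
      congr 1
      funext x
      rw [hu]
      show (w x ^ (-(α + 1)) * ‖f x‖) ^ (2:ℝ) = _
      rw [Real.mul_rpow (Real.rpow_nonneg (hw_nonneg x) _) (norm_nonneg _),
        ← Real.rpow_mul (hw_nonneg x), Real.rpow_two]
      congr 2
      rw [hβ]
      ring
    have hCq2 : (∫ x, v x ^ (2 : ℝ)) = Cq := by
      rw [hCq]
      congr 1
      funext x
      rw [hv]
      show (w x ^ (-α) * ‖radDerivW w f x‖) ^ (2:ℝ) = _
      rw [Real.mul_rpow (Real.rpow_nonneg (hw_nonneg x) _) (norm_nonneg _),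
        ← Real.rpow_mul (hw_nonneg x), Real.rpow_two]
      congr 2
      ring
    calc (∫ x, u x * v x)
        ≤ (∫ x, u x ^ (2:ℝ)) ^ (1 / (2:ℝ)) * (∫ x, v x ^ (2:ℝ)) ^ (1 / (2:ℝ)) := hHolder
      _ = Real.sqrt A * Real.sqrt Cq := by
          rw [hA2, hCq2, ← Real.sqrt_eq_rpow, ← Real.sqrt_eq_rpow]
  -- conclusion
  have hA0 : 0 ≤ A := by
    rw [hA]
    apply integral_nonneg
    intro x
    exact mul_nonneg (Real.rpow_nonneg (hw_nonneg x) _) (by positivity)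
  have hfinal : |(n : ℝ) - 2 - 2 * α| * A ≤ 2 * (Real.sqrt A * Real.sqrt Cq) := by
    have h1 : |(n : ℝ) - 2 - 2 * α| * A = |(β - n) * A| := by
      rw [abs_mul, abs_of_nonneg hA0]
      congr 1
      rw [show β - (n : ℝ) = -((n : ℝ) - 2 - 2 * α) by rw [hβ]; ring, abs_neg]
    rw [h1]
    calc |(β - n) * A| ≤ 2 * ∫ x, u x * v x := habs
      _ ≤ 2 * (Real.sqrt A * Real.sqrt Cq) :=
          mul_le_mul_of_nonneg_left hCS (by norm_num)
  show (|(n : ℝ) - 2 - 2 * α| / 2) * Real.sqrt A ≤ Real.sqrt Cq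
  rcases hA0.lt_or_eq with hA | hA
  · have hsA : 0 < Real.sqrt A := Real.sqrt_pos.2 hA
    have hss : Real.sqrt A * Real.sqrt A = A := Real.mul_self_sqrt hA0
    apply le_of_mul_le_mul_right _ hsA
    calc (|(n : ℝ) - 2 - 2 * α| / 2) * Real.sqrt A * Real.sqrt A
        = (|(n : ℝ) - 2 - 2 * α| * A) / 2 := by rw [mul_assoc, hss]; ring
      _ ≤ (2 * (Real.sqrt A * Real.sqrt Cq)) / 2 := (div_le_div_iff_of_pos_right (by norm_num)).2 hfinal
      _ = Real.sqrt Cq * Real.sqrt A := by ring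
  · rw [← hA, Real.sqrt_zero, mul_zero]
    exact Real.sqrt_nonneg _
end

section
/- Let n ≥ 3 and let f ∈ C_0^∞(ℝⁿ\{0}) be complex-valued. Then for every α ∈ ℝ, the L²-Caffarelli–Kohn–Nirenberg inequality holds with the optimal constant: (|n−2−2α|/2) · (∫_{ℝⁿ} ‖x‖^{-2(α+1)} |f(x)|² dx)^{1/2} ≤ (∫_{ℝⁿ} ‖x‖^{-2α} |∇f(x)|² dx)^{1/2}, where ∇f denotes the full gradient of f. -/
open MeasureTheory Real

private lemma auxCont {n : ℕ} {γ : ℝ} {G : EuclideanSpace ℝ (Fin n) → ℝ} (hG : Continuous G)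
    (h0 : ∀ᶠ y in nhds (0 : EuclideanSpace ℝ (Fin n)), G y = 0) :
    Continuous fun x : EuclideanSpace ℝ (Fin n) => ‖x‖ ^ γ * G x := by
  rw [continuous_iff_continuousAt]
  intro x
  by_cases hx : x = 0
  · subst hx
    have hev : (fun y : EuclideanSpace ℝ (Fin n) => ‖y‖ ^ γ * G y) =ᶠ[nhds 0] (fun _ => 0) :=
      h0.mono fun y hy => by simp [hy]
    exact continuousAt_const.congr hev.symm
  · exact ((Real.continuousAt_rpow_const _ γ (Or.inl (norm_ne_zero_iff.2 hx))).comp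
      continuous_norm.continuousAt).mul hG.continuousAt

set_option maxHeartbeats 1000000 in
theorem stmt3 {n : ℕ} (hn : 3 ≤ n) (f : EuclideanSpace ℝ (Fin n) → ℂ)
    (hf : ContDiff ℝ (⊤ : ℕ∞) f) (hsupp : HasCompactSupport f)
    (h0 : (0 : EuclideanSpace ℝ (Fin n)) ∉ tsupport f) (α : ℝ) :
    (|(n : ℝ) - 2 - 2 * α| / 2) *
        Real.sqrt (∫ x : EuclideanSpace ℝ (Fin n), ‖x‖ ^ (-(2 * (α + 1))) * ‖f x‖ ^ 2)
      ≤ Real.sqrt (∫ x : EuclideanSpace ℝ (Fin n), ‖x‖ ^ (-(2 * α)) * ‖fderiv ℝ f x‖ ^ 2) := by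
  classical
  set c : ℝ := -(2 * (α + 1)) with hc
  have hfd : Differentiable ℝ f := hf.differentiable (by simp)
  set U : Set (EuclideanSpace ℝ (Fin n)) := (tsupport f)ᶜ with hU
  have hUopen : IsOpen U := (isClosed_tsupport f).isOpen_compl
  have hU0 : (0 : EuclideanSpace ℝ (Fin n)) ∈ U := h0
  have hfU : ∀ y ∈ U, f y = 0 := fun y hy => image_eq_zero_of_notMem_tsupport hy
  have hevU : ∀ x ∈ U, f =ᶠ[nhds x] (fun _ => 0) :=
    fun x hx => (hUopen.eventually_mem hx).mono hfU
  have hf'U : ∀ x ∈ U, fderiv ℝ f x = 0 := fun x hx => by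
    rw [(hevU x hx).fderiv_eq]; exact fderiv_const_apply 0
  have hf0 : f 0 = 0 := hfU 0 hU0
  have hf'0 : fderiv ℝ f 0 = 0 := hf'U 0 hU0
  -- the function F = |f|^2
  set F : EuclideanSpace ℝ (Fin n) → ℝ := fun x => ‖f x‖ ^ 2 with hF
  have hFc : ContDiff ℝ (⊤ : ℕ∞) F := hf.norm_sq ℝ
  have hFU : ∀ y ∈ U, F y = 0 := fun y hy => by simp [hF, hfU y hy]
  have hFsupp : HasCompactSupport F := hsupp.mono (fun x hx => by
    simp only [Function.mem_support, hF] at hx ⊢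
    intro h; exact hx (by simp [h]))
  -- derivative of the weight at x ≠ 0
  have rp2 : ∀ x : EuclideanSpace ℝ (Fin n), x ≠ 0 → ‖x‖ ^ (c - 2) * ‖x‖ ^ (2:ℕ) = ‖x‖ ^ c := by
    intro x hx
    rw [← Real.rpow_natCast ‖x‖ 2, ← Real.rpow_add (norm_pos_iff.2 hx)]
    norm_num
  have hφ : ∀ x : EuclideanSpace ℝ (Fin n), x ≠ 0 →
      HasFDerivAt (fun y : EuclideanSpace ℝ (Fin n) => ‖y‖ ^ c)
        ((c * ‖x‖ ^ (c - 2)) • (innerSL ℝ x : EuclideanSpace ℝ (Fin n) →L[ℝ] ℝ)) x := by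
    intro x hx
    have hψ : HasFDerivAt (fun y : EuclideanSpace ℝ (Fin n) => ‖y‖ ^ (2:ℕ)) (2 • (innerSL ℝ x)) x :=
      (hasStrictFDerivAt_norm_sq x).hasFDerivAt
    have hψx : (‖x‖ ^ (2:ℕ) : ℝ) ≠ 0 := pow_ne_zero _ (norm_ne_zero_iff.2 hx)
    have hr : HasDerivAt (fun t : ℝ => t ^ (c / 2))
        ((c / 2) * (‖x‖ ^ (2:ℕ)) ^ (c / 2 - 1)) (‖x‖ ^ (2:ℕ)) :=
      Real.hasDerivAt_rpow_const (Or.inl hψx)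
    have hcomp := hr.comp_hasFDerivAt x hψ
    have heq : (fun y : EuclideanSpace ℝ (Fin n) => ‖y‖ ^ c) = fun y : EuclideanSpace ℝ (Fin n) => (‖y‖ ^ (2:ℕ) : ℝ) ^ (c / 2) := by
      funext y
      rw [← Real.rpow_natCast ‖y‖ 2, ← Real.rpow_mul (norm_nonneg y)]
      congr 1; push_cast; ring
    rw [heq]
    refine hcomp.congr_fderiv ?_
    ext v
    simp only [ContinuousLinearMap.coe_smul', Pi.smul_apply, smul_eq_mul,
      ContinuousLinearMap.smul_apply, nsmul_eq_mul]
    have h2 : ((‖x‖ ^ (2:ℕ) : ℝ)) ^ (c / 2 - 1) = ‖x‖ ^ (c - 2) := by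
      rw [← Real.rpow_natCast ‖x‖ 2, ← Real.rpow_mul (norm_nonneg x)]
      congr 1; ring
    rw [h2]; ring
  -- the weighted density h
  have hh : ContDiff ℝ (⊤ : ℕ∞) (fun x : EuclideanSpace ℝ (Fin n) => ‖x‖ ^ c * F x) := by
    rw [contDiff_iff_contDiffAt]
    intro x
    by_cases hx : x ∈ U
    · have hev : (fun y : EuclideanSpace ℝ (Fin n) => ‖y‖ ^ c * F y) =ᶠ[nhds x] (fun _ => (0:ℝ)) :=
        (hUopen.eventually_mem hx).mono fun y hy => by simp [hFU y hy]
      exact (contDiffAt_const (c := (0:ℝ))).congr_of_eventuallyEq hev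
    · have hx0 : x ≠ 0 := fun h => hx (h ▸ hU0)
      exact ((Real.contDiffAt_rpow_const_of_ne (norm_ne_zero_iff.2 hx0)).comp x
        (contDiffAt_norm ℝ hx0)).mul hFc.contDiffAt
  have hhsupp : HasCompactSupport (fun x : EuclideanSpace ℝ (Fin n) => ‖x‖ ^ c * F x) := hFsupp.mul_left
  have int_h : Integrable (fun x : EuclideanSpace ℝ (Fin n) => ‖x‖ ^ c * F x) :=
    hh.continuous.integrable_of_hasCompactSupport hhsupp
  -- key pointwise identity
  have key : ∀ x : EuclideanSpace ℝ (Fin n), fderiv ℝ (fun y : EuclideanSpace ℝ (Fin n) => ‖y‖ ^ c * F y) x x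
      = c * (‖x‖ ^ c * F x) + ‖x‖ ^ c * (2 * (inner ℝ (f x) (fderiv ℝ f x x) : ℝ)) := by
    intro x
    by_cases hx : x ∈ U
    · have hev : (fun y : EuclideanSpace ℝ (Fin n) => ‖y‖ ^ c * F y) =ᶠ[nhds x] (fun _ => (0:ℝ)) :=
        (hUopen.eventually_mem hx).mono fun y hy => by simp [hFU y hy]
      rw [hev.fderiv_eq]
      simp [hFU x hx, hfU x hx]
    · have hx0 : x ≠ 0 := fun h => hx (h ▸ hU0)
      have hF' : HasFDerivAt F (2 • (innerSL ℝ (f x)).comp (fderiv ℝ f x)) x :=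
        (hfd x).hasFDerivAt.norm_sq
      have hmul : HasFDerivAt (fun y : EuclideanSpace ℝ (Fin n) => ‖y‖ ^ c * F y) _ x := (hφ x hx0).mul hF'
      rw [hmul.fderiv]
      simp only [ContinuousLinearMap.add_apply, ContinuousLinearMap.coe_smul', Pi.smul_apply,
        smul_eq_mul, ContinuousLinearMap.smul_apply, nsmul_eq_mul,
        ContinuousLinearMap.coe_comp', Function.comp_apply, innerSL_apply_apply, Nat.cast_ofNat]
      rw [real_inner_self_eq_norm_sq]
      linear_combination (c * F x) * rp2 x hx0
  -- integrability of the derivative term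
  have hDcont : Continuous (fun x : EuclideanSpace ℝ (Fin n) =>
      fderiv ℝ (fun y : EuclideanSpace ℝ (Fin n) => ‖y‖ ^ c * F y) x) :=
    hh.continuous_fderiv (by simp)
  have hDsupp : HasCompactSupport (fderiv ℝ (fun y : EuclideanSpace ℝ (Fin n) => ‖y‖ ^ c * F y)) :=
    hhsupp.fderiv (𝕜 := ℝ)
  have int_D : Integrable (fun x : EuclideanSpace ℝ (Fin n) =>
      fderiv ℝ (fun y : EuclideanSpace ℝ (Fin n) => ‖y‖ ^ c * F y) x x) :=
    (hDcont.clm_apply continuous_id).integrable_of_hasCompactSupport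
      (hDsupp.mono fun x hx => by
        simp only [Function.mem_support] at hx ⊢
        intro h; exact hx (by rw [h]; simp))
  set e : Fin n → EuclideanSpace ℝ (Fin n) := fun i => EuclideanSpace.single i 1 with he
  have hgic : ∀ i : Fin n, ContDiff ℝ (⊤ : ℕ∞) (fun x : EuclideanSpace ℝ (Fin n) =>
      (‖x‖ ^ c * F x) * x i) := fun i =>
    hh.mul (EuclideanSpace.proj i : EuclideanSpace ℝ (Fin n) →L[ℝ] ℝ).contDiff
  have hgis : ∀ i : Fin n, HasCompactSupport (fun x : EuclideanSpace ℝ (Fin n) =>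
      (‖x‖ ^ c * F x) * x i) := fun i => hhsupp.mul_right
  have hint : ∀ i : Fin n, Integrable (fun x : EuclideanSpace ℝ (Fin n) =>
      fderiv ℝ (fun y : EuclideanSpace ℝ (Fin n) => (‖y‖ ^ c * F y) * y i) x (e i)) := by
    intro i
    exact (((hgic i).continuous_fderiv (by simp)).clm_apply continuous_const).integrable_of_hasCompactSupport
      ((((hgis i).fderiv (𝕜 := ℝ))).mono fun x hx => by
        simp only [Function.mem_support] at hx ⊢
        intro h; exact hx (by rw [h]; simp))
  have IBP : ∀ i : Fin n, ∫ x : EuclideanSpace ℝ (Fin n),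
      fderiv ℝ (fun y : EuclideanSpace ℝ (Fin n) => (‖y‖ ^ c * F y) * y i) x (e i) = 0 := by
    intro i
    have h3 : Integrable (fun x : EuclideanSpace ℝ (Fin n) => (‖x‖ ^ c * F x) * x i) :=
      (hgic i).continuous.integrable_of_hasCompactSupport (hgis i)
    have h1 : Integrable (fun x : EuclideanSpace ℝ (Fin n) =>
        fderiv ℝ (fun _ : EuclideanSpace ℝ (Fin n) => (1:ℝ)) x (e i) * ((‖x‖ ^ c * F x) * x i)) := by
      simp only [fderiv_fun_const, Pi.zero_apply, ContinuousLinearMap.zero_apply, zero_mul]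
      exact integrable_zero _ _ _
    have h2 := integral_mul_fderiv_eq_neg_fderiv_mul_of_integrable h1
      (by simpa using hint i) (by simpa using h3)
      (fun x _ => differentiable_const (1:ℝ) x) (fun x _ => (hgic i).differentiable (by simp) x)
    simpa [fderiv_fun_const] using h2
  have hgi' : ∀ (i : Fin n) (x : EuclideanSpace ℝ (Fin n)),
      fderiv ℝ (fun y : EuclideanSpace ℝ (Fin n) => (‖y‖ ^ c * F y) * y i) x (e i)
      = (‖x‖ ^ c * F x) + x i * fderiv ℝ (fun y : EuclideanSpace ℝ (Fin n) => ‖y‖ ^ c * F y) x (e i) := by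
    intro i x
    have hhx : HasFDerivAt (fun y : EuclideanSpace ℝ (Fin n) => ‖y‖ ^ c * F y)
        (fderiv ℝ (fun y : EuclideanSpace ℝ (Fin n) => ‖y‖ ^ c * F y) x) x :=
      (hh.differentiable (by simp) x).hasFDerivAt
    have hπ : HasFDerivAt (fun y : EuclideanSpace ℝ (Fin n) => y i)
        (EuclideanSpace.proj i : EuclideanSpace ℝ (Fin n) →L[ℝ] ℝ) x :=
      (EuclideanSpace.proj i : EuclideanSpace ℝ (Fin n) →L[ℝ] ℝ).hasFDerivAt
    have hmul : HasFDerivAt (fun y : EuclideanSpace ℝ (Fin n) => (‖y‖ ^ c * F y) * y i) _ x := hhx.mul hπ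
    rw [hmul.fderiv]
    simp only [ContinuousLinearMap.add_apply, ContinuousLinearMap.coe_smul', Pi.smul_apply,
      smul_eq_mul, he]
    simp [EuclideanSpace.single_apply]
  have hpt : ∀ x : EuclideanSpace ℝ (Fin n), ∑ i : Fin n,
      fderiv ℝ (fun y : EuclideanSpace ℝ (Fin n) => (‖y‖ ^ c * F y) * y i) x (e i)
      = (n : ℝ) * (‖x‖ ^ c * F x)
        + fderiv ℝ (fun y : EuclideanSpace ℝ (Fin n) => ‖y‖ ^ c * F y) x x := by
    intro x
    simp only [hgi']
    rw [Finset.sum_add_distrib, Finset.sum_const, Finset.card_univ, Fintype.card_fin]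
    congr 1
    · simp [nsmul_eq_mul]
    · have hxsum : ∑ i : Fin n, x i • e i = x := by
        simpa [he, EuclideanSpace.basisFun_apply] using
          (EuclideanSpace.basisFun (Fin n) ℝ).sum_repr x
      calc ∑ i : Fin n, x i * fderiv ℝ (fun y : EuclideanSpace ℝ (Fin n) => ‖y‖ ^ c * F y) x (e i)
          = fderiv ℝ (fun y : EuclideanSpace ℝ (Fin n) => ‖y‖ ^ c * F y) x (∑ i : Fin n, x i • e i) := by
            rw [map_sum]; simp [smul_eq_mul]
        _ = _ := by rw [hxsum]
  have hA_sum : ∫ x : EuclideanSpace ℝ (Fin n),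
      ((n : ℝ) * (‖x‖ ^ c * F x)
        + fderiv ℝ (fun y : EuclideanSpace ℝ (Fin n) => ‖y‖ ^ c * F y) x x) = 0 := by
    have h1 := integral_finset_sum (μ := volume) Finset.univ (fun i _ => hint i)
    simp only [hpt] at h1
    rw [h1]
    exact Finset.sum_eq_zero fun i _ => IBP i
  have I3 : ∫ x : EuclideanSpace ℝ (Fin n),
      fderiv ℝ (fun y : EuclideanSpace ℝ (Fin n) => ‖y‖ ^ c * F y) x x
      = -((n : ℝ) * ∫ x : EuclideanSpace ℝ (Fin n), ‖x‖ ^ c * F x) := by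
    have h1 := integral_add (μ := volume) (int_h.const_mul (n : ℝ)) int_D
    rw [hA_sum, integral_const_mul] at h1
    linarith
  -- the function w
  have hweq : (fun x : EuclideanSpace ℝ (Fin n) =>
      ‖x‖ ^ c * (2 * (inner ℝ (f x) (fderiv ℝ f x x) : ℝ)))
      = fun x : EuclideanSpace ℝ (Fin n) =>
        fderiv ℝ (fun y : EuclideanSpace ℝ (Fin n) => ‖y‖ ^ c * F y) x x - c * (‖x‖ ^ c * F x) :=
    funext fun x => by rw [key x]; ring
  have hwint : Integrable (fun x : EuclideanSpace ℝ (Fin n) =>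
      ‖x‖ ^ c * (2 * (inner ℝ (f x) (fderiv ℝ f x x) : ℝ))) := by
    rw [hweq]; exact int_D.sub (int_h.const_mul c)
  have hwI : ∫ x : EuclideanSpace ℝ (Fin n), ‖x‖ ^ c * (2 * (inner ℝ (f x) (fderiv ℝ f x x) : ℝ))
      = -(((n : ℝ) + c) * ∫ x : EuclideanSpace ℝ (Fin n), ‖x‖ ^ c * F x) := by
    rw [hweq, integral_sub int_D (int_h.const_mul c), I3, integral_const_mul]
    ring
  -- p and q
  set p : EuclideanSpace ℝ (Fin n) → ℝ := fun x => ‖x‖ ^ (-(α + 1)) * ‖f x‖ with hp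
  set q : EuclideanSpace ℝ (Fin n) → ℝ := fun x => ‖x‖ ^ (-α) * ‖fderiv ℝ f x‖ with hq
  have hev0f : ∀ᶠ y in nhds (0 : EuclideanSpace ℝ (Fin n)), ‖f y‖ = 0 :=
    (hUopen.eventually_mem hU0).mono fun y hy => by simp [hfU y hy]
  have hev0f' : ∀ᶠ y in nhds (0 : EuclideanSpace ℝ (Fin n)), ‖fderiv ℝ f y‖ = 0 :=
    (hUopen.eventually_mem hU0).mono fun y hy => by simp [hf'U y hy]
  have hpc : Continuous p := auxCont hf.continuous.norm hev0f
  have hqc : Continuous q := auxCont ((hf.continuous_fderiv (by simp)).norm) hev0f'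
  have hpsupp : HasCompactSupport p := hsupp.norm.mul_left
  have hqsupp : HasCompactSupport q := (hsupp.fderiv (𝕜 := ℝ)).norm.mul_left
  have hpnn : ∀ x, 0 ≤ p x := fun x =>
    mul_nonneg (Real.rpow_nonneg (norm_nonneg x) _) (norm_nonneg _)
  have hqnn : ∀ x, 0 ≤ q x := fun x =>
    mul_nonneg (Real.rpow_nonneg (norm_nonneg x) _) (norm_nonneg _)
  have hpqint : Integrable (fun x : EuclideanSpace ℝ (Fin n) => p x * q x) :=
    (hpc.mul hqc).integrable_of_hasCompactSupport hpsupp.mul_right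
  -- pointwise bound
  have hb : ∀ x : EuclideanSpace ℝ (Fin n),
      |‖x‖ ^ c * (2 * (inner ℝ (f x) (fderiv ℝ f x x) : ℝ))| ≤ 2 * (p x * q x) := by
    intro x
    by_cases hx : x = 0
    · subst hx
      simp [hp, hq, hf0]
    · have hr0 : (0:ℝ) < ‖x‖ := norm_pos_iff.2 hx
      have h1 : |(inner ℝ (f x) (fderiv ℝ f x x) : ℝ)| ≤ ‖f x‖ * (‖fderiv ℝ f x‖ * ‖x‖) := by
        refine le_trans (abs_real_inner_le_norm _ _) ?_
        exact mul_le_mul_of_nonneg_left ((fderiv ℝ f x).le_opNorm x) (norm_nonneg _)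
      have e1 : ‖x‖ ^ (-(α + 1)) * ‖x‖ ^ (-α) = ‖x‖ ^ c * ‖x‖ := by
        rw [← Real.rpow_add hr0]
        rw [show -(α + 1) + -α = c + 1 by rw [hc]; ring]
        exact Real.rpow_add_one (ne_of_gt hr0) c
      have e2 : 2 * (p x * q x) = 2 * ‖x‖ ^ c * (‖f x‖ * (‖fderiv ℝ f x‖ * ‖x‖)) := by
        calc 2 * (p x * q x)
            = 2 * ((‖x‖ ^ (-(α + 1)) * ‖x‖ ^ (-α)) * (‖f x‖ * ‖fderiv ℝ f x‖)) := by
              simp only [hp, hq]; ring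
          _ = _ := by rw [e1]; ring
      rw [abs_mul, abs_of_nonneg (Real.rpow_nonneg (norm_nonneg x) c), abs_mul, abs_two, e2]
      have h2 := mul_le_mul_of_nonneg_left h1
        (by positivity : (0:ℝ) ≤ 2 * ‖x‖ ^ c)
      calc ‖x‖ ^ c * (2 * |(inner ℝ (f x) (fderiv ℝ f x x) : ℝ)|)
          = 2 * ‖x‖ ^ c * |(inner ℝ (f x) (fderiv ℝ f x x) : ℝ)| := by ring
        _ ≤ 2 * ‖x‖ ^ c * (‖f x‖ * (‖fderiv ℝ f x‖ * ‖x‖)) := h2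
  -- bound on the integral of w
  have habs : |∫ x : EuclideanSpace ℝ (Fin n),
      ‖x‖ ^ c * (2 * (inner ℝ (f x) (fderiv ℝ f x x) : ℝ))|
      ≤ 2 * ∫ x : EuclideanSpace ℝ (Fin n), p x * q x := by
    calc |∫ x : EuclideanSpace ℝ (Fin n), ‖x‖ ^ c * (2 * (inner ℝ (f x) (fderiv ℝ f x x) : ℝ))|
        ≤ ∫ x : EuclideanSpace ℝ (Fin n),
            |‖x‖ ^ c * (2 * (inner ℝ (f x) (fderiv ℝ f x x) : ℝ))| := by
          simpa only [Real.norm_eq_abs] using norm_integral_le_integral_norm (μ := volume)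
            (fun x : EuclideanSpace ℝ (Fin n) => ‖x‖ ^ c * (2 * (inner ℝ (f x) (fderiv ℝ f x x) : ℝ)))
      _ ≤ ∫ x : EuclideanSpace ℝ (Fin n), 2 * (p x * q x) :=
          integral_mono hwint.abs (hpqint.const_mul 2) hb
      _ = 2 * ∫ x : EuclideanSpace ℝ (Fin n), p x * q x := integral_const_mul 2 _
  -- Hölder (Cauchy-Schwarz)
  have hpq22 : Real.HolderConjugate 2 2 := Real.HolderConjugate.two_two
  have hmp : MemLp p (ENNReal.ofReal 2) volume := hpc.memLp_of_hasCompactSupport hpsupp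
  have hmq : MemLp q (ENNReal.ofReal 2) volume := hqc.memLp_of_hasCompactSupport hqsupp
  have hold := integral_mul_le_Lp_mul_Lq_of_nonneg hpq22 (ae_of_all _ hpnn) (ae_of_all _ hqnn) hmp hmq
  have hp2 : ∀ x : EuclideanSpace ℝ (Fin n), p x ^ (2:ℝ) = ‖x‖ ^ c * F x := by
    intro x
    rw [show ((2:ℝ)) = ((2:ℕ):ℝ) by norm_num, Real.rpow_natCast]
    simp only [hp]
    rw [mul_pow, ← Real.rpow_natCast (‖x‖ ^ (-(α + 1))) 2, ← Real.rpow_mul (norm_nonneg x)]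
    rw [show -(α + 1) * ((2:ℕ):ℝ) = c by rw [hc]; push_cast; ring]
  have hq2 : ∀ x : EuclideanSpace ℝ (Fin n),
      q x ^ (2:ℝ) = ‖x‖ ^ (-(2 * α)) * ‖fderiv ℝ f x‖ ^ 2 := by
    intro x
    rw [show ((2:ℝ)) = ((2:ℕ):ℝ) by norm_num, Real.rpow_natCast]
    simp only [hq]
    rw [mul_pow, ← Real.rpow_natCast (‖x‖ ^ (-α)) 2, ← Real.rpow_mul (norm_nonneg x)]
    congr 2
    ring
  simp only [hp2, hq2] at hold
  rw [← Real.sqrt_eq_rpow, ← Real.sqrt_eq_rpow] at hold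
  -- final assembly
  set A := ∫ x : EuclideanSpace ℝ (Fin n), ‖x‖ ^ c * F x with hA
  set B := ∫ x : EuclideanSpace ℝ (Fin n), ‖x‖ ^ (-(2 * α)) * ‖fderiv ℝ f x‖ ^ 2 with hB
  have hAnn : 0 ≤ A :=
    integral_nonneg fun x => mul_nonneg (Real.rpow_nonneg (norm_nonneg x) c) (by positivity)
  have hchain : |(n : ℝ) + c| * A ≤ 2 * (Real.sqrt A * Real.sqrt B) := by
    have h1 : |(n : ℝ) + c| * A
        = |∫ x : EuclideanSpace ℝ (Fin n), ‖x‖ ^ c * (2 * (inner ℝ (f x) (fderiv ℝ f x x) : ℝ))| := by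
      rw [hwI, abs_neg, abs_mul, abs_of_nonneg hAnn]
    rw [h1]
    calc |∫ x : EuclideanSpace ℝ (Fin n), ‖x‖ ^ c * (2 * (inner ℝ (f x) (fderiv ℝ f x x) : ℝ))|
        ≤ 2 * ∫ x : EuclideanSpace ℝ (Fin n), p x * q x := habs
      _ ≤ 2 * (Real.sqrt A * Real.sqrt B) := by linarith [hold]
  show |(n : ℝ) - 2 - 2 * α| / 2 * Real.sqrt A ≤ Real.sqrt B
  have hnc : |(n : ℝ) - 2 - 2 * α| = |(n : ℝ) + c| := by rw [hc]; ring_nf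
  rw [hnc]
  have hs : Real.sqrt A ^ 2 = A := Real.sq_sqrt hAnn
  have hsnn : 0 ≤ Real.sqrt A := Real.sqrt_nonneg A
  have htnn : 0 ≤ Real.sqrt B := Real.sqrt_nonneg B
  rcases eq_or_lt_of_le hsnn with hz | hz
  · rw [← hz]; simpa using htnn
  · nlinarith [abs_nonneg ((n : ℝ) + c)]
end

section
/- Let n ≥ 3 and let f ∈ C_0^∞(ℝⁿ\{0}) be complex-valued. Then, with E the Euler operator, ∫_{ℝⁿ} |Ef(x)|² dx = (n/2)² ∫_{ℝⁿ} |f(x)|² dx + ∫_{ℝⁿ} |Ef(x) + (n/2) f(x)|² dx. -/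
open MeasureTheory Real

open Metric in

private lemma key {n : ℕ} (g : EuclideanSpace ℝ (Fin n) → ℝ) (hg : ContDiff ℝ (⊤ : ℕ∞) g)
    (hs : HasCompactSupport g) :
    (∫ x : EuclideanSpace ℝ (Fin n), fderiv ℝ g x x)
      = -(n : ℝ) * ∫ x : EuclideanSpace ℝ (Fin n), g x := by
  obtain ⟨C, hC⟩ := (hs.fderiv ℝ).exists_bound_of_continuous (hg.continuous_fderiv (by simp))
  have hC0 : 0 ≤ C := le_trans (norm_nonneg _) (hC 0)
  obtain ⟨R₀, hR₀⟩ := hs.isBounded.subset_closedBall 0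
  set R : ℝ := max R₀ 1 with hRdef
  have hR1 : (1:ℝ) ≤ R := le_max_right _ _
  have hRpos : (0:ℝ) < R := lt_of_lt_of_le one_pos hR1
  have hsub : tsupport g ⊆ closedBall 0 R :=
    hR₀.trans (closedBall_subset_closedBall (le_max_left _ _))
  set bound : EuclideanSpace ℝ (Fin n) → ℝ :=
    (closedBall (0 : EuclideanSpace ℝ (Fin n)) (2*R)).indicator (fun _ => C * (2*R)) with hbd
  have h_diff : ∀ (x : EuclideanSpace ℝ (Fin n)) (t : ℝ),
      HasDerivAt (fun t : ℝ => g (t • x)) (fderiv ℝ g (t • x) x) t := by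
    intro x t
    have h1 : HasDerivAt (fun t : ℝ => t • x) ((1:ℝ) • x) t := (hasDerivAt_id t).smul_const x
    rw [one_smul] at h1
    exact ((hg.differentiable (by simp) (t • x)).hasFDerivAt).comp_hasDerivAt t h1
  have h_bound : ∀ (x : EuclideanSpace ℝ (Fin n)), ∀ t ∈ ball (1:ℝ) (1/2),
      ‖fderiv ℝ g (t • x) x‖ ≤ bound x := by
    intro x t ht
    rcases le_or_gt ‖x‖ (2*R) with hx | hx
    · have : bound x = C * (2*R) := by
        rw [hbd, Set.indicator_of_mem]
        simpa [mem_closedBall, dist_zero_right] using hx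
      rw [this]
      calc ‖fderiv ℝ g (t • x) x‖ ≤ ‖fderiv ℝ g (t • x)‖ * ‖x‖ :=
            (fderiv ℝ g (t • x)).le_opNorm x
        _ ≤ C * (2*R) := mul_le_mul (hC _) hx (norm_nonneg _) hC0
    · have ht' : (1:ℝ)/2 < |t| := by
        rw [mem_ball, Real.dist_eq] at ht
        cases abs_lt.1 ht with
        | intro h1 h2 => rw [abs_of_pos (by linarith)]; linarith
      have hnx : R < ‖t • x‖ := by
        rw [norm_smul]
        calc R = (1/2) * (2*R) := by ring
          _ < |t| * ‖x‖ := by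
            apply mul_lt_mul' ht'.le hx (by linarith) (by linarith)
      have hmem : t • x ∉ tsupport g := fun h => absurd (hsub h) (by
        simp only [mem_closedBall, dist_zero_right, not_le]; exact hnx)
      have : fderiv ℝ g (t • x) = 0 := by
        by_contra h
        exact hmem (support_fderiv_subset ℝ h)
      rw [this]
      have : bound x = 0 := by
        rw [hbd, Set.indicator_of_notMem]
        simp only [mem_closedBall, dist_zero_right, not_le]; exact hx
      simp [this]
  have hvol : volume (closedBall (0 : EuclideanSpace ℝ (Fin n)) (2*R)) < ⊤ :=
    measure_closedBall_lt_top
  have bound_int : Integrable bound := by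
    rw [hbd, integrable_indicator_iff measurableSet_closedBall]
    exact integrableOn_const hvol.ne
  have hder := hasDerivAt_integral_of_dominated_loc_of_deriv_le (F := fun t x => g (t • x))
      (F' := fun t x => fderiv ℝ g (t • x) x) (x₀ := (1:ℝ)) (bound := bound)
      (ball_mem_nhds 1 (half_pos one_pos))
      (Filter.Eventually.of_forall fun t =>
        (hg.continuous.comp (continuous_const.smul continuous_id)).aestronglyMeasurable)
      (by simpa using (hg.continuous.integrable_of_hasCompactSupport hs))
      (Continuous.aestronglyMeasurable (by
        exact ((hg.continuous_fderiv (by simp)).comp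
          ((continuous_const : Continuous fun _ : EuclideanSpace ℝ (Fin n) => (1:ℝ)).smul continuous_id)).clm_apply continuous_id))
      (Filter.Eventually.of_forall fun x t ht => h_bound x t ht)
      bound_int
      (Filter.Eventually.of_forall fun x t _ => h_diff x t)
  obtain ⟨-, hder⟩ := hder
  have hA : HasDerivAt (fun t : ℝ => ((t ^ n)⁻¹) * ∫ x : EuclideanSpace ℝ (Fin n), g x)
      (-(n : ℝ) * ∫ x : EuclideanSpace ℝ (Fin n), g x) 1 := by
    have h1 : HasDerivAt (fun t : ℝ => (t ^ n)⁻¹)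
        (-(↑n * 1 ^ (n - 1)) / (1 ^ n) ^ 2) 1 :=
      (hasDerivAt_pow n 1).inv (by simp)
    simpa using h1.mul_const _
  have heq : (fun t : ℝ => ∫ x : EuclideanSpace ℝ (Fin n), g (t • x))
      =ᶠ[nhds (1:ℝ)] (fun t : ℝ => ((t ^ n)⁻¹) * ∫ x : EuclideanSpace ℝ (Fin n), g x) := by
    filter_upwards [eventually_gt_nhds (show (0:ℝ) < 1 by norm_num)] with t ht
    rw [MeasureTheory.Measure.integral_comp_smul_of_nonneg volume g t (hR := ht.le)]
    simp [smul_eq_mul, finrank_euclideanSpace_fin]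
  have hder2 : HasDerivAt (fun t : ℝ => ∫ x : EuclideanSpace ℝ (Fin n), g (t • x))
      (-(n : ℝ) * ∫ x : EuclideanSpace ℝ (Fin n), g x) 1 :=
    hA.congr_of_eventuallyEq heq
  have := hder.unique hder2
  simpa using this

/-- The Euler operator `Ef(x) = (Df(x))(x)`. -/
noncomputable def eulerOp {n : ℕ} (f : EuclideanSpace ℝ (Fin n) → ℂ)
    (x : EuclideanSpace ℝ (Fin n)) : ℂ :=
  fderiv ℝ f x x

theorem stmt6 {n : ℕ} (hn : 3 ≤ n) (f : EuclideanSpace ℝ (Fin n) → ℂ)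
    (hf : ContDiff ℝ (⊤ : ℕ∞) f) (hsupp : HasCompactSupport f)
    (h0 : (0 : EuclideanSpace ℝ (Fin n)) ∉ tsupport f) :
    (∫ x : EuclideanSpace ℝ (Fin n), ‖eulerOp f x‖ ^ 2)
      = ((n : ℝ) / 2) ^ 2 * (∫ x : EuclideanSpace ℝ (Fin n), ‖f x‖ ^ 2)
        + ∫ x : EuclideanSpace ℝ (Fin n), ‖eulerOp f x + ((n : ℝ) / 2) • f x‖ ^ 2 := by
  set E := eulerOp f with hE
  have hfd : Differentiable ℝ f := hf.differentiable (by simp)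
  -- continuity of eulerOp
  have hEcont : Continuous E := by
    exact (hf.continuous_fderiv (by simp)).clm_apply continuous_id
  -- vanishing outside tsupport f
  have hfzero : ∀ x ∉ tsupport f, f x = 0 := fun x hx => image_eq_zero_of_notMem_tsupport hx
  have hEzero : ∀ x ∉ tsupport f, E x = 0 := by
    intro x hx
    have : fderiv ℝ f x = 0 := by
      by_contra h
      exact hx (support_fderiv_subset ℝ h)
    simp [hE, eulerOp, this]
  -- integrability of the three integrands
  have hccs : ∀ (φ : EuclideanSpace ℝ (Fin n) → ℝ), Continuous φ →
      (∀ x ∉ tsupport f, φ x = 0) → Integrable φ := by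
    intro φ hφ hz
    exact hφ.integrable_of_hasCompactSupport (HasCompactSupport.intro hsupp hz)
  set D : EuclideanSpace ℝ (Fin n) → ℝ :=
    fun x => (E x).re * (f x).re + (E x).im * (f x).im with hD
  have hintA : Integrable (fun x : EuclideanSpace ℝ (Fin n) => ‖E x‖ ^ 2) :=
    hccs _ (by fun_prop) (fun x hx => by simp [hEzero x hx])
  have hintB : Integrable (fun x : EuclideanSpace ℝ (Fin n) => ‖f x‖ ^ 2) :=
    hccs _ (by fun_prop) (fun x hx => by simp [hfzero x hx])
  have hintD : Integrable D :=
    hccs _ (by fun_prop) (fun x hx => by simp [hD, hEzero x hx, hfzero x hx])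
  -- the scaling identity applied to g = ‖f‖²
  set u : EuclideanSpace ℝ (Fin n) → ℝ := fun x => (f x).re with hu
  set v : EuclideanSpace ℝ (Fin n) → ℝ := fun x => (f x).im with hv
  set g : EuclideanSpace ℝ (Fin n) → ℝ := fun x => u x ^ 2 + v x ^ 2 with hg
  have hgnorm : ∀ x, g x = ‖f x‖ ^ 2 := by
    intro x
    rw [hg]
    simp only [hu, hv]
    rw [Complex.sq_norm, Complex.normSq_apply]
    ring
  have hgsmooth : ContDiff ℝ (⊤ : ℕ∞) g := by
    have h1 : ContDiff ℝ (⊤ : ℕ∞) u := Complex.reCLM.contDiff.comp hf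
    have h2 : ContDiff ℝ (⊤ : ℕ∞) v := Complex.imCLM.contDiff.comp hf
    exact (h1.pow 2).add (h2.pow 2)
  have hgsupp : HasCompactSupport g :=
    HasCompactSupport.intro hsupp (fun x hx => by simp [hg, hu, hv, hfzero x hx])
  have hgderiv : ∀ x, fderiv ℝ g x x = 2 * D x := by
    intro x
    have hfx : HasFDerivAt f (fderiv ℝ f x) x := (hfd x).hasFDerivAt
    have hux : HasFDerivAt u (Complex.reCLM.comp (fderiv ℝ f x)) x :=
      (Complex.reCLM.hasFDerivAt).comp x hfx
    have hvx : HasFDerivAt v (Complex.imCLM.comp (fderiv ℝ f x)) x :=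
      (Complex.imCLM.hasFDerivAt).comp x hfx
    have hgx : HasFDerivAt g
        ((u x • (Complex.reCLM.comp (fderiv ℝ f x)) + u x • (Complex.reCLM.comp (fderiv ℝ f x)))
          + (v x • (Complex.imCLM.comp (fderiv ℝ f x)) + v x • (Complex.imCLM.comp (fderiv ℝ f x)))) x := by
      have hgeq : g = fun x => u x * u x + v x * v x := by
        ext y; simp [hg, sq]
      rw [hgeq]
      exact (hux.mul hux).add (hvx.mul hvx)
    rw [hgx.fderiv]
    simp only [ContinuousLinearMap.add_apply, ContinuousLinearMap.smul_apply,
      ContinuousLinearMap.comp_apply, Complex.reCLM_apply, Complex.imCLM_apply,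
      smul_eq_mul, hD, hE, eulerOp, hu, hv]
    ring
  have hkey := key g hgsmooth hgsupp
  have hIntD : (∫ x : EuclideanSpace ℝ (Fin n), D x)
      = -((n : ℝ) / 2) * ∫ x : EuclideanSpace ℝ (Fin n), ‖f x‖ ^ 2 := by
    have h1 : (∫ x : EuclideanSpace ℝ (Fin n), fderiv ℝ g x x)
        = ∫ x : EuclideanSpace ℝ (Fin n), 2 * D x := by
      exact integral_congr_ae (Filter.Eventually.of_forall hgderiv)
    have h2 : (∫ x : EuclideanSpace ℝ (Fin n), g x)
        = ∫ x : EuclideanSpace ℝ (Fin n), ‖f x‖ ^ 2 :=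
      integral_congr_ae (Filter.Eventually.of_forall hgnorm)
    rw [h1, h2] at hkey
    rw [MeasureTheory.integral_const_mul] at hkey
    linarith
  -- pointwise expansion of the third integrand
  have hpt : ∀ x, ‖E x + ((n : ℝ) / 2) • f x‖ ^ 2
      = ‖E x‖ ^ 2 + ((n : ℝ) * D x + ((n : ℝ) / 2) ^ 2 * ‖f x‖ ^ 2) := by
    intro x
    have e1 : ∀ z : ℂ, ‖z‖ ^ 2 = z.re ^ 2 + z.im ^ 2 := by
      intro z
      rw [Complex.sq_norm, Complex.normSq_apply]; ring
    rw [e1, e1, e1]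
    simp only [Complex.add_re, Complex.add_im, Complex.real_smul, Complex.mul_re,
      Complex.mul_im, Complex.ofReal_re, Complex.ofReal_im, hD]
    ring
  have hIntC : (∫ x : EuclideanSpace ℝ (Fin n), ‖E x + ((n : ℝ) / 2) • f x‖ ^ 2)
      = (∫ x : EuclideanSpace ℝ (Fin n), ‖E x‖ ^ 2)
        + ((n : ℝ) * (∫ x : EuclideanSpace ℝ (Fin n), D x)
          + ((n : ℝ) / 2) ^ 2 * ∫ x : EuclideanSpace ℝ (Fin n), ‖f x‖ ^ 2) := by
    rw [integral_congr_ae (Filter.Eventually.of_forall hpt)]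
    have hint1 : Integrable (fun a : EuclideanSpace ℝ (Fin n) => (n : ℝ) * D a) :=
      hintD.const_mul _
    have hint2 : Integrable (fun a : EuclideanSpace ℝ (Fin n) => ((n : ℝ) / 2) ^ 2 * ‖f a‖ ^ 2) :=
      hintB.const_mul _
    have hint3 : Integrable (fun a : EuclideanSpace ℝ (Fin n) =>
        (n : ℝ) * D a + ((n : ℝ) / 2) ^ 2 * ‖f a‖ ^ 2) := hint1.add hint2
    rw [integral_add hintA hint3, integral_add hint1 hint2,
      MeasureTheory.integral_const_mul, MeasureTheory.integral_const_mul]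
  rw [hIntC, hIntD]
  ring
end

section
/- Let n ≥ 3 and let f ∈ C_0^∞(ℝⁿ\{0}) be complex-valued. Then, with Rf the Euclidean radial derivative, ∫_{ℝⁿ} |Rf(x)|² dx = ((n−2)/2)² ∫_{ℝⁿ} |f(x)|²/‖x‖² dx + ∫_{ℝⁿ} |Rf(x) + ((n−2)/2) f(x)/‖x‖|² dx. -/
open MeasureTheory Real
open scoped RealInnerProductSpace ContDiff

/-- The Euclidean radial derivative `Rf(x) = (Df(x))(x) / ‖x‖`. -/
noncomputable def radDeriv {n : ℕ} (f : EuclideanSpace ℝ (Fin n) → ℂ)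
    (x : EuclideanSpace ℝ (Fin n)) : ℂ :=
  fderiv ℝ f x x / (‖x‖ : ℂ)

section Aux

variable {n : ℕ}
local notation "E" => EuclideanSpace ℝ (Fin n)

private lemma integrable_of_supp {f : E → ℂ} (hsupp : HasCompactSupport f)
    {g : E → ℝ} (hg : Continuous g) (h : Function.support g ⊆ tsupport f) :
    Integrable g := by
  apply hg.integrable_of_hasCompactSupport
  exact HasCompactSupport.of_support_subset_isCompact hsupp h

private lemma hasFDerivAt_phi (i : Fin n) (x : E) (hx : x ≠ 0) :
    HasFDerivAt (fun y : E => y i * (⟪y, y⟫)⁻¹)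
      (((⟪x, x⟫)⁻¹ • (EuclideanSpace.proj i : E →L[ℝ] ℝ)) +
        ((-(2 * x i) * ((⟪x, x⟫)⁻¹)^2) • (innerSL ℝ x : E →L[ℝ] ℝ))) x := by
  have hxx : ⟪x, x⟫ ≠ (0:ℝ) := inner_self_ne_zero.2 hx
  have h1 : HasFDerivAt (fun t : E => ⟪t, t⟫)
      ((fderivInnerCLM ℝ (x, x)).comp
        ((ContinuousLinearMap.id ℝ _).prod (ContinuousLinearMap.id ℝ _))) x := by
    simpa using (hasFDerivAt_id x).inner ℝ (hasFDerivAt_id x)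
  have h2 := HasDerivAt.comp_hasFDerivAt (f := fun t : E => ⟪t, t⟫) x
    (hasDerivAt_inv hxx) h1
  have hproj := (EuclideanSpace.proj i : E →L[ℝ] ℝ).hasFDerivAt (x := x)
  have h3 := hproj.mul h2
  refine HasFDerivAt.congr_fderiv (f := fun y : E => y i * (⟪y, y⟫)⁻¹) h3 ?_
  ext v
  simp [real_inner_comm, mul_comm]
  ring

private lemma sum_coord_single (x : E) : ∑ i, x i • EuclideanSpace.single i (1:ℝ) = x := by
  have := (EuclideanSpace.basisFun (Fin n) ℝ).sum_repr x
  simpa [EuclideanSpace.basisFun_apply, EuclideanSpace.basisFun_repr] using this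

private lemma cont_div_aux {f : E → ℂ} (h0 : (0:E) ∉ tsupport f) {g q : E → ℝ}
    (hg : Continuous g) (hq : Continuous q) (hq0 : ∀ x : E, x ≠ 0 → q x ≠ 0)
    (hgsupp : ∀ x : E, x ∉ tsupport f → g x = 0) :
    Continuous fun x : E => g x / q x := by
  rw [continuous_iff_continuousAt]
  intro x
  by_cases hx : x = 0
  · subst hx
    have hev : (fun _ : E => (0:ℝ)) =ᶠ[nhds (0:E)] fun x => g x / q x := by
      filter_upwards [(isClosed_tsupport f).isOpen_compl.mem_nhds h0] with y hy
      simp [hgsupp y hy]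
    exact continuousAt_const.congr hev
  · exact (hg.continuousAt).div hq.continuousAt (hq0 x hx)

private lemma key_ibp (f : E → ℂ)
    (hf : ContDiff ℝ (⊤ : ℕ∞) f) (hsupp : HasCompactSupport f)
    (h0 : (0 : E) ∉ tsupport f) :
    ∫ x : E, fderiv ℝ (fun y => (⟪f y, f y⟫:ℝ)) x x * (⟪x, x⟫)⁻¹
      = -((n:ℝ) - 2) * ∫ x : E, (⟪f x, f x⟫:ℝ) * (⟪x, x⟫)⁻¹ := by
  set h : E → ℝ := fun y => ⟪f y, f y⟫ with hh_def
  have hh : ContDiff ℝ (⊤ : ℕ∞) h := hf.inner ℝ hf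
  have hh' : ContDiff ℝ ∞ h := hh.of_le (by simp)
  -- support facts
  have hsupp_h : Function.support h ⊆ tsupport f := fun x hx => by
    refine subset_tsupport f ?_
    intro hfx
    apply hx
    simp [hh_def, Function.mem_support, hfx]
  have htsupp_h : tsupport h ⊆ tsupport f :=
    closure_minimal hsupp_h (isClosed_tsupport f)
  have hDh0 : ∀ x, x ∉ tsupport f → fderiv ℝ h x = 0 := by
    intro x hx
    by_contra hc
    exact hx (htsupp_h (support_fderiv_subset ℝ (Function.mem_support.2 hc)))
  have hf0 : ∀ x, x ∉ tsupport f → h x = 0 := by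
    intro x hx
    by_contra hc
    exact hx (hsupp_h (Function.mem_support.2 hc))
  -- epsilon
  obtain ⟨ε, hε, hεsupp⟩ : ∃ ε > 0, ∀ x ∈ tsupport f, ε ≤ ‖x‖ := by
    have ho : IsOpen (tsupport f)ᶜ := (isClosed_tsupport f).isOpen_compl
    obtain ⟨ε, hε, hb⟩ := Metric.isOpen_iff.1 ho 0 (Set.mem_compl h0)
    refine ⟨ε, hε, fun x hx => ?_⟩
    by_contra hlt
    push_neg at hlt
    exact (hb (by simpa [Metric.mem_ball] using hlt)) hx
  -- cutoff
  set b : ContDiffBump (0:E) := ⟨ε/3, ε/2, by positivity, by linarith⟩ with hb_def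
  set ψ : E → ℝ := fun y => 1 - b y with hψ_def
  have hψ_smooth : ContDiff ℝ ∞ ψ := contDiff_const.sub b.contDiff
  have hψ_one : ∀ y : E, ε/2 ≤ ‖y‖ → ψ y = 1 := by
    intro y hy
    have : b y = 0 := b.zero_of_le_dist (by simpa [hb_def, dist_zero_right] using hy)
    simp [hψ_def, this]
  have hψ_zero : ∀ y : E, ‖y‖ ≤ ε/3 → ψ y = 0 := by
    intro y hy
    have : b y = 1 := b.one_of_mem_closedBall
      (by simpa [hb_def, Metric.mem_closedBall, dist_zero_right] using hy)
    simp [hψ_def, this]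
  -- vector field components
  set u : Fin n → E → ℝ := fun i y => ψ y * (y i * (⟪y, y⟫)⁻¹) with hu_def
  set e : Fin n → E := fun i => EuclideanSpace.single i 1 with he_def
  have hu_smooth : ∀ i, ContDiff ℝ ∞ (u i) := by
    intro i
    rw [contDiff_iff_contDiffAt]
    intro x
    rcases lt_or_ge ‖x‖ (ε/3) with hlt | hge
    · have hev : u i =ᶠ[nhds x] (fun _ => 0) := by
        filter_upwards [Metric.ball_mem_nhds x (show (0:ℝ) < ε/3 - ‖x‖ by linarith)] with y hy
        have hyn : ‖y‖ ≤ ε/3 := by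
          have h2 : ‖y - x‖ < ε/3 - ‖x‖ := by simpa [dist_eq_norm] using hy
          calc ‖y‖ = ‖x + (y - x)‖ := by rw [show x + (y - x) = y from by abel]
          _ ≤ ‖x‖ + ‖y - x‖ := norm_add_le _ _
          _ ≤ ε/3 := by linarith
        simp [hu_def, hψ_zero y hyn]
      exact (contDiffAt_const (c := (0:ℝ))).congr_of_eventuallyEq hev
    · have hx : x ≠ 0 := by
        intro hx0
        rw [hx0, norm_zero] at hge
        linarith
      have hxx : ⟪x, x⟫ ≠ (0:ℝ) := inner_self_ne_zero.2 hx
      exact (hψ_smooth.contDiffAt).mul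
        (((EuclideanSpace.proj i).contDiff.contDiffAt).mul
          (((contDiff_id.inner ℝ contDiff_id).contDiffAt).inv hxx))
  have hu_diff : ∀ i, Differentiable ℝ (u i) :=
    fun i => (hu_smooth i).differentiable (by simp)
  have hh_diff : Differentiable ℝ h := hh'.differentiable (by simp)
  -- fderiv of u on the outer region
  have hufd : ∀ i, ∀ x : E, ε/2 < ‖x‖ → fderiv ℝ (u i) x =
      (((⟪x, x⟫)⁻¹ • (EuclideanSpace.proj i : E →L[ℝ] ℝ)) +
        ((-(2 * x i) * ((⟪x, x⟫)⁻¹)^2) • (innerSL ℝ x : E →L[ℝ] ℝ))) := by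
    intro i x hx
    have hx0 : x ≠ 0 := by
      intro hx0; rw [hx0, norm_zero] at hx; linarith
    have hopen : IsOpen {y : E | ε/2 < ‖y‖} := isOpen_lt continuous_const continuous_norm
    have heq : u i =ᶠ[nhds x] fun y => y i * (⟪y, y⟫)⁻¹ := by
      filter_upwards [hopen.mem_nhds hx] with y hy
      simp [hu_def, hψ_one y (le_of_lt hy)]
    rw [heq.fderiv_eq, (hasFDerivAt_phi i x hx0).fderiv]
  -- sum of divergence terms
  have hinner_single : ∀ (x : E) (i : Fin n), (⟪x, e i⟫:ℝ) = x i := by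
    intro x i
    simp [he_def, PiLp.inner_apply, EuclideanSpace.single_apply]
  have hsum_div : ∀ x : E, ε/2 < ‖x‖ →
      ∑ i, fderiv ℝ (u i) x (e i) = ((n:ℝ) - 2) * (⟪x, x⟫)⁻¹ := by
    intro x hx
    have hx0 : x ≠ 0 := by
      intro hx0; rw [hx0, norm_zero] at hx; linarith
    have hxx : ⟪x, x⟫ ≠ (0:ℝ) := inner_self_ne_zero.2 hx0
    have hself : (⟪x, x⟫:ℝ) = ∑ i, x i * x i := by
      simp only [PiLp.inner_apply, RCLike.inner_apply, conj_trivial]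
    calc ∑ i, fderiv ℝ (u i) x (e i)
        = ∑ i, ((⟪x, x⟫:ℝ)⁻¹ + (-(2 * x i) * ((⟪x, x⟫:ℝ)⁻¹)^2) * x i) := by
          refine Finset.sum_congr rfl fun i _ => ?_
          rw [hufd i x hx]
          simp only [ContinuousLinearMap.add_apply, ContinuousLinearMap.smul_apply,
            innerSL_apply_apply, PiLp.proj_apply, smul_eq_mul]
          rw [hinner_single x i]
          have : (e i) i = 1 := by simp [he_def, EuclideanSpace.single_apply]
          rw [this, mul_one]
      _ = ((n:ℝ) - 2) * (⟪x, x⟫)⁻¹ := by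
          rw [Finset.sum_add_distrib, Finset.sum_const, Finset.card_univ, Fintype.card_fin]
          have hs2 : ∑ i, (-(2 * x i) * ((⟪x, x⟫:ℝ)⁻¹)^2) * x i
              = (-2 * ((⟪x, x⟫:ℝ)⁻¹)^2) * ∑ i, x i * x i := by
            rw [Finset.mul_sum]
            exact Finset.sum_congr rfl fun i _ => by ring
          rw [hs2, ← hself, nsmul_eq_mul]
          have h1 : (-2 * ((⟪x, x⟫:ℝ)⁻¹)^2) * ⟪x, x⟫ = -2 * (⟪x, x⟫:ℝ)⁻¹ := by
            rw [sq]
            rw [mul_assoc, mul_assoc, inv_mul_cancel₀ hxx, mul_one]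
          rw [h1]
          ring
  -- pointwise identity 1
  have hpt1 : ∀ x : E, ∑ i, u i x * fderiv ℝ h x (e i) = fderiv ℝ h x x * (⟪x, x⟫)⁻¹ := by
    intro x
    by_cases hx : x ∈ tsupport f
    · have hψx : ψ x = 1 := hψ_one x (le_trans (by linarith) (hεsupp x hx))
      have hxd : ∑ i, x i • e i = x := sum_coord_single x
      calc ∑ i, u i x * fderiv ℝ h x (e i)
          = ∑ i, (x i * fderiv ℝ h x (e i)) * (⟪x, x⟫)⁻¹ := by
            refine Finset.sum_congr rfl fun i _ => ?_
            simp [hu_def, hψx]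
            ring
        _ = (∑ i, x i * fderiv ℝ h x (e i)) * (⟪x, x⟫)⁻¹ := by rw [Finset.sum_mul]
        _ = fderiv ℝ h x x * (⟪x, x⟫)⁻¹ := by
            congr 1
            have hx2 : (fderiv ℝ h x) x = (fderiv ℝ h x) (∑ i, x i • e i) := by rw [hxd]
            rw [hx2, map_sum]
            exact Finset.sum_congr rfl fun i _ => by
              rw [ContinuousLinearMap.map_smul, smul_eq_mul]
    · simp [hDh0 x hx]
  -- pointwise identity 2
  have hpt2 : ∀ x : E, ∑ i, fderiv ℝ (u i) x (e i) * h x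
      = (((n:ℝ) - 2) * (⟪x, x⟫)⁻¹) * h x := by
    intro x
    by_cases hx : x ∈ tsupport f
    · rw [← Finset.sum_mul, hsum_div x (lt_of_lt_of_le (by linarith) (hεsupp x hx))]
    · simp [hf0 x hx]
  -- continuity
  have hcont_Dh : Continuous fun x : E => fderiv ℝ h x := hh.continuous_fderiv (by simp)
  have hcont_Dhe : ∀ v : E, Continuous fun x : E => fderiv ℝ h x v :=
    fun v => hcont_Dh.clm_apply continuous_const
  have hcont_u : ∀ i, Continuous (u i) := fun i => (hu_smooth i).continuous
  have hcont_Du : ∀ i, Continuous fun x : E => fderiv ℝ (u i) x (e i) :=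
    fun i => ((hu_smooth i).continuous_fderiv (by simp)).clm_apply
      continuous_const
  have hcont_h : Continuous h := hh.continuous
  -- integrability
  have hint1 : ∀ i, Integrable fun x : E => u i x * fderiv ℝ h x (e i) := by
    intro i
    refine integrable_of_supp hsupp ((hcont_u i).mul (hcont_Dhe (e i))) ?_
    intro x hx
    by_contra hc
    apply hx
    simp [hDh0 x hc]
  have hint2 : ∀ i, Integrable fun x : E => fderiv ℝ (u i) x (e i) * h x := by
    intro i
    refine integrable_of_supp hsupp ((hcont_Du i).mul hcont_h) ?_
    intro x hx
    by_contra hc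
    apply hx
    simp [hf0 x hc]
  have hint3 : ∀ i, Integrable fun x : E => u i x * h x := by
    intro i
    refine integrable_of_supp hsupp ((hcont_u i).mul hcont_h) ?_
    intro x hx
    by_contra hc
    apply hx
    simp [hf0 x hc]
  -- integration by parts in each direction
  have hibp : ∀ i, ∫ x : E, u i x * fderiv ℝ h x (e i) = -∫ x : E, fderiv ℝ (u i) x (e i) * h x :=
    fun i => integral_mul_fderiv_eq_neg_fderiv_mul_of_integrable (hint2 i) (hint1 i) (hint3 i)
      (fun x _ => hu_diff i x) (fun x _ => hh_diff x)
  -- assemble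
  calc ∫ x : E, fderiv ℝ h x x * (⟪x, x⟫)⁻¹
      = ∫ x : E, ∑ i, u i x * fderiv ℝ h x (e i) := by
        exact integral_congr_ae (Filter.Eventually.of_forall fun x => (hpt1 x).symm)
    _ = ∑ i, ∫ x : E, u i x * fderiv ℝ h x (e i) :=
        integral_finset_sum _ (fun i _ => hint1 i)
    _ = ∑ i, -∫ x : E, fderiv ℝ (u i) x (e i) * h x := Finset.sum_congr rfl fun i _ => hibp i
    _ = -∑ i, ∫ x : E, fderiv ℝ (u i) x (e i) * h x := by rw [Finset.sum_neg_distrib]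
    _ = -∫ x : E, ∑ i, fderiv ℝ (u i) x (e i) * h x := by
        rw [integral_finset_sum _ (fun i _ => hint2 i)]
    _ = -∫ x : E, (((n:ℝ) - 2) * (⟪x, x⟫)⁻¹) * h x := by
        congr 1
        exact integral_congr_ae (Filter.Eventually.of_forall fun x => hpt2 x)
    _ = -((n:ℝ) - 2) * ∫ x : E, (⟪f x, f x⟫:ℝ) * (⟪x, x⟫)⁻¹ := by
        rw [show (fun x : E => (((n:ℝ) - 2) * (⟪x, x⟫)⁻¹) * h x)
            = fun x : E => ((n:ℝ) - 2) * ((⟪f x, f x⟫:ℝ) * (⟪x, x⟫)⁻¹) from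
          funext fun x => by simp [hh_def]; ring]
        rw [integral_const_mul, neg_mul]

end Aux

theorem stmt9 {n : ℕ} (hn : 3 ≤ n) (f : EuclideanSpace ℝ (Fin n) → ℂ)
    (hf : ContDiff ℝ (⊤ : ℕ∞) f) (hsupp : HasCompactSupport f)
    (h0 : (0 : EuclideanSpace ℝ (Fin n)) ∉ tsupport f) :
    (∫ x : EuclideanSpace ℝ (Fin n), ‖radDeriv f x‖ ^ 2)
      = (((n : ℝ) - 2) / 2) ^ 2 *
          (∫ x : EuclideanSpace ℝ (Fin n), ‖f x‖ ^ 2 / ‖x‖ ^ 2)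
        + ∫ x : EuclideanSpace ℝ (Fin n),
            ‖radDeriv f x + ((((n : ℝ) - 2) / 2) / ‖x‖) • f x‖ ^ 2 := by
  have hfc : Continuous f := hf.continuous
  have hfd0 : ∀ x, x ∉ tsupport f → fderiv ℝ f x = 0 := by
    intro x hx
    by_contra hc
    exact hx (support_fderiv_subset ℝ (Function.mem_support.2 hc))
  have hf0 : ∀ x, x ∉ tsupport f → f x = 0 := fun x hx => image_eq_zero_of_notMem_tsupport hx
  have hR0 : ∀ x, x ∉ tsupport f → radDeriv f x = 0 := by
    intro x hx
    simp [radDeriv, hfd0 x hx]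
  have hRf_cont : Continuous (radDeriv f) := by
    rw [continuous_iff_continuousAt]
    intro x
    by_cases hx : x = 0
    · subst hx
      have hev : (fun _ : EuclideanSpace ℝ (Fin n) => (0:ℂ)) =ᶠ[nhds 0] radDeriv f := by
        filter_upwards [(isClosed_tsupport f).isOpen_compl.mem_nhds h0] with y hy
        exact (hR0 y hy).symm
      exact continuousAt_const.congr hev
    · refine ContinuousAt.div ?_ ?_ ?_
      · exact (((hf.continuous_fderiv (by simp)).clm_apply continuous_id)).continuousAt
      · exact (Complex.continuous_ofReal.comp continuous_norm).continuousAt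
      · simpa using norm_ne_zero_iff.2 hx
  -- continuity of the three integrands
  have hcont1 : Continuous fun x : EuclideanSpace ℝ (Fin n) => ‖radDeriv f x‖^2 :=
    (hRf_cont.norm).pow 2
  have hcont2 : Continuous fun x : EuclideanSpace ℝ (Fin n) => ‖f x‖^2/‖x‖^2 :=
    cont_div_aux h0 ((hfc.norm).pow 2) (continuous_norm.pow 2)
      (fun x hx => pow_ne_zero 2 (norm_ne_zero_iff.2 hx))
      (fun x hx => by simp [hf0 x hx])
  have hcont3 : Continuous fun x : EuclideanSpace ℝ (Fin n) =>
      (⟪radDeriv f x, f x⟫:ℝ)/‖x‖ :=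
    cont_div_aux h0 (hRf_cont.inner hfc) continuous_norm
      (fun x hx => norm_ne_zero_iff.2 hx)
      (fun x hx => by simp [hf0 x hx])
  -- integrability
  have hint1 : Integrable fun x : EuclideanSpace ℝ (Fin n) => ‖radDeriv f x‖^2 := by
    refine integrable_of_supp hsupp hcont1 ?_
    intro x hx
    by_contra hc
    apply hx
    simp [hR0 x hc]
  have hint2 : Integrable fun x : EuclideanSpace ℝ (Fin n) => ‖f x‖^2/‖x‖^2 := by
    refine integrable_of_supp hsupp hcont2 ?_
    intro x hx
    by_contra hc
    apply hx
    simp [hf0 x hc]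
  have hint3 : Integrable fun x : EuclideanSpace ℝ (Fin n) =>
      (⟪radDeriv f x, f x⟫:ℝ)/‖x‖ := by
    refine integrable_of_supp hsupp hcont3 ?_
    intro x hx
    by_contra hc
    apply hx
    simp [hf0 x hc]
  have hint3' : Integrable fun x : EuclideanSpace ℝ (Fin n) =>
      2*(((n:ℝ) - 2)/2)*((⟪radDeriv f x, f x⟫:ℝ)/‖x‖) := hint3.const_mul _
  have hint2' : Integrable fun x : EuclideanSpace ℝ (Fin n) =>
      (((n:ℝ) - 2)/2)^2*(‖f x‖^2/‖x‖^2) := hint2.const_mul _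
  -- pointwise expansion of the square
  have hexp : ∀ x : EuclideanSpace ℝ (Fin n),
      ‖radDeriv f x + ((((n:ℝ) - 2)/2)/‖x‖) • f x‖^2
        = ‖radDeriv f x‖^2 + 2*(((n:ℝ) - 2)/2)*((⟪radDeriv f x, f x⟫:ℝ)/‖x‖)
          + (((n:ℝ) - 2)/2)^2*(‖f x‖^2/‖x‖^2) := by
    intro x
    rw [norm_add_sq_real, real_inner_smul_right, norm_smul]
    have h1 : ‖(((n:ℝ) - 2)/2) / ‖x‖‖ ^ 2 = ((((n:ℝ) - 2)/2)/‖x‖)^2 := by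
      rw [Real.norm_eq_abs, sq_abs]
    rw [mul_pow, h1]
    rw [div_pow]
    ring_nf
  -- split the third integral
  have hsplit : (∫ x : EuclideanSpace ℝ (Fin n),
        ‖radDeriv f x + ((((n:ℝ) - 2)/2)/‖x‖) • f x‖^2)
      = (∫ x : EuclideanSpace ℝ (Fin n), ‖radDeriv f x‖^2)
        + 2*(((n:ℝ) - 2)/2)*(∫ x : EuclideanSpace ℝ (Fin n), (⟪radDeriv f x, f x⟫:ℝ)/‖x‖)
        + (((n:ℝ) - 2)/2)^2*(∫ x : EuclideanSpace ℝ (Fin n), ‖f x‖^2/‖x‖^2) := by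
    calc (∫ x : EuclideanSpace ℝ (Fin n), ‖radDeriv f x + ((((n:ℝ) - 2)/2)/‖x‖) • f x‖^2)
        = ∫ x : EuclideanSpace ℝ (Fin n), (‖radDeriv f x‖^2
            + 2*(((n:ℝ) - 2)/2)*((⟪radDeriv f x, f x⟫:ℝ)/‖x‖)
            + (((n:ℝ) - 2)/2)^2*(‖f x‖^2/‖x‖^2)) :=
          integral_congr_ae (Filter.Eventually.of_forall hexp)
      _ = _ := by
          have hint13 : Integrable (fun x : EuclideanSpace ℝ (Fin n) =>
              ‖radDeriv f x‖^2 + 2*(((n:ℝ) - 2)/2)*((⟪radDeriv f x, f x⟫:ℝ)/‖x‖)) :=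
            hint1.add hint3'
          rw [integral_add hint13 hint2', integral_add hint1 hint3',
            integral_const_mul, integral_const_mul]
  -- the key identity
  have hkey := key_ibp f hf hsupp h0
  have hptB : ∀ x : EuclideanSpace ℝ (Fin n),
      (⟪f x, f x⟫:ℝ) * (⟪x, x⟫)⁻¹ = ‖f x‖^2/‖x‖^2 := by
    intro x
    rw [real_inner_self_eq_norm_sq, real_inner_self_eq_norm_sq, div_eq_mul_inv]
  have hptC : ∀ x : EuclideanSpace ℝ (Fin n),
      fderiv ℝ (fun y => (⟪f y, f y⟫:ℝ)) x x * (⟪x, x⟫)⁻¹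
        = 2 * ((⟪radDeriv f x, f x⟫:ℝ)/‖x‖) := by
    intro x
    have hd := (hf.differentiable (by simp) x).hasFDerivAt
    have hDh : fderiv ℝ (fun y => (⟪f y, f y⟫:ℝ)) x x = 2 * ⟪f x, fderiv ℝ f x x⟫ := by
      rw [(hd.inner ℝ hd).fderiv]
      simp [real_inner_comm]
      ring
    have hsm : radDeriv f x = (‖x‖⁻¹ : ℝ) • (fderiv ℝ f x x) := by
      rw [radDeriv, div_eq_inv_mul]
      rw [Complex.real_smul, Complex.ofReal_inv]
    rw [hDh, hsm, real_inner_smul_left, real_inner_self_eq_norm_sq]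
    rw [real_inner_comm]
    rw [sq, mul_inv]
    ring
  have h2C : 2 * (∫ x : EuclideanSpace ℝ (Fin n), (⟪radDeriv f x, f x⟫:ℝ)/‖x‖)
      = -((n:ℝ) - 2) * ∫ x : EuclideanSpace ℝ (Fin n), ‖f x‖^2/‖x‖^2 := by
    calc 2 * (∫ x : EuclideanSpace ℝ (Fin n), (⟪radDeriv f x, f x⟫:ℝ)/‖x‖)
        = ∫ x : EuclideanSpace ℝ (Fin n), 2 * ((⟪radDeriv f x, f x⟫:ℝ)/‖x‖) :=
          (integral_const_mul 2 _).symm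
      _ = ∫ x : EuclideanSpace ℝ (Fin n),
            fderiv ℝ (fun y => (⟪f y, f y⟫:ℝ)) x x * (⟪x, x⟫)⁻¹ :=
          integral_congr_ae (Filter.Eventually.of_forall fun x => (hptC x).symm)
      _ = -((n:ℝ) - 2) * ∫ x : EuclideanSpace ℝ (Fin n), (⟪f x, f x⟫:ℝ) * (⟪x, x⟫)⁻¹ := hkey
      _ = -((n:ℝ) - 2) * ∫ x : EuclideanSpace ℝ (Fin n), ‖f x‖^2/‖x‖^2 := by
          congr 1
          exact integral_congr_ae (Filter.Eventually.of_forall fun x => hptB x)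
  rw [hsplit]
  linear_combination (-(((n:ℝ) - 2)/2)) * h2C
end

section
/- Let n ≥ 3 and let f ∈ C_0^∞(ℝⁿ\{0}) be complex-valued. Then the classical Hardy inequality holds: (∫_{ℝⁿ} |f(x)|²/‖x‖² dx)^{1/2} ≤ (2/(n−2)) · (∫_{ℝⁿ} |∇f(x)|² dx)^{1/2}. -/
open MeasureTheory Real

section Aux

variable {E : Type*} [NormedAddCommGroup E] [NormedSpace ℝ E]
  [MeasurableSpace E] [BorelSpace E] [FiniteDimensional ℝ E]

/-- The integral of a directional derivative of a compactly supported `C¹` function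
with respect to an additive Haar measure vanishes. -/
theorem aux_integral_fderiv_eq_zero (μ : Measure E) [μ.IsAddHaarMeasure]
    (g : E → ℝ) (hg : ContDiff ℝ 1 g) (hgs : HasCompactSupport g) (v : E) :
    ∫ x, fderiv ℝ g x v ∂μ = 0 := by
  have hgd : Differentiable ℝ g := hg.differentiable one_ne_zero
  obtain ⟨x₀, hx₀⟩ : ∃ x₀, ∀ y, ‖fderiv ℝ g y‖ ≤ ‖fderiv ℝ g x₀‖ :=
    ((hg.continuous_fderiv one_ne_zero).norm).exists_forall_ge_of_hasCompactSupport
      ((hgs.fderiv ℝ).comp_left norm_zero)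
  have hlip : LipschitzWith ‖fderiv ℝ g x₀‖₊ g :=
    lipschitzWith_of_nnnorm_fderiv_le hgd (fun x => by
      have := hx₀ x
      exact_mod_cast this)
  have hone : LipschitzWith 0 (fun _ : E => (1 : ℝ)) := LipschitzWith.const' 1
  have key := LipschitzWith.integral_lineDeriv_mul_eq (μ := μ) hone hlip hgs (-v)
  have h1 : ∀ x : E, lineDeriv ℝ (fun _ : E => (1 : ℝ)) x (-v) = 0 := by
    intro x
    rw [(differentiableAt_const (1 : ℝ)).lineDeriv_eq_fderiv, fderiv_const_apply]
    rfl
  have h2 : ∀ x : E, lineDeriv ℝ g x (- -v) = fderiv ℝ g x v := by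
    intro x
    rw [neg_neg, (hgd x).lineDeriv_eq_fderiv]
  simp only [h1, h2, zero_mul, integral_zero, mul_one] at key
  exact key.symm

end Aux

open Module in
theorem hardy_general {E : Type*} [NormedAddCommGroup E] [InnerProductSpace ℝ E]
    [MeasurableSpace E] [BorelSpace E] [FiniteDimensional ℝ E]
    (μ : Measure E) [μ.IsAddHaarMeasure]
    (hn : 3 ≤ finrank ℝ E) (f : E → ℂ)
    (hf : ContDiff ℝ (⊤ : ℕ∞) f) (hsupp : HasCompactSupport f)
    (h0 : (0 : E) ∉ tsupport f) :
    Real.sqrt (∫ x, ‖f x‖ ^ 2 / ‖x‖ ^ 2 ∂μ)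
      ≤ (2 / ((finrank ℝ E : ℝ) - 2)) * Real.sqrt (∫ x, ‖fderiv ℝ f x‖ ^ 2 ∂μ) := by
  set m := finrank ℝ E with hm
  have hm3 : (3 : ℝ) ≤ (m : ℝ) := by exact_mod_cast hn
  have hm2 : (0 : ℝ) < (m : ℝ) - 2 := by linarith
  have hfd : Differentiable ℝ f := hf.differentiable (by simp)
  set φ : E → ℝ := fun x => ‖f x‖ ^ 2 with hφdef
  have hφcd : ContDiff ℝ (⊤ : ℕ∞) φ := hf.norm_sq ℂ
  have hφd : Differentiable ℝ φ := hφcd.differentiable (by simp)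
  have hUopen : IsOpen (tsupport f)ᶜ := (isClosed_tsupport f).isOpen_compl
  have hφ0 : ∀ x ∉ tsupport f, φ x = 0 := fun x hx => by
    simp [hφdef, image_eq_zero_of_notMem_tsupport hx]
  -- vanishing of derivatives off the support
  have hfderiv_van : ∀ (h : E → ℝ), (∀ y ∉ tsupport f, h y = 0) →
      ∀ y ∉ tsupport f, fderiv ℝ h y = 0 := by
    intro h hvan y hy
    have hev : h =ᶠ[nhds y] (fun _ => (0 : ℝ)) := by
      filter_upwards [hUopen.mem_nhds hy] with z hz using hvan z hz
    rw [hev.fderiv_eq]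
    exact fderiv_const_apply 0
  have hDφ0 : ∀ x ∉ tsupport f, fderiv ℝ φ x = 0 := hfderiv_van φ hφ0
  -- continuity helper
  have cont_of : ∀ (h : E → ℝ), (∀ y ∉ tsupport f, h y = 0) →
      (∀ x : E, x ≠ 0 → ContinuousAt h x) → Continuous h := by
    intro h hvan hcont
    rw [continuous_iff_continuousAt]
    intro x
    by_cases hx : x = 0
    · subst hx
      have hev : h =ᶠ[nhds (0 : E)] (fun _ => (0 : ℝ)) := by
        filter_upwards [hUopen.mem_nhds h0] with y hy using hvan y hy
      exact (continuousAt_const (y := (0 : ℝ))).congr hev.symm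
    · exact hcont x hx
  -- derivative formula and bound for φ
  have hDφ_eq : ∀ x, fderiv ℝ φ x = 2 • (innerSL ℝ (f x)).comp (fderiv ℝ f x) :=
    fun x => ((hfd x).hasFDerivAt.norm_sq).fderiv
  have hDφ_le : ∀ x, ‖fderiv ℝ φ x‖ ≤ 2 * (‖f x‖ * ‖fderiv ℝ f x‖) := by
    intro x
    rw [hDφ_eq x, two_smul]
    have hcomp : ‖(innerSL ℝ (f x)).comp (fderiv ℝ f x)‖ ≤ ‖f x‖ * ‖fderiv ℝ f x‖ := by
      refine (ContinuousLinearMap.opNorm_comp_le _ _).trans ?_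
      rw [innerSL_apply_norm]
    calc ‖(innerSL ℝ (f x)).comp (fderiv ℝ f x) + (innerSL ℝ (f x)).comp (fderiv ℝ f x)‖
        ≤ ‖(innerSL ℝ (f x)).comp (fderiv ℝ f x)‖ + ‖(innerSL ℝ (f x)).comp (fderiv ℝ f x)‖ :=
          norm_add_le _ _
      _ ≤ 2 * (‖f x‖ * ‖fderiv ℝ f x‖) := by linarith
  -- the pieces
  set I1 : E → ℝ := fun x => φ x / ‖x‖ ^ 2 with hI1def
  set I2 : E → ℝ := fun x => fderiv ℝ φ x x / ‖x‖ ^ 2 with hI2def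
  have hI1van : ∀ y ∉ tsupport f, I1 y = 0 := fun y hy => by simp [hI1def, hφ0 y hy]
  have hI2van : ∀ y ∉ tsupport f, I2 y = 0 := fun y hy => by simp [hI2def, hDφ0 y hy]
  have hNcont : Continuous (fun y : E => ‖y‖ ^ 2) := continuous_norm.pow 2
  have hNne : ∀ x : E, x ≠ 0 → ‖x‖ ^ 2 ≠ 0 := fun x hx =>
    pow_ne_zero _ (norm_ne_zero_iff.2 hx)
  have hI1cont : Continuous I1 :=
    cont_of I1 hI1van (fun x hx =>
      (hφcd.continuous.continuousAt).div hNcont.continuousAt (hNne x hx))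
  have hDφcont : Continuous (fun x => fderiv ℝ φ x x) :=
    (hφcd.continuous_fderiv (by simp)).clm_apply continuous_id
  have hI2cont : Continuous I2 :=
    cont_of I2 hI2van (fun x hx =>
      hDφcont.continuousAt.div hNcont.continuousAt (hNne x hx))
  have hI1int : Integrable I1 μ :=
    hI1cont.integrable_of_hasCompactSupport (HasCompactSupport.intro hsupp hI1van)
  have hI2int : Integrable I2 μ :=
    hI2cont.integrable_of_hasCompactSupport (HasCompactSupport.intro hsupp hI2van)
  -- the vector field
  set b := stdOrthonormalBasis ℝ E with hb
  set G : Fin m → E → ℝ := fun i x => φ x * (innerSL ℝ (b i) x * ((‖x‖ ^ 2)⁻¹)) with hGdef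
  have hGvan : ∀ i, ∀ y ∉ tsupport f, G i y = 0 := fun i y hy => by
    simp [hGdef, hφ0 y hy]
  have hGcs : ∀ i, HasCompactSupport (G i) := fun i =>
    HasCompactSupport.intro hsupp (hGvan i)
  have hGcd : ∀ i, ContDiff ℝ 1 (G i) := by
    intro i
    rw [contDiff_iff_contDiffAt]
    intro x
    by_cases hx : x = 0
    · subst hx
      have hev : G i =ᶠ[nhds (0 : E)] (fun _ => (0 : ℝ)) := by
        filter_upwards [hUopen.mem_nhds h0] with y hy using hGvan i y hy
      exact (contDiffAt_const (c := (0 : ℝ))).congr_of_eventuallyEq hev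
    · exact ((hφcd.of_le (by simp)).contDiffAt).mul
        (((innerSL ℝ (b i)).contDiff.contDiffAt).mul
          (((contDiff_norm_sq ℝ).contDiffAt).inv (hNne x hx)))
  -- the divergence identity
  have hdiv : ∀ x, ∑ i, fderiv ℝ (G i) x (b i) = ((m : ℝ) - 2) * I1 x + I2 x := by
    intro x
    by_cases hx : x ∈ tsupport f
    · have hx0 : x ≠ 0 := fun h => h0 (h ▸ hx)
      have hNx : ‖x‖ ^ 2 ≠ 0 := hNne x hx0
      have hN : HasFDerivAt (fun y : E => ‖y‖ ^ 2) (2 • innerSL ℝ x) x :=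
        (hasStrictFDerivAt_norm_sq x).hasFDerivAt
      have hinv : HasFDerivAt (fun y : E => (‖y‖ ^ 2)⁻¹)
          ((-((‖x‖ ^ 2) ^ 2)⁻¹) • (2 • innerSL ℝ x)) x :=
        (hasDerivAt_inv hNx).comp_hasFDerivAt x hN
      have hGi : ∀ i, HasFDerivAt (G i)
          (φ x • ((innerSL ℝ (b i) x) • ((-((‖x‖ ^ 2) ^ 2)⁻¹) • (2 • innerSL ℝ x))
              + ((‖x‖ ^ 2)⁻¹) • innerSL ℝ (b i))
            + ((innerSL ℝ (b i) x) * (‖x‖ ^ 2)⁻¹) • fderiv ℝ φ x) x := by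
        intro i
        exact ((hφd x).hasFDerivAt).mul (((innerSL ℝ (b i)).hasFDerivAt).mul hinv)
      have hval : ∀ i, fderiv ℝ (G i) x (b i) =
          φ x * ((inner ℝ (b i) x : ℝ) * (-((‖x‖ ^ 2) ^ 2)⁻¹ * (2 * (inner ℝ x (b i) : ℝ)))
              + (‖x‖ ^ 2)⁻¹ * (inner ℝ (b i) (b i) : ℝ))
            + ((inner ℝ (b i) x : ℝ) * (‖x‖ ^ 2)⁻¹) * fderiv ℝ φ x (b i) := by
        intro i
        rw [(hGi i).fderiv]
        simp [ContinuousLinearMap.add_apply, ContinuousLinearMap.smul_apply,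
          innerSL_apply_apply, two_smul, smul_eq_mul]
        ring
      have S1 : ∑ i, (inner ℝ (b i) x : ℝ) * (inner ℝ x (b i) : ℝ) = ‖x‖ ^ 2 := by
        have h := b.sum_inner_mul_inner x x
        rw [← real_inner_self_eq_norm_sq, ← h]
        exact Finset.sum_congr rfl fun i _ => by ring
      have S2 : ∑ i : Fin m, (inner ℝ (b i) (b i) : ℝ) = (m : ℝ) := by
        have : ∀ i : Fin m, (inner ℝ (b i) (b i) : ℝ) = 1 := fun i => by
          rw [real_inner_self_eq_norm_sq, b.orthonormal.1 i, one_pow]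
        simp [this]
      have S3 : ∑ i, (inner ℝ (b i) x : ℝ) * fderiv ℝ φ x (b i) = fderiv ℝ φ x x := by
        have h := b.sum_repr' x
        calc ∑ i, (inner ℝ (b i) x : ℝ) * fderiv ℝ φ x (b i)
            = fderiv ℝ φ x (∑ i, (inner ℝ (b i) x : ℝ) • b i) := by
              rw [map_sum]
              exact (Finset.sum_congr rfl fun i _ => by
                rw [ContinuousLinearMap.map_smul, smul_eq_mul]).symm
          _ = fderiv ℝ φ x x := by rw [h]
      calc ∑ i, fderiv ℝ (G i) x (b i)
          = ∑ i, ((φ x * (-((‖x‖ ^ 2) ^ 2)⁻¹ * 2)) * ((inner ℝ (b i) x : ℝ) * (inner ℝ x (b i) : ℝ))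
              + (φ x * (‖x‖ ^ 2)⁻¹) * (inner ℝ (b i) (b i) : ℝ)
              + (‖x‖ ^ 2)⁻¹ * ((inner ℝ (b i) x : ℝ) * fderiv ℝ φ x (b i))) := by
            refine Finset.sum_congr rfl fun i _ => ?_
            rw [hval i]; ring
        _ = (φ x * (-((‖x‖ ^ 2) ^ 2)⁻¹ * 2)) * (∑ i, (inner ℝ (b i) x : ℝ) * (inner ℝ x (b i) : ℝ))
              + (φ x * (‖x‖ ^ 2)⁻¹) * (∑ i : Fin m, (inner ℝ (b i) (b i) : ℝ))
              + (‖x‖ ^ 2)⁻¹ * (∑ i, (inner ℝ (b i) x : ℝ) * fderiv ℝ φ x (b i)) := by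
            rw [Finset.sum_add_distrib, Finset.sum_add_distrib, ← Finset.mul_sum,
              ← Finset.mul_sum, ← Finset.mul_sum]
        _ = ((m : ℝ) - 2) * I1 x + I2 x := by
            rw [S1, S2, S3]
            simp only [hI1def, hI2def]
            field_simp
            ring
    · have hfg : ∀ i, fderiv ℝ (G i) x = 0 := fun i => hfderiv_van (G i) (hGvan i) x hx
      simp [hfg, hI1van x hx, hI2van x hx]
  -- integrate the divergence identity
  have hGint : ∀ i, Integrable (fun x => fderiv ℝ (G i) x (b i)) μ := by
    intro i
    refine Continuous.integrable_of_hasCompactSupport ?_ ?_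
    · exact (((hGcd i).continuous_fderiv one_ne_zero).clm_apply continuous_const)
    · exact HasCompactSupport.intro hsupp (fun y hy => by
        rw [hfderiv_van (G i) (hGvan i) y hy]; rfl)
  have hkey : ((m : ℝ) - 2) * (∫ x, I1 x ∂μ) + ∫ x, I2 x ∂μ = 0 := by
    have h1 : ∫ x, (((m : ℝ) - 2) * I1 x + I2 x) ∂μ = 0 := by
      have h2 : ∫ x, (((m : ℝ) - 2) * I1 x + I2 x) ∂μ
          = ∫ x, ∑ i, fderiv ℝ (G i) x (b i) ∂μ :=
        integral_congr_ae (Filter.Eventually.of_forall fun x => (hdiv x).symm)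
      rw [h2, integral_finset_sum Finset.univ (fun i _ => hGint i)]
      exact Finset.sum_eq_zero fun i _ => aux_integral_fderiv_eq_zero μ (G i) (hGcd i) (hGcs i) _
    rwa [integral_add (hI1int.const_mul _) hI2int, integral_const_mul] at h1
  -- Cauchy-Schwarz bound
  set u : E → ℝ := fun x => 2 * ‖f x‖ / ‖x‖ with hudef
  set v : E → ℝ := fun x => ‖fderiv ℝ f x‖ with hvdef
  have huvan : ∀ y ∉ tsupport f, u y = 0 := fun y hy => by
    simp [hudef, image_eq_zero_of_notMem_tsupport hy]
  have hucont : Continuous u :=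
    cont_of u huvan (fun x hx =>
      ((continuous_const.mul (continuous_norm.comp hf.continuous)).continuousAt).div
        continuous_norm.continuousAt (norm_ne_zero_iff.2 hx))
  have hucs : HasCompactSupport u := HasCompactSupport.intro hsupp huvan
  have hvcont : Continuous v := (hf.continuous_fderiv (by simp)).norm
  have hvcs : HasCompactSupport v := (hsupp.fderiv ℝ).comp_left norm_zero
  have hbound : ∀ x, -I2 x ≤ u x * v x := by
    intro x
    by_cases hx : x ∈ tsupport f
    · have hx0 : x ≠ 0 := fun h => h0 (h ▸ hx)
      have hxpos : (0 : ℝ) < ‖x‖ := norm_pos_iff.2 hx0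
      have h1 : |fderiv ℝ φ x x| ≤ 2 * (‖f x‖ * ‖fderiv ℝ f x‖) * ‖x‖ := by
        calc |fderiv ℝ φ x x| = ‖fderiv ℝ φ x x‖ := (Real.norm_eq_abs _).symm
          _ ≤ ‖fderiv ℝ φ x‖ * ‖x‖ := ContinuousLinearMap.le_opNorm _ _
          _ ≤ 2 * (‖f x‖ * ‖fderiv ℝ f x‖) * ‖x‖ :=
            mul_le_mul_of_nonneg_right (hDφ_le x) (norm_nonneg x)
      calc -I2 x ≤ |I2 x| := neg_le_abs _
        _ = |fderiv ℝ φ x x| / ‖x‖ ^ 2 := by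
            rw [hI2def]
            rw [abs_div, abs_of_nonneg (by positivity : (0 : ℝ) ≤ ‖x‖ ^ 2)]
        _ ≤ (2 * (‖f x‖ * ‖fderiv ℝ f x‖) * ‖x‖) / ‖x‖ ^ 2 := by
            apply div_le_div_of_nonneg_right h1 (by positivity)
        _ = u x * v x := by
            rw [hudef, hvdef]
            field_simp
    · have : I2 x = 0 := hI2van x hx
      rw [this, neg_zero]
      have : u x = 0 := huvan x hx
      rw [this, zero_mul]
  set A := ∫ x, ‖f x‖ ^ 2 / ‖x‖ ^ 2 ∂μ with hA
  set B := ∫ x, ‖fderiv ℝ f x‖ ^ 2 ∂μ with hB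
  have hAI1 : A = ∫ x, I1 x ∂μ := rfl
  have hAnonneg : 0 ≤ A := integral_nonneg fun x => by positivity
  have hBnonneg : 0 ≤ B := integral_nonneg fun x => by positivity
  have huvint : Integrable (fun x => u x * v x) μ :=
    (hucont.mul hvcont).integrable_of_hasCompactSupport
      (HasCompactSupport.intro hsupp (fun y hy => by show u y * v y = 0; rw [huvan y hy, zero_mul]))
  have hCS : ∫ x, u x * v x ∂μ ≤ Real.sqrt (∫ x, u x ^ 2 ∂μ) * Real.sqrt (∫ x, v x ^ 2 ∂μ) := by
    have hpq : Real.HolderConjugate 2 2 := Real.HolderConjugate.two_two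
    have h := integral_mul_le_Lp_mul_Lq_of_nonneg (μ := μ) hpq
      (Filter.Eventually.of_forall fun x => by positivity)
      (Filter.Eventually.of_forall fun x => norm_nonneg _)
      (hucont.memLp_of_hasCompactSupport hucs)
      (hvcont.memLp_of_hasCompactSupport hvcs)
    have h2 : ∀ y : ℝ, y ^ (2 : ℝ) = y ^ 2 := fun y => by
      rw [show (2 : ℝ) = ((2 : ℕ) : ℝ) by norm_num, Real.rpow_natCast]
    simp_rw [h2] at h
    rw [← Real.sqrt_eq_rpow, ← Real.sqrt_eq_rpow] at h
    exact h
  have hu2 : ∫ x, u x ^ 2 ∂μ = 4 * A := by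
    have : ∀ x, u x ^ 2 = 4 * (‖f x‖ ^ 2 / ‖x‖ ^ 2) := fun x => by
      rw [hudef]
      rw [div_pow]
      rw [mul_pow]
      ring_nf
    simp_rw [this]
    rw [integral_const_mul]
  have hsqrtu : Real.sqrt (∫ x, u x ^ 2 ∂μ) = 2 * Real.sqrt A := by
    rw [hu2, show (4 : ℝ) * A = 2 ^ 2 * A by norm_num,
      Real.sqrt_mul (by positivity) A, Real.sqrt_sq (by norm_num : (0 : ℝ) ≤ 2)]
  have hmain : ((m : ℝ) - 2) * A ≤ 2 * Real.sqrt A * Real.sqrt B := by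
    have h1 : ((m : ℝ) - 2) * A = ∫ x, -I2 x ∂μ := by
      rw [integral_neg, hAI1]
      linarith [hkey]
    rw [h1]
    calc ∫ x, -I2 x ∂μ ≤ ∫ x, u x * v x ∂μ :=
          integral_mono hI2int.neg huvint hbound
      _ ≤ Real.sqrt (∫ x, u x ^ 2 ∂μ) * Real.sqrt (∫ x, v x ^ 2 ∂μ) := hCS
      _ = 2 * Real.sqrt A * Real.sqrt B := by rw [hsqrtu, hB]
  -- conclude
  rcases eq_or_lt_of_le (Real.sqrt_nonneg A) with hA0 | hA0
  · rw [← hA0]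
    positivity
  · have h2 : ((m : ℝ) - 2) * Real.sqrt A ≤ 2 * Real.sqrt B := by
      have h3 : ((m : ℝ) - 2) * Real.sqrt A * Real.sqrt A
          ≤ 2 * Real.sqrt B * Real.sqrt A := by
        calc ((m : ℝ) - 2) * Real.sqrt A * Real.sqrt A
            = ((m : ℝ) - 2) * (Real.sqrt A * Real.sqrt A) := by ring
          _ = ((m : ℝ) - 2) * A := by rw [Real.mul_self_sqrt hAnonneg]
          _ ≤ 2 * Real.sqrt A * Real.sqrt B := hmain
          _ = 2 * Real.sqrt B * Real.sqrt A := by ring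
      exact le_of_mul_le_mul_right h3 hA0
    rw [div_mul_eq_mul_div, le_div_iff₀ hm2, mul_comm]
    linarith

theorem stmt11 {n : ℕ} (hn : 3 ≤ n) (f : EuclideanSpace ℝ (Fin n) → ℂ)
    (hf : ContDiff ℝ (⊤ : ℕ∞) f) (hsupp : HasCompactSupport f)
    (h0 : (0 : EuclideanSpace ℝ (Fin n)) ∉ tsupport f) :
    Real.sqrt (∫ x : EuclideanSpace ℝ (Fin n), ‖f x‖ ^ 2 / ‖x‖ ^ 2)
      ≤ (2 / ((n : ℝ) - 2)) *
        Real.sqrt (∫ x : EuclideanSpace ℝ (Fin n), ‖fderiv ℝ f x‖ ^ 2) := by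
  have hfin : Module.finrank ℝ (EuclideanSpace ℝ (Fin n)) = n := by
    simp [finrank_euclideanSpace]
  have h := hardy_general (volume : Measure (EuclideanSpace ℝ (Fin n)))
    (by rw [hfin]; exact hn) f hf hsupp h0
  rwa [hfin] at h
end

section
/- Let n ≥ 3, let w be a homogeneous quasi-norm on ℝⁿ, and let u ∈ C_0^∞(ℝⁿ\{0}) be complex-valued. Then the Heisenberg–Pauli–Weyl type uncertainty principle holds: (∫_{ℝⁿ} |u(x)|² dx)² ≤ (2/(n−2))² · (∫_{ℝⁿ} |R_w u(x)|² dx) · (∫_{ℝⁿ} w(x)² |u(x)|² dx). -/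
open MeasureTheory Real

set_option maxHeartbeats 1000000 in
theorem stmt12 {n : ℕ} (hn : 3 ≤ n)
    (w : EuclideanSpace ℝ (Fin n) → ℝ)
    (hw_cont : Continuous w) (hw_nonneg : ∀ x, 0 ≤ w x)
    (hw_symm : ∀ x, w (-x) = w x)
    (hw_hom : ∀ (lam : ℝ), 0 < lam → ∀ x, w (lam • x) = lam * w x)
    (hw_zero : ∀ x, w x = 0 ↔ x = 0)
    (u : EuclideanSpace ℝ (Fin n) → ℂ)
    (hu : ContDiff ℝ (⊤ : ℕ∞) u) (hsupp : HasCompactSupport u)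
    (h0 : (0 : EuclideanSpace ℝ (Fin n)) ∉ tsupport u) :
    (∫ x : EuclideanSpace ℝ (Fin n), ‖u x‖ ^ 2) ^ 2
      ≤ (2 / ((n : ℝ) - 2)) ^ 2 *
          ((∫ x : EuclideanSpace ℝ (Fin n), ‖radDerivW w u x‖ ^ 2) *
            ∫ x : EuclideanSpace ℝ (Fin n), w x ^ 2 * ‖u x‖ ^ 2) := by
  have hn3 : (3:ℝ) ≤ (n:ℝ) := by exact_mod_cast hn
  have hn2 : (0:ℝ) < (n:ℝ) - 2 := by linarith
  set R : EuclideanSpace ℝ (Fin n) → ℂ := radDerivW w u with hRdef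
  have hu1 : ContDiff ℝ 1 u := hu.of_le (by simp)
  have hudiff : Differentiable ℝ u := hu1.differentiable one_ne_zero
  have hfcont : Continuous (fderiv ℝ u) := hu.continuous_fderiv (by simp)
  -- off-support facts
  have hoff : ∀ x ∉ tsupport u, fderiv ℝ u x = 0 := by
    intro x hx
    have h1 : u =ᶠ[nhds x] (fun _ => (0:ℂ)) := by
      filter_upwards [(isClosed_tsupport u).isOpen_compl.mem_nhds hx] with y hy
      exact image_eq_zero_of_notMem_tsupport hy
    rw [h1.fderiv_eq]
    exact fderiv_const_apply 0
  have hRoff : ∀ x ∉ tsupport u, R x = 0 := by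
    intro x hx; simp [hRdef, radDerivW, hoff x hx]
  have hwne : ∀ x ∈ tsupport u, ((w x : ℝ)) ≠ 0 := by
    intro x hx h
    exact h0 (((hw_zero x).1 h) ▸ hx)
  have hRcont : Continuous R := by
    rw [continuous_iff_continuousAt]
    intro x
    by_cases hx : x ∈ tsupport u
    · exact ContinuousAt.div ((hfcont.clm_apply continuous_id).continuousAt)
        ((Complex.continuous_ofReal.comp hw_cont).continuousAt)
        (by exact_mod_cast hwne x hx)
    · apply Filter.EventuallyEq.continuousAt (y := (0:ℂ))
      filter_upwards [(isClosed_tsupport u).isOpen_compl.mem_nhds hx] with y hy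
      exact hRoff y hy
  -- the squared-norm function
  set g : EuclideanSpace ℝ (Fin n) → ℝ := fun x => ‖u x‖ ^ 2 with hgdef
  have hgsupp : HasCompactSupport g :=
    hsupp.comp_left (g := fun z : ℂ => ‖z‖ ^ 2) (by simp)
  have hgcd : ContDiff ℝ (⊤ : ℕ∞) g := hu.norm_sq ℂ
  have hgdiff : Differentiable ℝ g := (hgcd.of_le (by simp)).differentiable one_ne_zero
  have hgd : ∀ x, HasFDerivAt g
      (2 • (innerSL ℝ (u x)).comp (fderiv ℝ u x)) x :=
    fun x => (hudiff x).hasFDerivAt.norm_sq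
  have hgfd : ∀ x v, fderiv ℝ g x v
      = 2 * ((starRingEnd ℂ) (u x) * (fderiv ℝ u x v)).re := by
    intro x v
    rw [(hgd x).fderiv]
    simp [Complex.inner, two_smul]
    ring
  have hgoff : ∀ x ∉ tsupport u, fderiv ℝ g x = 0 := by
    intro x hx
    ext v
    rw [hgfd x v, hoff x hx]
    simp
  have hgfcont : Continuous fun p : EuclideanSpace ℝ (Fin n) => fderiv ℝ g p :=
    hgcd.continuous_fderiv (by simp)
  -- divergence-type identity for each coordinate
  have key : ∀ i : Fin n, ∫ x : EuclideanSpace ℝ (Fin n), g x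
      = ∫ x : EuclideanSpace ℝ (Fin n),
          -(fderiv ℝ g x (EuclideanSpace.single i (1:ℝ))) * x i := by
    intro i
    obtain ⟨Cg, hCg⟩ := hgcd.lipschitzWith_of_hasCompactSupport hgsupp (by simp)
    have H := LipschitzWith.integral_lineDeriv_mul_eq (μ := volume)
      ((EuclideanSpace.proj (𝕜 := ℝ) i).lipschitz) hCg hgsupp
      (EuclideanSpace.single i (1:ℝ))
    have h1 : ∀ x : EuclideanSpace ℝ (Fin n),
        lineDeriv ℝ (⇑(EuclideanSpace.proj (𝕜 := ℝ) i)) x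
          (EuclideanSpace.single i (1:ℝ)) = 1 := by
      intro x
      rw [((EuclideanSpace.proj (𝕜 := ℝ) i).hasFDerivAt.hasLineDerivAt _).lineDeriv]
      simp
    have h2 : ∀ x : EuclideanSpace ℝ (Fin n),
        lineDeriv ℝ g x (-(EuclideanSpace.single i (1:ℝ)))
          = -(fderiv ℝ g x (EuclideanSpace.single i (1:ℝ))) := by
      intro x
      rw [(hgdiff x).lineDeriv_eq_fderiv, map_neg]
    simp only [h1, h2, one_mul] at H
    convert H using 2
    rfl
  -- basis decomposition
  have hdecomp : ∀ x : EuclideanSpace ℝ (Fin n),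
      (∑ i : Fin n, x i • EuclideanSpace.single i (1:ℝ)) = x := by
    intro x
    have := (EuclideanSpace.basisFun (Fin n) ℝ).sum_repr x
    simpa [EuclideanSpace.basisFun_repr, EuclideanSpace.basisFun_apply] using this
  have hxrepr : ∀ x : EuclideanSpace ℝ (Fin n),
      (fderiv ℝ g x) x
        = ∑ i : Fin n, x i * fderiv ℝ g x (EuclideanSpace.single i (1:ℝ)) := by
    intro x
    calc (fderiv ℝ g x) x
        = (fderiv ℝ g x) (∑ i : Fin n, x i • EuclideanSpace.single i (1:ℝ)) := by
          rw [hdecomp]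
      _ = ∑ i : Fin n, x i * fderiv ℝ g x (EuclideanSpace.single i (1:ℝ)) := by
          rw [map_sum]
          exact Finset.sum_congr rfl fun i _ => by
            rw [ContinuousLinearMap.map_smul, smul_eq_mul]
  have hInt_i : ∀ i : Fin n, Integrable (fun x : EuclideanSpace ℝ (Fin n) =>
      -(fderiv ℝ g x (EuclideanSpace.single i (1:ℝ))) * x i) := by
    intro i
    apply Continuous.integrable_of_hasCompactSupport
    · exact ((hgfcont.clm_apply continuous_const).neg).mul
        (EuclideanSpace.proj (𝕜 := ℝ) i).continuous
    · apply HasCompactSupport.intro hsupp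
      intro x hx
      rw [hgoff x hx]
      simp
  have hsum : (n:ℝ) * ∫ x : EuclideanSpace ℝ (Fin n), g x
      = ∫ x : EuclideanSpace ℝ (Fin n), -((fderiv ℝ g x) x) := by
    have e1 : (n:ℝ) * ∫ x : EuclideanSpace ℝ (Fin n), g x
        = ∑ i : Fin n, ∫ x : EuclideanSpace ℝ (Fin n),
            -(fderiv ℝ g x (EuclideanSpace.single i (1:ℝ))) * x i := by
      rw [Finset.sum_congr rfl fun i _ => (key i).symm]
      simp [Finset.card_univ, mul_comm]
    rw [e1, ← integral_finset_sum _ (fun i _ => hInt_i i)]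
    refine integral_congr_ae (Filter.Eventually.of_forall fun x => ?_)
    show (∑ i : Fin n, -(fderiv ℝ g x (EuclideanSpace.single i (1:ℝ))) * x i)
        = -((fderiv ℝ g x) x)
    rw [hxrepr x, ← Finset.sum_neg_distrib]
    exact Finset.sum_congr rfl fun i _ => by ring
  -- pointwise identity linking fderiv g and the radial derivative
  have hptwise : ∀ x, (fderiv ℝ g x) x
      = 2 * (w x * ((starRingEnd ℂ) (u x) * R x).re) := by
    intro x
    by_cases hx : x ∈ tsupport u
    · have hw : (w x) ≠ 0 := hwne x hx
      rw [hgfd x x]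
      have hRx : R x = fderiv ℝ u x x / (w x : ℂ) := rfl
      rw [hRx]
      have h3 : ((starRingEnd ℂ) (u x) * (fderiv ℝ u x x / (w x : ℂ))).re
          = ((starRingEnd ℂ) (u x) * fderiv ℝ u x x).re / w x := by
        rw [mul_div_assoc']
        exact Complex.div_ofReal_re _ _
      rw [h3]
      field_simp
    · rw [hgoff x hx, hRoff x hx]
      simp
  -- the main inequality before Cauchy-Schwarz
  have hIneg : Integrable (fun x : EuclideanSpace ℝ (Fin n) => -((fderiv ℝ g x) x)) := by
    apply Continuous.integrable_of_hasCompactSupport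
    · exact (hgfcont.clm_apply continuous_id).neg
    · apply HasCompactSupport.intro hsupp
      intro x hx
      rw [hgoff x hx]; simp
  have hI2 : Integrable (fun x : EuclideanSpace ℝ (Fin n) =>
      2 * (w x * (‖u x‖ * ‖R x‖))) := by
    apply Continuous.integrable_of_hasCompactSupport
    · exact continuous_const.mul (hw_cont.mul ((hu.continuous.norm).mul hRcont.norm))
    · apply HasCompactSupport.intro hsupp
      intro x hx
      rw [image_eq_zero_of_notMem_tsupport hx]
      simp
  have hmono : (∫ x : EuclideanSpace ℝ (Fin n), -((fderiv ℝ g x) x))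
      ≤ ∫ x : EuclideanSpace ℝ (Fin n), 2 * (w x * (‖u x‖ * ‖R x‖)) := by
    apply integral_mono hIneg hI2
    intro x
    dsimp only
    rw [hptwise x]
    have h1 : |((starRingEnd ℂ) (u x) * R x).re| ≤ ‖u x‖ * ‖R x‖ := by
      calc |((starRingEnd ℂ) (u x) * R x).re|
          ≤ ‖(starRingEnd ℂ) (u x) * R x‖ := by
            exact Complex.abs_re_le_norm _
        _ = ‖u x‖ * ‖R x‖ := by rw [norm_mul, RCLike.norm_conj]
    have h2 := hw_nonneg x
    have h4 : -((starRingEnd ℂ) (u x) * R x).re ≤ ‖u x‖ * ‖R x‖ :=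
      (neg_le.2 (neg_abs_le _)).trans h1
    nlinarith [mul_le_mul_of_nonneg_left h4 h2]
  -- Cauchy-Schwarz
  set F : EuclideanSpace ℝ (Fin n) → ℝ := fun x => w x * ‖u x‖ with hFdef
  set G : EuclideanSpace ℝ (Fin n) → ℝ := fun x => ‖R x‖ with hGdef
  have hFc : Continuous F := hw_cont.mul hu.continuous.norm
  have hGc : Continuous G := hRcont.norm
  have hFsupp : HasCompactSupport F := by
    apply HasCompactSupport.intro hsupp
    intro x hx
    simp [hFdef, image_eq_zero_of_notMem_tsupport hx]
  have hGsupp : HasCompactSupport G := by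
    apply HasCompactSupport.intro hsupp
    intro x hx
    simp [hGdef, hRoff x hx]
  have hpq : Real.HolderConjugate 2 2 := Real.HolderConjugate.two_two
  have hCS := integral_mul_le_Lp_mul_Lq_of_nonneg (μ := volume) hpq (f := F) (g := G)
    (Filter.Eventually.of_forall fun x => mul_nonneg (hw_nonneg x) (norm_nonneg _))
    (Filter.Eventually.of_forall fun x => norm_nonneg _)
    (hFc.memLp_of_hasCompactSupport hFsupp)
    (hGc.memLp_of_hasCompactSupport hGsupp)
  have hr2 : ∀ y : ℝ, y ^ (2:ℝ) = y ^ 2 := fun y => by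
    rw [show (2:ℝ) = ((2:ℕ):ℝ) by norm_num, Real.rpow_natCast]
  simp only [hr2] at hCS
  set Cq : ℝ := ∫ x : EuclideanSpace ℝ (Fin n), F x ^ 2 with hCqdef
  set Bq : ℝ := ∫ x : EuclideanSpace ℝ (Fin n), G x ^ 2 with hBqdef
  have hCq0 : 0 ≤ Cq := integral_nonneg fun x => sq_nonneg _
  have hBq0 : 0 ≤ Bq := integral_nonneg fun x => sq_nonneg _
  have hA0 : 0 ≤ ∫ x : EuclideanSpace ℝ (Fin n), g x :=
    integral_nonneg fun x => sq_nonneg _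
  -- assemble: n * A ≤ 2 * Cq^(1/2) * Bq^(1/2)
  have hmain : (n:ℝ) * (∫ x : EuclideanSpace ℝ (Fin n), g x)
      ≤ 2 * (Cq ^ ((1:ℝ)/2) * Bq ^ ((1:ℝ)/2)) := by
    rw [hsum]
    calc (∫ x : EuclideanSpace ℝ (Fin n), -((fderiv ℝ g x) x))
        ≤ ∫ x : EuclideanSpace ℝ (Fin n), 2 * (w x * (‖u x‖ * ‖R x‖)) := hmono
      _ = 2 * ∫ x : EuclideanSpace ℝ (Fin n), F x * G x := by
          rw [MeasureTheory.integral_const_mul]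
          congr 1
          exact integral_congr_ae (Filter.Eventually.of_forall fun x => by
            simp [hFdef, hGdef, mul_assoc])
      _ ≤ 2 * (Cq ^ ((1:ℝ)/2) * Bq ^ ((1:ℝ)/2)) := by
          have := hCS
          nlinarith [hCS]
  -- square it
  have eC : (Cq ^ ((1:ℝ)/2)) ^ 2 = Cq := by
    rw [← Real.rpow_natCast (Cq ^ ((1:ℝ)/2)) 2, ← Real.rpow_mul hCq0]
    norm_num
  have eB : (Bq ^ ((1:ℝ)/2)) ^ 2 = Bq := by
    rw [← Real.rpow_natCast (Bq ^ ((1:ℝ)/2)) 2, ← Real.rpow_mul hBq0]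
    norm_num
  have hsq : ((n:ℝ) * (∫ x : EuclideanSpace ℝ (Fin n), g x)) ^ 2 ≤ 4 * (Cq * Bq) := by
    have hnn : 0 ≤ (n:ℝ) * (∫ x : EuclideanSpace ℝ (Fin n), g x) := by positivity
    have := mul_self_le_mul_self hnn hmain
    have hC' : 0 ≤ Cq ^ ((1:ℝ)/2) := Real.rpow_nonneg hCq0 _
    have hB' : 0 ≤ Bq ^ ((1:ℝ)/2) := Real.rpow_nonneg hBq0 _
    nlinarith [eC, eB]
  -- identify the integrals in the goal
  have hBq_eq : Bq = ∫ x : EuclideanSpace ℝ (Fin n), ‖R x‖ ^ 2 := rfl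
  have hCq_eq : Cq = ∫ x : EuclideanSpace ℝ (Fin n), w x ^ 2 * ‖u x‖ ^ 2 := by
    rw [hCqdef]
    exact integral_congr_ae (Filter.Eventually.of_forall fun x => by
      simp [hFdef, mul_pow])
  rw [← hCq_eq]
  -- final arithmetic
  have hexp : ((n:ℝ) - 2) ^ 2 ≤ (n:ℝ) ^ 2 := by nlinarith
  rw [div_pow, div_mul_eq_mul_div, le_div_iff₀ (pow_pos hn2 2)]
  have h5 : ((n:ℝ) - 2) ^ 2 * (∫ x : EuclideanSpace ℝ (Fin n), g x) ^ 2
      ≤ (n:ℝ) ^ 2 * (∫ x : EuclideanSpace ℝ (Fin n), g x) ^ 2 :=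
    mul_le_mul_of_nonneg_right hexp (sq_nonneg _)
  have h6 : ((n:ℝ) * (∫ x : EuclideanSpace ℝ (Fin n), g x)) ^ 2
      = (n:ℝ) ^ 2 * (∫ x : EuclideanSpace ℝ (Fin n), g x) ^ 2 := by ring
  nlinarith [hsq, h5, h6, hBq0, hCq0]
end

section
/- Let n ≥ 3 and let u ∈ C_0^∞(ℝⁿ\{0}) be complex-valued. Then the classical Heisenberg–Pauli–Weyl uncertainty principle holds: (∫_{ℝⁿ} |u(x)|² dx)² ≤ (2/(n−2))² · (∫_{ℝⁿ} |∇u(x)|² dx) · (∫_{ℝⁿ} ‖x‖² |u(x)|² dx). -/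
open MeasureTheory Real

set_option maxHeartbeats 1000000

theorem stmt13 {n : ℕ} (hn : 3 ≤ n) (u : EuclideanSpace ℝ (Fin n) → ℂ)
    (hu : ContDiff ℝ (⊤ : ℕ∞) u) (hsupp : HasCompactSupport u)
    (h0 : (0 : EuclideanSpace ℝ (Fin n)) ∉ tsupport u) :
    (∫ x : EuclideanSpace ℝ (Fin n), ‖u x‖ ^ 2) ^ 2
      ≤ (2 / ((n : ℝ) - 2)) ^ 2 *
          ((∫ x : EuclideanSpace ℝ (Fin n), ‖fderiv ℝ u x‖ ^ 2) *
            ∫ x : EuclideanSpace ℝ (Fin n), ‖x‖ ^ 2 * ‖u x‖ ^ 2) := by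
  classical
  set F : EuclideanSpace ℝ (Fin n) → ℝ := fun x => ‖u x‖ ^ 2 with hFdef
  have hudiff : Differentiable ℝ u := hu.differentiable (by simp)
  have hFc : ContDiff ℝ (⊤ : ℕ∞) F := hu.norm_sq ℂ
  have hFdiff : Differentiable ℝ F := hFc.differentiable (by simp)
  have hFsupp : HasCompactSupport F :=
    hsupp.comp_left (g := fun z : ℂ => ‖z‖ ^ 2) (by simp)
  have hFcont : Continuous F := hFc.continuous
  -- derivative of F
  have hF' : ∀ x : EuclideanSpace ℝ (Fin n), HasFDerivAt F
      ((fderivInnerCLM ℝ ((u x : ℂ), (u x : ℂ))).comp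
        ((fderiv ℝ u x).prod (fderiv ℝ u x))) x := by
    intro x
    have h1 : HasFDerivAt (fun y : EuclideanSpace ℝ (Fin n) => (inner ℝ (u y) (u y) : ℝ))
        ((fderivInnerCLM ℝ ((u x : ℂ), (u x : ℂ))).comp
          ((fderiv ℝ u x).prod (fderiv ℝ u x))) x :=
      HasFDerivAt.inner ℝ (hudiff x).hasFDerivAt (hudiff x).hasFDerivAt
    have : (fun y : EuclideanSpace ℝ (Fin n) => (inner ℝ (u y) (u y) : ℝ)) = F := by
      funext y; exact real_inner_self_eq_norm_sq (u y)
    rwa [this] at h1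
  have hF'apply : ∀ x w : EuclideanSpace ℝ (Fin n),
      fderiv ℝ F x w = inner ℝ (u x) (fderiv ℝ u x w) + inner ℝ (fderiv ℝ u x w) (u x) := by
    intro x w
    rw [(hF' x).fderiv]
    simp [fderivInnerCLM_apply]
  -- integrability helpers
  have hderivcont : Continuous (fderiv ℝ F) := hFc.continuous_fderiv (by simp)
  have hFint : Integrable F := hFcont.integrable_of_hasCompactSupport hFsupp
  have hprojcont : ∀ i : Fin n, Continuous (fun x : EuclideanSpace ℝ (Fin n) => x i) :=
    fun i => (EuclideanSpace.proj i).continuous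
  have hfg : ∀ i : Fin n,
      Integrable (fun x : EuclideanSpace ℝ (Fin n) => x i * F x) := by
    intro i
    exact Continuous.integrable_of_hasCompactSupport ((hprojcont i).mul hFcont)
      (hFsupp.mul_left)
  have hfg' : ∀ i : Fin n, Integrable (fun x : EuclideanSpace ℝ (Fin n) =>
      x i * fderiv ℝ F x (EuclideanSpace.single i 1)) := by
    intro i
    refine Continuous.integrable_of_hasCompactSupport
      ((hprojcont i).mul (hderivcont.clm_apply continuous_const)) ?_
    exact (hFsupp.fderiv_apply ℝ (EuclideanSpace.single i 1)).mul_left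
  -- derivative of the coordinate projections
  have hprojderiv : ∀ (i : Fin n) (x : EuclideanSpace ℝ (Fin n)),
      fderiv ℝ (fun y : EuclideanSpace ℝ (Fin n) => y i) x = EuclideanSpace.proj i := by
    intro i x
    have : (fun y : EuclideanSpace ℝ (Fin n) => y i) = ⇑(EuclideanSpace.proj (𝕜 := ℝ) i) := rfl
    rw [this, ContinuousLinearMap.fderiv]
  -- integration by parts in each coordinate
  have hibp : ∀ i : Fin n,
      ∫ x : EuclideanSpace ℝ (Fin n), x i * fderiv ℝ F x (EuclideanSpace.single i 1)
        = - ∫ x : EuclideanSpace ℝ (Fin n), F x := by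
    intro i
    have := integral_mul_fderiv_eq_neg_fderiv_mul_of_integrable
      (μ := (volume : Measure (EuclideanSpace ℝ (Fin n))))
      (f := fun x : EuclideanSpace ℝ (Fin n) => x i) (g := F)
      (v := EuclideanSpace.single i 1)
      (by simpa [hprojderiv] using hFint) (hfg' i) (hfg i)
      (fun x _ => ((EuclideanSpace.proj (𝕜 := ℝ) i).differentiable) x) (fun x _ => hFdiff x)
    rw [this]
    congr 1
    refine integral_congr_ae (Filter.Eventually.of_forall fun x => ?_)
    simp [hprojderiv]
  -- decomposition of x into coordinates
  have hxdecomp : ∀ x : EuclideanSpace ℝ (Fin n),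
      ∑ i : Fin n, x i • EuclideanSpace.single i (1 : ℝ) = x := by
    intro x
    ext j
    rw [WithLp.ofLp_sum, Finset.sum_apply]
    simp [EuclideanSpace.single_apply]
  have hsum : ∀ x : EuclideanSpace ℝ (Fin n),
      ∑ i : Fin n, x i * fderiv ℝ F x (EuclideanSpace.single i 1) = fderiv ℝ F x x := by
    intro x
    calc ∑ i : Fin n, x i * fderiv ℝ F x (EuclideanSpace.single i 1)
        = ∑ i : Fin n, fderiv ℝ F x (x i • EuclideanSpace.single i 1) := by
          simp [smul_eq_mul]
      _ = fderiv ℝ F x (∑ i : Fin n, x i • EuclideanSpace.single i 1) := by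
          rw [map_sum]
      _ = fderiv ℝ F x x := by rw [hxdecomp]
  have hkey : (n : ℝ) * ∫ x : EuclideanSpace ℝ (Fin n), F x
      = - ∫ x : EuclideanSpace ℝ (Fin n), fderiv ℝ F x x := by
    have h1 : ∫ x : EuclideanSpace ℝ (Fin n), fderiv ℝ F x x
        = ∑ i : Fin n, ∫ x : EuclideanSpace ℝ (Fin n),
            x i * fderiv ℝ F x (EuclideanSpace.single i 1) := by
      rw [← integral_finset_sum _ (fun i _ => hfg' i)]
      refine integral_congr_ae (Filter.Eventually.of_forall fun x => ?_)
      exact (hsum x).symm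
    rw [h1]
    simp only [hibp]
    simp [mul_comm]
  -- pointwise bound on the derivative term
  have hpt : ∀ x : EuclideanSpace ℝ (Fin n),
      - fderiv ℝ F x x ≤ 2 * ((‖x‖ * ‖u x‖) * ‖fderiv ℝ u x‖) := by
    intro x
    have h1 : |fderiv ℝ F x x| ≤ 2 * (‖u x‖ * ‖fderiv ℝ u x x‖) := by
      rw [hF'apply]
      calc |(inner ℝ (u x) (fderiv ℝ u x x) : ℝ) + inner ℝ (fderiv ℝ u x x) (u x)|
          ≤ |(inner ℝ (u x) (fderiv ℝ u x x) : ℝ)| + |(inner ℝ (fderiv ℝ u x x) (u x) : ℝ)| :=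
            abs_add_le _ _
        _ ≤ ‖u x‖ * ‖fderiv ℝ u x x‖ + ‖fderiv ℝ u x x‖ * ‖u x‖ :=
            add_le_add (abs_real_inner_le_norm _ _) (abs_real_inner_le_norm _ _)
        _ = 2 * (‖u x‖ * ‖fderiv ℝ u x x‖) := by ring
    have h2 : ‖fderiv ℝ u x x‖ ≤ ‖fderiv ℝ u x‖ * ‖x‖ :=
      ContinuousLinearMap.le_opNorm _ _
    nlinarith [neg_abs_le (fderiv ℝ F x x), norm_nonneg (u x), norm_nonneg x,
      norm_nonneg (fderiv ℝ u x), norm_nonneg (fderiv ℝ u x x)]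
  -- integrability of the two quantities
  have hu'cont : Continuous (fun x : EuclideanSpace ℝ (Fin n) => ‖fderiv ℝ u x‖) :=
    (hu.continuous_fderiv (by simp)).norm
  have hRHScont : Continuous (fun x : EuclideanSpace ℝ (Fin n) =>
      2 * ((‖x‖ * ‖u x‖) * ‖fderiv ℝ u x‖)) := by
    exact continuous_const.mul ((continuous_norm.mul hu.continuous.norm).mul hu'cont)
  have hRHSsupp : HasCompactSupport (fun x : EuclideanSpace ℝ (Fin n) =>
      2 * ((‖x‖ * ‖u x‖) * ‖fderiv ℝ u x‖)) := by
    refine hsupp.mono fun x hx => ?_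
    simp only [Function.mem_support] at hx ⊢
    intro h; apply hx; simp [h]
  have hRHSint : Integrable (fun x : EuclideanSpace ℝ (Fin n) =>
      2 * ((‖x‖ * ‖u x‖) * ‖fderiv ℝ u x‖)) :=
    hRHScont.integrable_of_hasCompactSupport hRHSsupp
  have hLHScont : Continuous (fun x : EuclideanSpace ℝ (Fin n) => - fderiv ℝ F x x) :=
    (hderivcont.clm_apply continuous_id).neg
  have hLHSsupp : HasCompactSupport (fun x : EuclideanSpace ℝ (Fin n) => - fderiv ℝ F x x) := by
    refine (hFsupp.fderiv ℝ).mono fun x hx => ?_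
    simp only [Function.mem_support] at hx ⊢
    intro h; apply hx; simp [h]
  have hLHSint : Integrable (fun x : EuclideanSpace ℝ (Fin n) => - fderiv ℝ F x x) :=
    hLHScont.integrable_of_hasCompactSupport hLHSsupp
  -- the main inequality before Cauchy-Schwarz
  have hbound : (n : ℝ) * ∫ x : EuclideanSpace ℝ (Fin n), F x
      ≤ 2 * ∫ x : EuclideanSpace ℝ (Fin n), (‖x‖ * ‖u x‖) * ‖fderiv ℝ u x‖ := by
    rw [hkey, ← integral_neg, ← integral_const_mul]
    exact integral_mono hLHSint (by simpa using hRHSint) hpt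
  -- Cauchy-Schwarz (Hölder with p = q = 2)
  have hpq : Real.HolderConjugate 2 2 := ⟨by norm_num, by norm_num, by norm_num⟩
  have hg1mem : MemLp (fun x : EuclideanSpace ℝ (Fin n) => ‖x‖ * ‖u x‖)
      (ENNReal.ofReal 2) volume := by
    refine Continuous.memLp_of_hasCompactSupport (continuous_norm.mul hu.continuous.norm) ?_
    refine hsupp.mono fun x hx => ?_
    simp only [Function.mem_support] at hx ⊢
    intro h; apply hx; simp [h]
  have hg2mem : MemLp (fun x : EuclideanSpace ℝ (Fin n) => ‖fderiv ℝ u x‖)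
      (ENNReal.ofReal 2) volume := by
    refine Continuous.memLp_of_hasCompactSupport hu'cont ?_
    refine (hsupp.fderiv ℝ).mono fun x hx => ?_
    simp only [Function.mem_support] at hx ⊢
    intro h; apply hx; simp [h]
  have hCS := integral_mul_le_Lp_mul_Lq_of_nonneg hpq
    (Filter.Eventually.of_forall fun x : EuclideanSpace ℝ (Fin n) =>
      mul_nonneg (norm_nonneg _) (norm_nonneg _))
    (Filter.Eventually.of_forall fun x : EuclideanSpace ℝ (Fin n) => norm_nonneg _)
    hg1mem hg2mem
  -- identify the integrals with the ones from the statement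
  have hid1 : (∫ x : EuclideanSpace ℝ (Fin n), (‖x‖ * ‖u x‖) ^ (2 : ℝ))
      = ∫ x : EuclideanSpace ℝ (Fin n), ‖x‖ ^ 2 * ‖u x‖ ^ 2 := by
    have h2 : ∀ y : ℝ, y ^ (2 : ℝ) = y ^ 2 := fun y => by
      rw [show (2 : ℝ) = ((2 : ℕ) : ℝ) by norm_num, Real.rpow_natCast]
    refine integral_congr_ae (Filter.Eventually.of_forall fun x => ?_)
    simp only [h2, mul_pow]
  have hid2 : (∫ x : EuclideanSpace ℝ (Fin n), ‖fderiv ℝ u x‖ ^ (2 : ℝ))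
      = ∫ x : EuclideanSpace ℝ (Fin n), ‖fderiv ℝ u x‖ ^ 2 := by
    have h2 : ∀ y : ℝ, y ^ (2 : ℝ) = y ^ 2 := fun y => by
      rw [show (2 : ℝ) = ((2 : ℕ) : ℝ) by norm_num, Real.rpow_natCast]
    refine integral_congr_ae (Filter.Eventually.of_forall fun x => ?_)
    simp only [h2]
  rw [hid1, hid2] at hCS
  -- put everything together
  set I := ∫ x : EuclideanSpace ℝ (Fin n), F x with hI
  set A := ∫ x : EuclideanSpace ℝ (Fin n), ‖fderiv ℝ u x‖ ^ 2 with hA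
  set B := ∫ x : EuclideanSpace ℝ (Fin n), ‖x‖ ^ 2 * ‖u x‖ ^ 2 with hB
  have hInonneg : 0 ≤ I :=
    integral_nonneg fun x => by positivity
  have hAnonneg : 0 ≤ A := integral_nonneg fun x => by positivity
  have hBnonneg : 0 ≤ B := integral_nonneg fun x => by positivity
  set sa := A ^ (1 / 2 : ℝ) with hsa
  set sb := B ^ (1 / 2 : ℝ) with hsb
  have hsa2 : sa ^ 2 = A := by
    rw [hsa, ← Real.rpow_natCast (A ^ (1 / 2 : ℝ)) 2, ← Real.rpow_mul hAnonneg]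
    norm_num
  have hsb2 : sb ^ 2 = B := by
    rw [hsb, ← Real.rpow_natCast (B ^ (1 / 2 : ℝ)) 2, ← Real.rpow_mul hBnonneg]
    norm_num
  have hsanonneg : 0 ≤ sa := Real.rpow_nonneg hAnonneg _
  have hsbnonneg : 0 ≤ sb := Real.rpow_nonneg hBnonneg _
  have hmain : ((n : ℝ) - 2) * I ≤ 2 * (sb * sa) := by
    have h1 : ((n : ℝ) - 2) * I ≤ (n : ℝ) * I := by nlinarith
    have h2 : (n : ℝ) * I ≤ 2 * (sb * sa) := by
      refine hbound.trans ?_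
      have := hCS
      nlinarith [this]
    linarith
  have hn2 : (0 : ℝ) < (n : ℝ) - 2 := by
    have : (3 : ℝ) ≤ (n : ℝ) := by exact_mod_cast hn
    linarith
  have hsq : (((n : ℝ) - 2) * I) ^ 2 ≤ (2 * (sb * sa)) ^ 2 := by
    have hle : 0 ≤ ((n : ℝ) - 2) * I := mul_nonneg (le_of_lt hn2) hInonneg
    exact pow_le_pow_left₀ hle hmain 2
  show I ^ 2 ≤ (2 / ((n : ℝ) - 2)) ^ 2 * (A * B)
  rw [div_pow, div_mul_eq_mul_div, le_div_iff₀ (by positivity)]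
  nlinarith [hsq, hsa2, hsb2, sq_nonneg (sb * sa)]
end

section
/- Let n ≥ 5 and let f ∈ C_0^∞(ℝⁿ\{0}) be complex-valued. Then, with Rf the Euclidean radial derivative, ∫_{ℝⁿ} |Rf(x)|²/‖x‖² dx = ((n−4)/2)² ∫_{ℝⁿ} |f(x)|²/‖x‖⁴ dx + ∫_{ℝⁿ} | Rf(x)/‖x‖ + ((n−4)/2) f(x)/‖x‖² |² dx. -/
open MeasureTheory Real
open ComplexConjugate

lemma aux_integrable {n : ℕ} {F : Type*} [NormedAddCommGroup F]
    {φ : EuclideanSpace ℝ (Fin n) → F} {K : Set (EuclideanSpace ℝ (Fin n))}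
    (hK : IsCompact K) (hKc : IsClosed K) (h0 : (0 : EuclideanSpace ℝ (Fin n)) ∉ K)
    (hzero : ∀ x ∉ K, φ x = 0)
    (hcont : ContinuousOn φ {x | x ≠ 0}) :
    Continuous φ ∧ Integrable φ volume := by
  have hφc : Continuous φ := by
    rw [continuous_iff_continuousAt]
    intro x
    by_cases hx : x = 0
    · subst hx
      have hev : (fun _ : EuclideanSpace ℝ (Fin n) => (0 : F)) =ᶠ[nhds 0] φ := by
        filter_upwards [hKc.isOpen_compl.mem_nhds h0] with y hy
        exact (hzero y hy).symm
      exact continuousAt_const.congr hev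
    · exact hcont.continuousAt (isOpen_ne.mem_nhds hx)
  have hsupp : HasCompactSupport φ := by
    have h1 : Function.support φ ⊆ K := fun x hx => by
      by_contra hxK; exact hx (hzero x hxK)
    exact IsCompact.of_isClosed_subset hK (isClosed_tsupport φ) (closure_minimal h1 hKc)
  exact ⟨hφc, hφc.integrable_of_hasCompactSupport hsupp⟩

lemma aux_div {n : ℕ} {h : EuclideanSpace ℝ (Fin n) → ℝ} (hh : ContDiff ℝ (⊤ : ℕ∞) h)
    (hc : HasCompactSupport h) (h0 : (0 : EuclideanSpace ℝ (Fin n)) ∉ tsupport h) :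
    ∫ x : EuclideanSpace ℝ (Fin n), fderiv ℝ h x x / ‖x‖ ^ 4
      = -((n : ℝ) - 4) * ∫ x : EuclideanSpace ℝ (Fin n), h x / ‖x‖ ^ 4 := by
  -- a ball around 0 where h vanishes
  obtain ⟨ε, εpos, hball⟩ : ∃ ε > 0, Metric.ball (0 : EuclideanSpace ℝ (Fin n)) ε ⊆ (tsupport h)ᶜ :=
    Metric.mem_nhds_iff.mp ((isClosed_tsupport h).isOpen_compl.mem_nhds (Set.mem_compl h0))
  have hev : ∀ x ∉ tsupport h, h =ᶠ[nhds x] 0 := by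
    intro x hx
    filter_upwards [(isClosed_tsupport h).isOpen_compl.mem_nhds hx] with y hy
    exact image_eq_zero_of_notMem_tsupport hy
  have hevball : ∀ x ∈ Metric.ball (0 : EuclideanSpace ℝ (Fin n)) ε, h =ᶠ[nhds x] 0 := fun x hx => hev x (hball hx)
  have hhd : Differentiable ℝ h := hh.differentiable (by simp)
  -- the vector field
  set N : EuclideanSpace ℝ (Fin n) → ℝ := fun y => (‖y‖ ^ 2) ^ 2 with hN
  set w : EuclideanSpace ℝ (Fin n) → ℝ := fun y => h y * (N y)⁻¹ with hwdef
  have hw_eq : ∀ y, w y = h y / ‖y‖ ^ 4 := by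
    intro y; simp only [hwdef, hN, div_eq_mul_inv, ← pow_mul]
  set e : Fin n → EuclideanSpace ℝ (Fin n) := fun i => EuclideanSpace.single i (1 : ℝ) with he
  set V : Fin n → EuclideanSpace ℝ (Fin n) → ℝ := fun i y => (innerSL ℝ (e i)) y * w y with hV
  have hNne : ∀ x : EuclideanSpace ℝ (Fin n), x ≠ 0 → N x ≠ 0 := by
    intro x hx
    have hnx : ‖x‖ ≠ 0 := norm_ne_zero_iff.mpr hx
    simp only [hN]
    positivity
  -- derivative of N
  have hNder : ∀ x : EuclideanSpace ℝ (Fin n), HasFDerivAt N ((2 * ‖x‖ ^ 2) • (2 • (innerSL ℝ x))) x := by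
    intro x
    have h1 := (hasStrictFDerivAt_norm_sq x).hasFDerivAt
    have h2 := hasDerivAt_pow 2 (‖x‖ ^ 2)
    simpa [Function.comp_def] using h2.comp_hasFDerivAt x h1
  -- derivative of w off 0
  have hwder : ∀ x : EuclideanSpace ℝ (Fin n), x ≠ 0 →
      HasFDerivAt w (h x • ((-((N x) ^ 2)⁻¹) • ((2 * ‖x‖ ^ 2) • (2 • (innerSL ℝ x))))
        + (N x)⁻¹ • fderiv ℝ h x) x := by
    intro x hx
    have hinv : HasFDerivAt (fun y => (N y)⁻¹)
        ((-((N x) ^ 2)⁻¹) • ((2 * ‖x‖ ^ 2) • (2 • (innerSL ℝ x)))) x :=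
      (hasDerivAt_inv (hNne x hx)).comp_hasFDerivAt x (hNder x)
    exact (hhd x).hasFDerivAt.mul hinv
  have hwzero : ∀ x ∉ tsupport h, w =ᶠ[nhds x] 0 := by
    intro x hx
    filter_upwards [hev x hx] with y hy
    simp [hwdef, hy]
  -- V i is smooth
  have hVsmooth : ∀ i, ContDiff ℝ (⊤ : ℕ∞) (V i) := by
    intro i
    rw [contDiff_iff_contDiffAt]
    intro x
    by_cases hx : x = 0
    · subst hx
      apply (contDiffAt_const (c := (0 : ℝ))).congr_of_eventuallyEq
      filter_upwards [hevball 0 (Metric.mem_ball_self εpos)] with y hy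
      simp [hV, hwdef, hy]
    · have hNat : ContDiffAt ℝ (⊤ : ℕ∞) N x := ((contDiff_norm_sq ℝ).pow 2).contDiffAt
      have hwat : ContDiffAt ℝ (⊤ : ℕ∞) w x := hh.contDiffAt.mul (hNat.inv (hNne x hx))
      exact ((innerSL ℝ (e i)).contDiff.contDiffAt).mul hwat
  have hVdiff : ∀ i, Differentiable ℝ (V i) := fun i => (hVsmooth i).differentiable (by simp)
  -- V i vanishes off tsupport h
  have hVzero : ∀ i, ∀ x ∉ tsupport h, V i =ᶠ[nhds x] 0 := by
    intro i x hx
    filter_upwards [hwzero x hx] with y hy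
    simp [hV, hy]
  -- integrability of V i and its directional derivative
  have hVint : ∀ i, Integrable (V i) volume :=
    fun i => (aux_integrable hc (isClosed_tsupport h) h0
      (fun x hx => (hVzero i x hx).self_of_nhds) ((hVsmooth i).continuous.continuousOn)).2
  have hZcont : ∀ i, Continuous (fun x => fderiv ℝ (V i) x (e i)) :=
    fun i => ((hVsmooth i).continuous_fderiv (by simp)).clm_apply continuous_const
  have hZzero : ∀ i, ∀ x ∉ tsupport h, fderiv ℝ (V i) x (e i) = 0 := by
    intro i x hx
    have : fderiv ℝ (V i) x = fderiv ℝ (fun _ => (0 : ℝ)) x := (hVzero i x hx).fderiv_eq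
    rw [this, fderiv_fun_const]
    simp
  have hZint : ∀ i, Integrable (fun x => fderiv ℝ (V i) x (e i)) volume :=
    fun i => (aux_integrable hc (isClosed_tsupport h) h0 (hZzero i)
      ((hZcont i).continuousOn)).2
  -- integration by parts : each directional derivative integrates to zero
  have hibp : ∀ i, ∫ x : EuclideanSpace ℝ (Fin n), fderiv ℝ (V i) x (e i) = 0 := by
    intro i
    have h1 : Integrable (fun x : EuclideanSpace ℝ (Fin n) => fderiv ℝ (fun _ => (1 : ℝ)) x (e i) * V i x) volume := by
      simp only [fderiv_fun_const]
      simpa using (integrable_zero (EuclideanSpace ℝ (Fin n)) ℝ volume)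
    have h2 : Integrable (fun x : EuclideanSpace ℝ (Fin n) => (1 : ℝ) * fderiv ℝ (V i) x (e i)) volume := by
      simpa using hZint i
    have h3 : Integrable (fun x : EuclideanSpace ℝ (Fin n) => (1 : ℝ) * V i x) volume := by simpa using hVint i
    have := integral_mul_fderiv_eq_neg_fderiv_mul_of_integrable h1 h2 h3
      (fun x _ => differentiable_const (1 : ℝ) x) (fun x _ => hVdiff i x)
    simpa [fderiv_fun_const] using this
  -- pointwise divergence identity
  have hkey : ∀ x : EuclideanSpace ℝ (Fin n), (∑ i, fderiv ℝ (V i) x (e i))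
      = ((n : ℝ) - 4) * (h x / ‖x‖ ^ 4) + fderiv ℝ h x x / ‖x‖ ^ 4 := by
    intro x
    by_cases hxb : x ∈ Metric.ball (0 : EuclideanSpace ℝ (Fin n)) ε
    · have hxt : x ∉ tsupport h := hball hxb
      have hx0 : h x = 0 := image_eq_zero_of_notMem_tsupport hxt
      have hfd0 : fderiv ℝ h x = 0 := by
        have : fderiv ℝ h x = fderiv ℝ (fun _ => (0 : ℝ)) x := (hev x hxt).fderiv_eq
        rw [this, fderiv_fun_const]; simp
      simp [hZzero _ x hxt, hx0, hfd0]
    · have hx : x ≠ 0 := by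
        intro h'; exact hxb (h' ▸ Metric.mem_ball_self εpos)
      have hrx : ‖x‖ ≠ 0 := norm_ne_zero_iff.mpr hx
      set W : EuclideanSpace ℝ (Fin n) →L[ℝ] ℝ :=
        h x • ((-((N x) ^ 2)⁻¹) • ((2 * ‖x‖ ^ 2) • (2 • (innerSL ℝ x))))
          + (N x)⁻¹ • fderiv ℝ h x with hW
      have hVifd : ∀ i, fderiv ℝ (V i) x
          = ((innerSL ℝ (e i)) x) • W + w x • (innerSL ℝ (e i)) := by
        intro i
        exact (((innerSL ℝ (e i)).hasFDerivAt).mul (hwder x hx)).fderiv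
      have hterm : ∀ i, fderiv ℝ (V i) x (e i)
          = (inner ℝ (e i) x : ℝ) * W (e i) + w x := by
        intro i
        rw [hVifd i]
        have hee : (inner ℝ (e i) (e i) : ℝ) = 1 := by
          have : ‖e i‖ = 1 := by simp [he]
          rw [real_inner_self_eq_norm_sq, this]; norm_num
        have hne : ‖e i‖ = 1 := by simp [he]
        simp [ContinuousLinearMap.add_apply, ContinuousLinearMap.smul_apply,
          innerSL_apply_apply, hee, hne, smul_eq_mul]
    
      have hsum1 : ∑ i, (inner ℝ (e i) x : ℝ) * W (e i) = W x := by
        have hrepr : ∑ i, (inner ℝ (e i) x : ℝ) • e i = x := by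
          have := (EuclideanSpace.basisFun (Fin n) ℝ).sum_repr' x
          simpa [he, EuclideanSpace.basisFun_apply] using this
        calc ∑ i, (inner ℝ (e i) x : ℝ) * W (e i)
            = ∑ i, W ((inner ℝ (e i) x : ℝ) • e i) := by
              simp [_root_.map_smul, smul_eq_mul]
          _ = W (∑ i, (inner ℝ (e i) x : ℝ) • e i) := by rw [map_sum]
          _ = W x := by rw [hrepr]
      have hWx : W x = h x * (-((N x) ^ 2)⁻¹ * ((2 * ‖x‖ ^ 2) * (2 * ‖x‖ ^ 2)))
          + (N x)⁻¹ * fderiv ℝ h x x := by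
        simp only [hW, ContinuousLinearMap.add_apply, ContinuousLinearMap.coe_smul',
          Pi.smul_apply, ContinuousLinearMap.smul_apply, smul_eq_mul, innerSL_apply_apply]
        rw [real_inner_self_eq_norm_sq]
        ring
      rw [Finset.sum_congr rfl (fun i _ => hterm i), Finset.sum_add_distrib, hsum1,
        Finset.sum_const, Finset.card_univ, Fintype.card_fin, hWx, hw_eq]
      have hNx4 : N x = ‖x‖ ^ 4 := by simp only [hN]; ring
      rw [hNx4]
      have h4 : (‖x‖ : ℝ) ^ 4 ≠ 0 := pow_ne_zero _ hrx
      simp only [nsmul_eq_mul]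
      field_simp
      ring
  -- integrability of the two pieces
  have hAint : Integrable (fun x : EuclideanSpace ℝ (Fin n) => h x / ‖x‖ ^ 4) volume := by
    refine (aux_integrable hc (isClosed_tsupport h) h0
      (fun x hx => by simp [image_eq_zero_of_notMem_tsupport hx]) ?_).2
    exact ContinuousOn.div hh.continuous.continuousOn (continuous_norm.pow 4).continuousOn
      (fun x hx => pow_ne_zero _ (norm_ne_zero_iff.mpr hx))
  have hDint : Integrable (fun x : EuclideanSpace ℝ (Fin n) => fderiv ℝ h x x / ‖x‖ ^ 4)
      volume := by
    refine (aux_integrable hc (isClosed_tsupport h) h0 (fun x hx => ?_) ?_).2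
    · have : fderiv ℝ h x = fderiv ℝ (fun _ => (0 : ℝ)) x := (hev x hx).fderiv_eq
      rw [this, fderiv_fun_const]; simp
    · exact ContinuousOn.div
        (((hh.continuous_fderiv (by simp)).clm_apply continuous_id).continuousOn)
        (continuous_norm.pow 4).continuousOn
        (fun x hx => pow_ne_zero _ (norm_ne_zero_iff.mpr hx))
  have h1 : ∫ x : EuclideanSpace ℝ (Fin n), (∑ i, fderiv ℝ (V i) x (e i)) = 0 := by
    rw [integral_finset_sum _ (fun i _ => hZint i)]
    simp [hibp]
  rw [integral_congr_ae (Filter.Eventually.of_forall hkey)] at h1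
  rw [integral_add (hAint.const_mul _) hDint, integral_const_mul] at h1
  linarith

theorem stmt14 {n : ℕ} (hn : 5 ≤ n) (f : EuclideanSpace ℝ (Fin n) → ℂ)
    (hf : ContDiff ℝ (⊤ : ℕ∞) f) (hsupp : HasCompactSupport f)
    (h0 : (0 : EuclideanSpace ℝ (Fin n)) ∉ tsupport f) :
    (∫ x : EuclideanSpace ℝ (Fin n), ‖radDeriv f x‖ ^ 2 / ‖x‖ ^ 2)
      = (((n : ℝ) - 4) / 2) ^ 2 *
          (∫ x : EuclideanSpace ℝ (Fin n), ‖f x‖ ^ 2 / ‖x‖ ^ 4)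
        + ∫ x : EuclideanSpace ℝ (Fin n),
            ‖(1 / ‖x‖) • radDeriv f x + ((((n : ℝ) - 4) / 2) / ‖x‖ ^ 2) • f x‖ ^ 2 := by
  set c : ℝ := ((n : ℝ) - 4) / 2 with hc
  set g : EuclideanSpace ℝ (Fin n) → ℝ := fun x => ‖f x‖ ^ 2 with hgdef
  have hfdiff : Differentiable ℝ f := hf.differentiable (by simp)
  have hfcont : Continuous f := hf.continuous
  have hgsmooth : ContDiff ℝ (⊤ : ℕ∞) g := hf.norm_sq (𝕜 := ℝ)
  have hgsupp : HasCompactSupport g := by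
    apply hsupp.comp_left (g := fun z : ℂ => ‖z‖ ^ 2)
    simp
  have hgts : tsupport g ⊆ tsupport f := by
    apply closure_minimal _ (isClosed_tsupport f)
    intro x hx
    apply subset_closure
    intro hfx
    apply hx
    simp [hgdef, hfx]
  have hg0 : 0 ∉ tsupport g := fun hx => h0 (hgts hx)
  have hev : ∀ x ∉ tsupport f, f =ᶠ[nhds x] 0 := by
    intro x hx
    filter_upwards [(isClosed_tsupport f).isOpen_compl.mem_nhds hx] with y hy
    exact image_eq_zero_of_notMem_tsupport hy
  -- the derivative of g along x
  have hgx : ∀ x, fderiv ℝ g x x = 2 * (fderiv ℝ f x x * conj (f x)).re := by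
    intro x
    have h1 : fderiv ℝ g x = 2 • (innerSL ℝ (f x)).comp (fderiv ℝ f x) :=
      ((hfdiff x).hasFDerivAt.norm_sq).fderiv
    rw [h1]
    have h2 : (inner ℝ (f x) (fderiv ℝ f x x) : ℝ) = (conj (f x) * fderiv ℝ f x x).re := by
      rw [Complex.inner, mul_comm]
    simp only [ContinuousLinearMap.smul_apply, ContinuousLinearMap.comp_apply, innerSL_apply_apply,
      h2, smul_eq_mul, nsmul_eq_mul]
    rw [mul_comm (conj (f x)) (fderiv ℝ f x x)]
    norm_num
  -- pointwise expansion of the square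
  have hns : ∀ w : ℂ, ‖w‖ ^ 2 = Complex.normSq w := fun w => by
    rw [Complex.sq_norm]
  have hpoint : ∀ x : EuclideanSpace ℝ (Fin n),
      ‖(1 / ‖x‖) • radDeriv f x + ((c / ‖x‖ ^ 2)) • f x‖ ^ 2
        = ‖radDeriv f x‖ ^ 2 / ‖x‖ ^ 2 + c ^ 2 * (‖f x‖ ^ 2 / ‖x‖ ^ 4)
          + c * (fderiv ℝ g x x / ‖x‖ ^ 4) := by
    intro x
    by_cases hx : x = 0
    · subst hx
      simp [radDeriv]
    · have hr : ‖x‖ ≠ 0 := norm_ne_zero_iff.mpr hx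
      have hrc : (‖x‖ : ℂ) ≠ 0 := Complex.ofReal_ne_zero.mpr hr
      have hu : (1 / ‖x‖) • radDeriv f x + ((c / ‖x‖ ^ 2)) • f x
          = ((‖x‖ : ℂ) ^ 2)⁻¹ * (fderiv ℝ f x x + (c : ℂ) * f x) := by
        rw [radDeriv, Complex.real_smul, Complex.real_smul, Complex.ofReal_div,
          Complex.ofReal_div, Complex.ofReal_one, Complex.ofReal_pow]
        field_simp
      rw [hu, hgx x, radDeriv]
      rw [hns, hns, hns]
      rw [Complex.normSq_mul, Complex.normSq_add, Complex.normSq_mul, Complex.normSq_div,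
        Complex.normSq_inv]
      simp only [map_mul, map_pow, Complex.conj_ofReal, Complex.normSq_ofReal]
      have hre : (fderiv ℝ f x x * ((c : ℂ) * conj (f x))).re
          = c * (fderiv ℝ f x x * conj (f x)).re := by
        rw [show fderiv ℝ f x x * ((c : ℂ) * conj (f x))
            = (c : ℂ) * (fderiv ℝ f x x * conj (f x)) by ring, Complex.re_ofReal_mul]
      rw [hre]
      field_simp
  -- integrability
  have hconN : Continuous fun x : EuclideanSpace ℝ (Fin n) => fderiv ℝ f x x :=
    (hf.continuous_fderiv (by simp)).clm_apply continuous_id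
  have hAint : Integrable (fun x : EuclideanSpace ℝ (Fin n) => ‖f x‖ ^ 2 / ‖x‖ ^ 4) volume := by
    refine (aux_integrable hsupp.isCompact (isClosed_tsupport f) h0 (fun x hx => by
      simp [image_eq_zero_of_notMem_tsupport hx]) ?_).2
    exact ContinuousOn.div ((hfcont.norm.pow 2).continuousOn)
      (continuous_norm.pow 4).continuousOn
      (fun x hx => pow_ne_zero _ (norm_ne_zero_iff.mpr hx))
  have hBint : Integrable
      (fun x : EuclideanSpace ℝ (Fin n) => ‖radDeriv f x‖ ^ 2 / ‖x‖ ^ 2) volume := by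
    refine (aux_integrable hsupp.isCompact (isClosed_tsupport f) h0 (fun x hx => ?_) ?_).2
    · have : fderiv ℝ f x = fderiv ℝ (fun _ => (0 : ℂ)) x := (hev x hx).fderiv_eq
      rw [radDeriv, this, fderiv_fun_const]
      simp
    · apply ContinuousOn.div _ (continuous_norm.pow 2).continuousOn
        (fun x hx => pow_ne_zero _ (norm_ne_zero_iff.mpr hx))
      apply ContinuousOn.pow
      apply ContinuousOn.norm
      exact ContinuousOn.div hconN.continuousOn
        (Complex.continuous_ofReal.comp continuous_norm).continuousOn
        (fun x hx => Complex.ofReal_ne_zero.mpr (norm_ne_zero_iff.mpr hx))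
  have hDint : Integrable
      (fun x : EuclideanSpace ℝ (Fin n) => fderiv ℝ g x x / ‖x‖ ^ 4) volume := by
    refine (aux_integrable hsupp.isCompact (isClosed_tsupport f) h0 (fun x hx => ?_) ?_).2
    · have hgev : g =ᶠ[nhds x] 0 := by
        filter_upwards [hev x hx] with y hy
        simp [hgdef, hy]
      have : fderiv ℝ g x = fderiv ℝ (fun _ => (0 : ℝ)) x := hgev.fderiv_eq
      rw [this, fderiv_fun_const]
      simp
    · exact ContinuousOn.div
        (((hgsmooth.continuous_fderiv (by simp)).clm_apply continuous_id).continuousOn)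
        (continuous_norm.pow 4).continuousOn
        (fun x hx => pow_ne_zero _ (norm_ne_zero_iff.mpr hx))
  -- the divergence identity for g
  have hdiv : (∫ x : EuclideanSpace ℝ (Fin n), fderiv ℝ g x x / ‖x‖ ^ 4)
      = -((n : ℝ) - 4) * ∫ x : EuclideanSpace ℝ (Fin n), ‖f x‖ ^ 2 / ‖x‖ ^ 4 :=
    aux_div hgsmooth hgsupp hg0
  -- split the last integral
  have hsplit : (∫ x : EuclideanSpace ℝ (Fin n),
        ‖(1 / ‖x‖) • radDeriv f x + ((c / ‖x‖ ^ 2)) • f x‖ ^ 2)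
      = (∫ x : EuclideanSpace ℝ (Fin n), ‖radDeriv f x‖ ^ 2 / ‖x‖ ^ 2)
        + (c ^ 2 * ∫ x : EuclideanSpace ℝ (Fin n), ‖f x‖ ^ 2 / ‖x‖ ^ 4)
        + (c * ∫ x : EuclideanSpace ℝ (Fin n), fderiv ℝ g x x / ‖x‖ ^ 4) := by
    have h12 : Integrable (fun x : EuclideanSpace ℝ (Fin n) =>
        ‖radDeriv f x‖ ^ 2 / ‖x‖ ^ 2 + c ^ 2 * (‖f x‖ ^ 2 / ‖x‖ ^ 4)) volume :=
      hBint.add (hAint.const_mul _)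
    have h3 : Integrable (fun x : EuclideanSpace ℝ (Fin n) =>
        c * (fderiv ℝ g x x / ‖x‖ ^ 4)) volume := hDint.const_mul _
    have h2 : Integrable (fun x : EuclideanSpace ℝ (Fin n) =>
        c ^ 2 * (‖f x‖ ^ 2 / ‖x‖ ^ 4)) volume := hAint.const_mul _
    rw [integral_congr_ae (Filter.Eventually.of_forall hpoint)]
    rw [integral_add h12 h3, integral_add hBint h2, integral_const_mul, integral_const_mul]
  rw [hsplit, hdiv]
  rw [hc]
  ring
end
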